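/- arXiv:1308.5267 — 10 statements merged into one kernel-verified Lean document; each statement's English description precedes it below -/
import Mathlib

section
/- For all real t ≥ 0 and all real p with 0 < p ≤ 3, the inequality 2^p (t^p + t) ≤ (1 + t)^(p+1) holds. -/
open Real

/-- Two-term Hölder inequality. -/
lemma holder2 {a b c d l : ℝ} (ha : 0 ≤ a) (hb : 0 ≤ b) (hc : 0 ≤ c) (hd : 0 ≤ d)
    (hl0 : 0 ≤ l) (hl1 : l ≤ 1) (hab : 0 < a + b) (hcd : 0 < c + d) :
    a ^ l * c ^ (1 - l) + b ^ l * d ^ (1 - l) ≤ (a + b) ^ l * (c + d) ^ (1 - l) := by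
  set S := a + b
  set T := c + d
  have hl' : 0 ≤ 1 - l := by linarith
  have h1 : (a / S) ^ l * (c / T) ^ (1 - l) ≤ l * (a / S) + (1 - l) * (c / T) :=
    Real.geom_mean_le_arith_mean2_weighted hl0 hl' (div_nonneg ha hab.le)
      (div_nonneg hc hcd.le) (by ring)
  have h2 : (b / S) ^ l * (d / T) ^ (1 - l) ≤ l * (b / S) + (1 - l) * (d / T) :=
    Real.geom_mean_le_arith_mean2_weighted hl0 hl' (div_nonneg hb hab.le)
      (div_nonneg hd hcd.le) (by ring)
  have hsum : (a / S) ^ l * (c / T) ^ (1 - l) + (b / S) ^ l * (d / T) ^ (1 - l) ≤ 1 := by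
    have : l * (a / S) + (1 - l) * (c / T) + (l * (b / S) + (1 - l) * (d / T)) = 1 := by
      field_simp
      ring
    linarith
  have key : a ^ l * c ^ (1 - l) + b ^ l * d ^ (1 - l)
      = S ^ l * T ^ (1 - l) * ((a / S) ^ l * (c / T) ^ (1 - l)
        + (b / S) ^ l * (d / T) ^ (1 - l)) := by
    rw [Real.div_rpow ha hab.le, Real.div_rpow hb hab.le, Real.div_rpow hc hcd.le,
      Real.div_rpow hd hcd.le]
    have hS : S ^ l ≠ 0 := (Real.rpow_pos_of_pos hab l).ne'
    have hT : T ^ (1 - l) ≠ 0 := (Real.rpow_pos_of_pos hcd (1 - l)).ne'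
    field_simp
  calc a ^ l * c ^ (1 - l) + b ^ l * d ^ (1 - l)
      = S ^ l * T ^ (1 - l) * ((a / S) ^ l * (c / T) ^ (1 - l)
        + (b / S) ^ l * (d / T) ^ (1 - l)) := key
    _ ≤ S ^ l * T ^ (1 - l) * 1 := by
        apply mul_le_mul_of_nonneg_left hsum
        positivity
    _ = S ^ l * T ^ (1 - l) := mul_one _

theorem korneychuk_inequality (t p : ℝ) (ht : 0 ≤ t) (hp0 : 0 < p) (hp3 : p ≤ 3) :
    2 ^ p * (t ^ p + t) ≤ (1 + t) ^ (p + 1) := by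
  rcases eq_or_lt_of_le ht with h0 | h0
  · -- t = 0
    rw [← h0]
    rw [Real.zero_rpow hp0.ne', add_zero, mul_zero, add_zero]
    positivity
  · -- t > 0
    set l : ℝ := p / 3 with hl
    have hl0 : 0 < l := by positivity
    have hl1 : l ≤ 1 := by rw [hl]; linarith
    have hl3 : 3 * l = p := by rw [hl]; ring
    have h1t : (0:ℝ) < 1 + t := by linarith
    have ht3 : 0 < t ^ (3:ℝ) := Real.rpow_pos_of_pos h0 3
    -- Hölder step: t^p + t ≤ (t^3 + t)^l * (1+t)^(1-l)
    have e1 : t ^ p = (t ^ (3:ℝ)) ^ l := by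
      rw [← Real.rpow_mul ht, hl3]
    have e2 : t = t ^ l * t ^ (1 - l) := by
      rw [← Real.rpow_add h0]
      norm_num
    have hHolder : t ^ p + t ≤ (t ^ (3:ℝ) + t) ^ l * (1 + t) ^ (1 - l) := by
      have h := holder2 (a := t ^ (3:ℝ)) (b := t) (c := (1:ℝ)) (d := t)
        ht3.le ht zero_le_one ht hl0.le hl1 (by positivity) h1t
      rw [Real.one_rpow, mul_one] at h
      calc t ^ p + t = (t ^ (3:ℝ)) ^ l + t ^ l * t ^ (1 - l) := by rw [e1, ← e2]
        _ ≤ (t ^ (3:ℝ) + t) ^ l * (1 + t) ^ (1 - l) := h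
    -- the cube: 8 * (t^3 + t) ≤ (1+t)^4
    have hcube : 8 * (t ^ (3:ℝ) + t) ≤ (1 + t) ^ (4:ℝ) := by
      have e3 : t ^ (3:ℝ) = t ^ (3:ℕ) := by
        rw [← Real.rpow_natCast t 3]; norm_num
      have e4 : (1 + t) ^ (4:ℝ) = (1 + t) ^ (4:ℕ) := by
        rw [← Real.rpow_natCast (1 + t) 4]; norm_num
      rw [e3, e4]
      nlinarith [sq_nonneg ((1 - t) ^ 2), sq_nonneg (1 - t)]
    have h2p : (2:ℝ) ^ p = (8:ℝ) ^ l := by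
      rw [show (8:ℝ) = 2 ^ (3:ℝ) by
            rw [show (3:ℝ) = ((3:ℕ):ℝ) by norm_num, Real.rpow_natCast]; norm_num,
        ← Real.rpow_mul (by norm_num : (0:ℝ) ≤ 2), hl3]
    calc 2 ^ p * (t ^ p + t)
        ≤ 2 ^ p * ((t ^ (3:ℝ) + t) ^ l * (1 + t) ^ (1 - l)) := by
          apply mul_le_mul_of_nonneg_left hHolder
          positivity
      _ = (8 * (t ^ (3:ℝ) + t)) ^ l * (1 + t) ^ (1 - l) := by
          rw [Real.mul_rpow (by norm_num) (by positivity), h2p, mul_assoc]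
      _ ≤ ((1 + t) ^ (4:ℝ)) ^ l * (1 + t) ^ (1 - l) := by
          apply mul_le_mul_of_nonneg_right _ (by positivity)
          exact Real.rpow_le_rpow (by positivity) hcube hl0.le
      _ = (1 + t) ^ (p + 1) := by
          rw [← Real.rpow_mul h1t.le, ← Real.rpow_add h1t]
          congr 1
          linarith
end

section
/- Let a < b be real numbers, m = 1/(b-a), p ∈ [1,3], and define α(t) = m(b-t)(t-a)^p + m(t-a)(b-t)^p for t ∈ [a,b]. Then α(t) ≤ ((b-a)/2)^p for all t ∈ [a,b]. -/
open Set Real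

/-- Two-point concave Jensen for `rpow` with exponent in `(0,1]`. -/
lemma jensen2_concave (w₁ w₂ z₁ z₂ q : ℝ) (hw₁ : 0 ≤ w₁) (hw₂ : 0 ≤ w₂)
    (hw : w₁ + w₂ = 1) (hz₁ : 0 ≤ z₁) (hz₂ : 0 ≤ z₂) (hq0 : 0 < q) (hq1 : q ≤ 1) :
    w₁ * z₁ ^ q + w₂ * z₂ ^ q ≤ (w₁ * z₁ + w₂ * z₂) ^ q := by
  have hp : (1 : ℝ) ≤ 1 / q := by
    rw [le_div_iff₀ hq0]; linarith
  have h := Real.arith_mean_le_rpow_mean (Finset.univ : Finset (Fin 2))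
    ![w₁, w₂] ![z₁ ^ q, z₂ ^ q]
    (by intro i _; fin_cases i <;> simpa) (by simp [Fin.sum_univ_two, hw])
    (by intro i _; fin_cases i <;> simp [Real.rpow_nonneg, hz₁, hz₂]) hp
  simp only [Fin.sum_univ_two, Matrix.cons_val_zero, Matrix.cons_val_one, Matrix.head_cons] at h
  have hz₁' : (z₁ ^ q) ^ (1 / q) = z₁ := by
    rw [← Real.rpow_mul hz₁, mul_one_div_cancel hq0.ne', Real.rpow_one]
  have hz₂' : (z₂ ^ q) ^ (1 / q) = z₂ := by
    rw [← Real.rpow_mul hz₂, mul_one_div_cancel hq0.ne', Real.rpow_one]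
  rw [hz₁', hz₂', one_div_one_div] at h
  exact h

lemma aux_s (s : ℝ) : s * (1 - 2*s) ≤ 1/8 := by nlinarith [sq_nonneg (4*s - 1)]

lemma key_bound (x p : ℝ) (hx0 : 0 ≤ x) (hx1 : x ≤ 1) (hp1 : 1 ≤ p) (hp3 : p ≤ 3) :
    (1 - x) * x ^ p + x * (1 - x) ^ p ≤ (1 / 2 : ℝ) ^ p := by
  have hp0 : (0 : ℝ) < p := by linarith
  have hrpos : (0 : ℝ) ≤ (1 / 2 : ℝ) ^ p := Real.rpow_nonneg (by norm_num) p
  rcases eq_or_lt_of_le hx0 with h0 | h0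
  · rw [← h0, Real.zero_rpow hp0.ne']
    simpa using hrpos
  rcases eq_or_lt_of_le hx1 with h1 | h1
  · rw [h1]
    simpa [Real.zero_rpow hp0.ne'] using hrpos
  set y := 1 - x with hy
  have hy0 : 0 < y := by simp [hy]; linarith
  have hxy4 : x * y ≤ 1 / 4 := by nlinarith [sq_nonneg (2 * x - 1), hy]
  have hxp : x ^ p = x ^ (p - 1) * x := by
    rw [← Real.rpow_add_one h0.ne' (p - 1)]
    norm_num
  have hyp : y ^ p = y ^ (p - 1) * y := by
    rw [← Real.rpow_add_one hy0.ne' (p - 1)]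
    norm_num
  set q := p - 1 with hq
  have hsplit : y * x ^ p + x * y ^ p = x * y * (x ^ q + y ^ q) := by
    rw [hxp, hyp]; ring
  rw [hsplit]
  rcases eq_or_lt_of_le hp1 with hp1' | hp1'
  · -- p = 1
    have : q = 0 := by simp [hq, ← hp1']
    rw [this, Real.rpow_zero, Real.rpow_zero, ← hp1', Real.rpow_one]
    nlinarith
  have hq0 : 0 < q := by simp [hq]; linarith
  have half : (1 / 2 : ℝ) ^ p = (1 / 2 : ℝ) ^ q * (1 / 2 : ℝ) := by
    rw [← Real.rpow_add_one (by norm_num : (1/2:ℝ) ≠ 0) q]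
    congr 1
    rw [hq]; ring
  by_cases hq1 : q ≤ 1
  · -- 1 < p ≤ 2
    have hj := jensen2_concave (1/2) (1/2) x y q (by norm_num) (by norm_num)
      (by norm_num) hx0 hy0.le hq0 hq1
    have hsum : x ^ q + y ^ q ≤ 2 * (1 / 2 : ℝ) ^ q := by
      have : (1/2) * x + (1/2) * y = 1/2 := by rw [hy]; ring
      rw [this] at hj
      linarith
    have hqnn : (0:ℝ) ≤ (1/2:ℝ) ^ q := Real.rpow_nonneg (by norm_num) q
    have hxyq : 0 ≤ x ^ q + y ^ q := by positivity
    calc x * y * (x ^ q + y ^ q) ≤ (1/4) * (2 * (1/2:ℝ) ^ q) := by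
          apply mul_le_mul hxy4 hsum hxyq (by norm_num)
      _ = (1/2:ℝ) ^ q * (1/2) := by ring
      _ = (1/2:ℝ) ^ p := half.symm
  · -- 2 < p ≤ 3
    push_neg at hq1
    set r := q - 1 with hr
    have hr0 : 0 < r := by simp [hr]; linarith
    have hr1 : r ≤ 1 := by simp [hr, hq]; linarith
    have hxq : x ^ q = x * x ^ r := by
      rw [mul_comm, ← Real.rpow_add_one h0.ne' r]
      congr 1
      rw [hr]; ring
    have hyq : y ^ q = y * y ^ r := by
      rw [mul_comm, ← Real.rpow_add_one hy0.ne' r]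
      congr 1
      rw [hr]; ring
    have hj := jensen2_concave x y x y r hx0 hy0.le (by rw [hy]; ring) hx0 hy0.le hr0 hr1
    rw [← hxq, ← hyq] at hj
    -- x ^ q + y ^ q ≤ (x*x + y*y) ^ r
    set s := x * y with hs
    have hs0 : 0 < s := mul_pos h0 hy0
    have hsq : x * x + y * y = 1 - 2 * s := by rw [hy, hs]; ring
    rw [hsq] at hj
    have hc0 : (0:ℝ) < 1 - 2 * s := by nlinarith
    -- (2*(1-2s))^r ≤ 2*(1-2s)
    have h2c : (2 * (1 - 2*s)) ^ r ≤ 2 * (1 - 2*s) := by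
      have hb : (1:ℝ) ≤ 2 * (1 - 2*s) := by nlinarith
      calc (2 * (1 - 2*s)) ^ r ≤ (2 * (1 - 2*s)) ^ (1:ℝ) :=
            Real.rpow_le_rpow_of_exponent_le hb hr1
        _ = 2 * (1 - 2*s) := Real.rpow_one _
    have hmul : (2 * (1 - 2*s)) ^ r = 2 ^ r * (1 - 2*s) ^ r :=
      Real.mul_rpow (by norm_num) hc0.le
    have h2r : (2:ℝ) ^ r * (1/2:ℝ) ^ r = 1 := by
      rw [← Real.mul_rpow (by norm_num) (by norm_num)]
      norm_num
    have h2rpos : (0:ℝ) < (2:ℝ) ^ r := Real.rpow_pos_of_pos (by norm_num) r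
    have hhalfr : (0:ℝ) < (1/2:ℝ) ^ r := Real.rpow_pos_of_pos (by norm_num) r
    -- (1-2s)^r ≤ 2*(1-2s) * (1/2)^r
    have hcr : (1 - 2*s) ^ r ≤ 2 * (1 - 2*s) * (1/2:ℝ) ^ r := by
      have h := mul_le_mul_of_nonneg_right h2c hhalfr.le
      rw [hmul] at h
      have hkey : (1 - 2*s) ^ r = 2 ^ r * (1 - 2*s) ^ r * (1/2:ℝ) ^ r := by
        calc (1 - 2*s) ^ r = ((2:ℝ) ^ r * (1/2:ℝ) ^ r) * (1 - 2*s) ^ r := by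
              rw [h2r, one_mul]
          _ = 2 ^ r * (1 - 2*s) ^ r * (1/2:ℝ) ^ r := by ring
      rw [hkey]
      exact h
    have hsc : s * (1 - 2*s) ≤ 1 / 8 := aux_s s
    have halfq : (1/2:ℝ) ^ q = (1/2:ℝ) ^ r * (1/2:ℝ) := by
      rw [← Real.rpow_add_one (by norm_num : (1/2:ℝ) ≠ 0) r]
      congr 1
      rw [hr]; ring
    have hxyqr : x ^ q + y ^ q ≤ 2 * (1 - 2*s) * (1/2:ℝ) ^ r := le_trans hj hcr
    calc x * y * (x ^ q + y ^ q) ≤ s * (2 * (1 - 2*s) * (1/2:ℝ) ^ r) := by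
          rw [← hs]
          apply mul_le_mul_of_nonneg_left hxyqr hs0.le
      _ = (s * (1 - 2*s)) * (2 * (1/2:ℝ) ^ r) := by ring
      _ ≤ (1/8) * (2 * (1/2:ℝ) ^ r) := by
          apply mul_le_mul_of_nonneg_right hsc (by positivity)
      _ = (1/2:ℝ) ^ r * (1/2) * (1/2) := by ring
      _ = (1/2:ℝ) ^ p := by rw [half, halfq]

theorem alpha_bound (a b : ℝ) (hab : a < b) (m : ℝ) (hm : m = 1 / (b - a))
    (p : ℝ) (hp1 : 1 ≤ p) (hp3 : p ≤ 3) :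
    ∀ t ∈ Icc a b,
      m * (b - t) * (t - a) ^ p + m * (t - a) * (b - t) ^ p ≤ ((b - a) / 2) ^ p := by
  intro t ht
  obtain ⟨ht1, ht2⟩ := ht
  have hb : (0:ℝ) < b - a := by linarith
  set x := (t - a) / (b - a) with hx
  have hx0 : 0 ≤ x := div_nonneg (by linarith) hb.le
  have hx1 : x ≤ 1 := (div_le_one hb).mpr (by linarith)
  have hta : t - a = x * (b - a) := by rw [hx, div_mul_cancel₀ _ hb.ne']
  have hbt : b - t = (1 - x) * (b - a) := by rw [hx, sub_mul, one_mul, div_mul_cancel₀ _ hb.ne']; ring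
  have hmbt : m * (b - t) = 1 - x := by
    rw [hm, hbt]; field_simp
  have hmta : m * (t - a) = x := by
    rw [hm, hta]; field_simp
  have htap : (t - a) ^ p = x ^ p * (b - a) ^ p := by
    rw [hta, Real.mul_rpow hx0 hb.le]
  have hbtp : (b - t) ^ p = (1 - x) ^ p * (b - a) ^ p := by
    rw [hbt, Real.mul_rpow (by linarith) hb.le]
  have hrhs : ((b - a) / 2) ^ p = (1/2:ℝ) ^ p * (b - a) ^ p := by
    rw [div_eq_mul_one_div (b - a) 2, Real.mul_rpow hb.le (by norm_num)]
    ring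
  rw [htap, hbtp, hrhs]
  have key := key_bound x p hx0 hx1 hp1 hp3
  have hbp : (0:ℝ) ≤ (b - a) ^ p := Real.rpow_nonneg hb.le p
  calc m * (b - t) * (x ^ p * (b - a) ^ p) + m * (t - a) * ((1 - x) ^ p * (b - a) ^ p)
      = ((1 - x) * x ^ p + x * (1 - x) ^ p) * (b - a) ^ p := by
        rw [hmbt, hmta]; ring
    _ ≤ (1/2:ℝ) ^ p * (b - a) ^ p := mul_le_mul_of_nonneg_right key hbp
end

section
/- Let f : [0,1] → ℝ be continuous, let m ≥ 2 be a natural number, and let S be the piecewise linear function interpolating f at the nodes j/m, j = 0,...,m. If Ω : [0,1] → ℝ is a concave, nondecreasing, subadditive, continuous function with Ω(0) = 0 and the modulus of continuity of f satisfies ω(f;τ) ≤ Ω(τ) for all τ ∈ [0,1], then |f(x) − S(x)| ≤ Ω(1/(2m)) for all x ∈ [0,1]. -/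
open Set

theorem univariate_spline_error (f S Ω : ℝ → ℝ) (m : ℕ) (hm : 2 ≤ m)
    (hf : ContinuousOn f (Icc 0 1))
    -- Ω is a concave MC-type function on [0,1]
    (hΩconc : ConcaveOn ℝ (Icc 0 1) Ω)
    (hΩ0 : Ω 0 = 0)
    (hΩmono : ∀ σ ∈ Icc (0:ℝ) 1, ∀ τ ∈ Icc (0:ℝ) 1, σ ≤ τ → Ω σ ≤ Ω τ)
    (hΩsub : ∀ σ ∈ Icc (0:ℝ) 1, ∀ τ ∈ Icc (0:ℝ) 1, σ + τ ∈ Icc (0:ℝ) 1 →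
      Ω (σ + τ) ≤ Ω σ + Ω τ)
    (hΩcont : ContinuousOn Ω (Icc 0 1))
    -- the modulus of continuity of f is bounded by Ω
    (hmod : ∀ τ ∈ Icc (0:ℝ) 1, ∀ x ∈ Icc (0:ℝ) 1, ∀ y ∈ Icc (0:ℝ) 1,
      |x - y| ≤ τ → |f x - f y| ≤ Ω τ)
    -- S is the piecewise linear interpolant of f at the nodes j/m
    (hS : ∀ j : ℕ, j < m → ∀ x ∈ Icc ((j : ℝ) / m) ((j + 1 : ℝ) / m),
      S x = m * ((j + 1 : ℝ) / m - x) * f ((j : ℝ) / m)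
          + m * (x - (j : ℝ) / m) * f ((j + 1 : ℝ) / m)) :
    ∀ x ∈ Icc (0:ℝ) 1, |f x - S x| ≤ Ω (1 / (2 * m)) := by
  intro x hx
  obtain ⟨hx0, hx1⟩ := hx
  have hm1 : (1:ℝ) ≤ m := by exact_mod_cast Nat.one_le_of_lt hm
  have hmpos : (0:ℝ) < m := by linarith
  obtain ⟨j, hjm, hjle, hjx⟩ : ∃ j : ℕ, j < m ∧ (j:ℝ)/m ≤ x ∧ x ≤ ((j:ℝ)+1)/m := by
    refine ⟨min ⌊x * m⌋₊ (m - 1), lt_of_le_of_lt (min_le_right _ _) (by omega), ?_, ?_⟩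
    · rw [div_le_iff₀ hmpos]
      calc ((min ⌊x*m⌋₊ (m-1) : ℕ) : ℝ) ≤ (⌊x*m⌋₊ : ℝ) := by exact_mod_cast min_le_left _ _
        _ ≤ x*m := Nat.floor_le (by positivity)
    · rw [le_div_iff₀ hmpos]
      rcases le_or_gt ⌊x*m⌋₊ (m-1) with h | h
      · rw [min_eq_left h]
        have := Nat.lt_floor_add_one (x*m)
        linarith
      · rw [min_eq_right h.le]
        have h1 : ((m-1:ℕ):ℝ) = (m:ℝ) - 1 := by
          have : 1 ≤ m := by omega
          push_cast [Nat.cast_sub this]; ring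
        rw [h1]
        nlinarith
  have hxmem : x ∈ Icc ((j:ℝ)/m) (((j:ℝ)+1)/m) := ⟨hjle, hjx⟩
  have hSx := hS j hjm x hxmem
  obtain ⟨a, b, hadef, hbdef⟩ : ∃ a b : ℝ, a = x - (j:ℝ)/m ∧ b = ((j:ℝ)+1)/m - x :=
    ⟨_, _, rfl, rfl⟩
  rw [← hadef, ← hbdef] at hSx
  have ha0 : 0 ≤ a := by rw [hadef]; linarith
  have hb0 : 0 ≤ b := by rw [hbdef]; linarith
  have hab : a + b = 1/m := by
    rw [hadef, hbdef]; field_simp; ring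
  have hmab : (m:ℝ) * (a + b) = 1 := by rw [hab]; field_simp
  have hinvm : 1/(m:ℝ) ≤ 1 := by
    rw [div_le_one hmpos]; linarith
  have haI : a ∈ Icc (0:ℝ) 1 := ⟨ha0, by linarith⟩
  have hbI : b ∈ Icc (0:ℝ) 1 := ⟨hb0, by linarith⟩
  have hjI : (j:ℝ)/m ∈ Icc (0:ℝ) 1 := ⟨by positivity, by
    rw [div_le_one hmpos]; exact_mod_cast (Nat.le_of_lt hjm)⟩
  have hj1I : ((j:ℝ)+1)/m ∈ Icc (0:ℝ) 1 := ⟨by positivity, by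
    rw [div_le_one hmpos]; exact_mod_cast hjm⟩
  have hfa : |f x - f ((j:ℝ)/m)| ≤ Ω a :=
    hmod a haI x ⟨hx0, hx1⟩ ((j:ℝ)/m) hjI (by
      rw [hadef]; exact le_of_eq (abs_of_nonneg (by linarith)))
  have hfb : |f x - f (((j:ℝ)+1)/m)| ≤ Ω b :=
    hmod b hbI x ⟨hx0, hx1⟩ (((j:ℝ)+1)/m) hj1I (by
      rw [abs_sub_comm, hbdef]; exact le_of_eq (abs_of_nonneg (by linarith)))
  have hw1 : 0 ≤ (m:ℝ) * b := by positivity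
  have hw2 : 0 ≤ (m:ℝ) * a := by positivity
  have hwsum : (m:ℝ) * b + (m:ℝ) * a = 1 := by linarith [hmab]
  have key : f x - S x = (m:ℝ)*b*(f x - f ((j:ℝ)/m)) + (m:ℝ)*a*(f x - f (((j:ℝ)+1)/m)) := by
    rw [hSx]
    have h1 : (m:ℝ)*b + (m:ℝ)*a = 1 := by
      rw [hadef, hbdef]; field_simp; ring
    linear_combination (-(f x)) * h1
  have hconc := hΩconc.2 haI hbI hw1 hw2 hwsum
  simp only [smul_eq_mul] at hconc
  have heq : (m:ℝ)*b*a + (m:ℝ)*a*b = 2*((m:ℝ)*a*b) := by ring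
  rw [heq] at hconc
  have hle2 : 2*((m:ℝ)*a*b) ≤ 1/(2*(m:ℝ)) := by
    rw [le_div_iff₀ (by positivity)]
    nlinarith [sq_nonneg ((m:ℝ)*a - (m:ℝ)*b), hmab]
  have h2m : 1/(2*(m:ℝ)) ∈ Icc (0:ℝ) 1 := ⟨by positivity, by
    rw [div_le_one (by positivity)]; linarith⟩
  have hargI : 2*((m:ℝ)*a*b) ∈ Icc (0:ℝ) 1 := ⟨by positivity, le_trans hle2 (by linarith [h2m.2])⟩
  have hmono := hΩmono _ hargI _ h2m hle2
  calc |f x - S x| = |(m:ℝ)*b*(f x - f ((j:ℝ)/m)) + (m:ℝ)*a*(f x - f (((j:ℝ)+1)/m))| := by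
        rw [key]
    _ ≤ (m:ℝ)*b*|f x - f ((j:ℝ)/m)| + (m:ℝ)*a*|f x - f (((j:ℝ)+1)/m)| := by
        calc |(m:ℝ)*b*(f x - f ((j:ℝ)/m)) + (m:ℝ)*a*(f x - f (((j:ℝ)+1)/m))|
            ≤ |(m:ℝ)*b*(f x - f ((j:ℝ)/m))| + |(m:ℝ)*a*(f x - f (((j:ℝ)+1)/m))| := abs_add_le _ _
          _ = (m:ℝ)*b*|f x - f ((j:ℝ)/m)| + (m:ℝ)*a*|f x - f (((j:ℝ)+1)/m)| := by
              rw [abs_mul ((m:ℝ)*b) _, abs_mul ((m:ℝ)*a) _, abs_of_nonneg hw1, abs_of_nonneg hw2]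
    _ ≤ (m:ℝ)*b*Ω a + (m:ℝ)*a*Ω b := by
        gcongr
    _ ≤ Ω (2*((m:ℝ)*a*b)) := hconc
    _ ≤ Ω (1/(2*(m:ℝ))) := hmono
end

section
/- Let Ω : [0,1] → ℝ be a concave, nondecreasing, subadditive, continuous function with Ω(0) = 0, and m ≥ 2 a natural number. Define f₀ on [0,1] by f₀(x) = Ω(min{x − j/m, (j+1)/m − x}) for x ∈ [j/m,(j+1)/m]. Then f₀ is well-defined and continuous, its modulus of continuity satisfies ω(f₀;τ) ≤ Ω(τ) for all τ ∈ [0,1], f₀ vanishes at every node j/m, and ‖f₀‖_∞ = Ω(1/(2m)). -/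
open Set

lemma saw_eq (t : ℝ) (j : ℤ) (h1 : (j:ℝ) ≤ t) (h2 : t ≤ (j:ℝ) + 1) :
    min (t - j) ((j:ℝ) + 1 - t) = |t - round t| := by
  rcases lt_or_ge t ((j:ℝ) + 1/2) with h | h
  · have hr : round t = j := by
      rw [round_eq, Int.floor_eq_iff]
      constructor <;> push_cast <;> linarith
    rw [hr, abs_of_nonneg (by linarith), min_eq_left (by linarith)]
  · have hr : round t = j + 1 := by
      rw [round_eq, Int.floor_eq_iff]
      constructor <;> push_cast <;> linarith
    rw [hr]
    push_cast
    rw [abs_of_nonpos (by linarith), min_eq_right (by linarith)]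
    ring

lemma round_min (s : ℝ) (k : ℤ) : |s - (round s : ℝ)| ≤ |s - k| := by
  rcases eq_or_ne k (round s) with rfl | h
  · exact le_refl _
  · have h1 : (1:ℝ) ≤ |(k:ℝ) - round s| := by
      have hne : k - round s ≠ 0 := sub_ne_zero.mpr h
      have := Int.one_le_abs hne
      calc (1:ℝ) ≤ |((k - round s : ℤ) : ℝ)| := by exact_mod_cast this
        _ = |(k:ℝ) - round s| := by push_cast; ring_nf
    have h2 : |s - (round s : ℝ)| ≤ 1/2 := abs_sub_round s
    have h3 : |(k:ℝ) - round s| - |s - (round s:ℝ)| ≤ |(k:ℝ) - round s - (s - round s)| :=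
      abs_sub_abs_le_abs_sub _ _
    have h4 : |(k:ℝ) - round s - (s - round s)| = |s - k| := by
      rw [show (k:ℝ) - round s - (s - round s) = -(s - k) by ring, abs_neg]
    linarith

lemma saw_lip (s t : ℝ) : |s - (round s : ℝ)| - |t - (round t : ℝ)| ≤ |s - t| := by
  have h1 : |s - (round s:ℝ)| ≤ |s - (round t : ℤ)| := round_min s (round t)
  have h2 : |s - (round t:ℝ)| ≤ |s - t| + |t - round t| := by
    calc |s - (round t:ℝ)| = |(s - t) + (t - round t)| := by ring_nf
      _ ≤ |s - t| + |t - round t| := abs_add_le _ _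
  linarith

theorem univariate_extremal_function (Ω f₀ : ℝ → ℝ) (m : ℕ) (hm : 2 ≤ m)
    -- Ω is a concave MC-type function on [0,1]
    (hΩconc : ConcaveOn ℝ (Icc 0 1) Ω)
    (hΩ0 : Ω 0 = 0)
    (hΩmono : ∀ σ ∈ Icc (0:ℝ) 1, ∀ τ ∈ Icc (0:ℝ) 1, σ ≤ τ → Ω σ ≤ Ω τ)
    (hΩsub : ∀ σ ∈ Icc (0:ℝ) 1, ∀ τ ∈ Icc (0:ℝ) 1, σ + τ ∈ Icc (0:ℝ) 1 →
      Ω (σ + τ) ≤ Ω σ + Ω τ)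
    (hΩcont : ContinuousOn Ω (Icc 0 1))
    -- f₀ is defined by the piecewise formula (in particular it is well defined)
    (hf₀ : ∀ j : ℕ, j < m → ∀ x ∈ Icc ((j : ℝ) / m) ((j + 1 : ℝ) / m),
      f₀ x = Ω (min (x - (j : ℝ) / m) ((j + 1 : ℝ) / m - x))) :
    -- f₀ is continuous
    ContinuousOn f₀ (Icc 0 1) ∧
    -- the modulus of continuity of f₀ is bounded by Ω
    (∀ τ ∈ Icc (0:ℝ) 1, ∀ x ∈ Icc (0:ℝ) 1, ∀ y ∈ Icc (0:ℝ) 1,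
      |x - y| ≤ τ → |f₀ x - f₀ y| ≤ Ω τ) ∧
    -- f₀ vanishes at every node
    (∀ j : ℕ, j ≤ m → f₀ ((j : ℝ) / m) = 0) ∧
    -- the uniform norm of f₀ equals Ω(1/(2m))
    IsGreatest {y : ℝ | ∃ x ∈ Icc (0:ℝ) 1, |f₀ x| = y} (Ω (1 / (2 * m))) := by
  have hm0 : 0 < m := lt_of_lt_of_le (by norm_num) hm
  have hM0 : (0:ℝ) < (m:ℝ) := by exact_mod_cast hm0
  have hM2 : (2:ℝ) ≤ (m:ℝ) := by exact_mod_cast hm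
  set d : ℝ → ℝ := fun x => |(m:ℝ)*x - round ((m:ℝ)*x)| / m with hd_def
  have hd0 : ∀ x, 0 ≤ d x := fun x => div_nonneg (abs_nonneg _) hM0.le
  have hdhalf : ∀ x, d x ≤ 1/(2*(m:ℝ)) := by
    intro x
    have h := abs_sub_round ((m:ℝ)*x)
    have e : (1:ℝ)/(2*m) = (1/2)/m := by ring
    rw [hd_def, e]
    show |(m:ℝ)*x - round ((m:ℝ)*x)| / m ≤ (1/2)/(m:ℝ)
    exact div_le_div_of_nonneg_right h hM0.le
  have h2m1 : 1/(2*(m:ℝ)) ≤ 1 := by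
    rw [div_le_one (by positivity)]; linarith
  have hdmem : ∀ x, d x ∈ Icc (0:ℝ) 1 := fun x => ⟨hd0 x, (hdhalf x).trans h2m1⟩
  have hdlip : ∀ x y, |d x - d y| ≤ |x - y| := by
    have key : ∀ a b : ℝ, d a - d b ≤ |a - b| := by
      intro a b
      have h1 := saw_lip ((m:ℝ)*a) ((m:ℝ)*b)
      have h2 : |(m:ℝ)*a - (m:ℝ)*b| = (m:ℝ) * |a - b| := by
        rw [← mul_sub, abs_mul, abs_of_nonneg hM0.le]
      rw [h2] at h1
      rw [hd_def]
      simp only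
      rw [div_sub_div_same, div_le_iff₀ hM0]
      linarith
    intro x y
    rw [abs_sub_le_iff]
    exact ⟨key x y, by rw [abs_sub_comm]; exact key y x⟩
  have hΩnn : ∀ s ∈ Icc (0:ℝ) 1, 0 ≤ Ω s := fun s hs =>
    hΩ0 ▸ hΩmono 0 ⟨le_refl 0, zero_le_one⟩ s hs hs.1
  have hfd : ∀ x ∈ Icc (0:ℝ) 1, f₀ x = Ω (d x) := by
    intro x hx
    obtain ⟨j, hjm, hxl, hxr⟩ : ∃ j : ℕ, j < m ∧ ((j:ℝ))/m ≤ x ∧ x ≤ ((j:ℝ)+1)/m := by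
      rcases eq_or_lt_of_le hx.2 with h1 | h1
      · refine ⟨m-1, Nat.sub_lt hm0 one_pos, ?_, ?_⟩
        · rw [h1, div_le_one hM0]
          push_cast [Nat.cast_sub (by omega : 1 ≤ m)]
          linarith
        · rw [h1, le_div_iff₀ hM0]
          push_cast [Nat.cast_sub (by omega : 1 ≤ m)]
          linarith
      · have hmx0 : 0 ≤ (m:ℝ)*x := mul_nonneg hM0.le hx.1
        have hfl0 : 0 ≤ ⌊(m:ℝ)*x⌋ := Int.floor_nonneg.mpr hmx0
        have hcast : ((⌊(m:ℝ)*x⌋.toNat : ℕ) : ℝ) = (⌊(m:ℝ)*x⌋ : ℝ) := by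
          exact_mod_cast Int.toNat_of_nonneg hfl0
        have hmxm : (m:ℝ)*x < m := by nlinarith
        have hflm : ⌊(m:ℝ)*x⌋ < (m:ℤ) := Int.floor_lt.mpr (by push_cast; linarith)
        refine ⟨⌊(m:ℝ)*x⌋.toNat, by omega, ?_, ?_⟩
        · rw [div_le_iff₀ hM0, hcast, mul_comm]
          exact Int.floor_le _
        · rw [le_div_iff₀ hM0, hcast, mul_comm]
          linarith [Int.lt_floor_add_one ((m:ℝ)*x)]
    rw [hf₀ j hjm x ⟨hxl, hxr⟩]
    congr 1
    have hj1 : (((j:ℤ)):ℝ) ≤ (m:ℝ)*x := by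
      rw [div_le_iff₀ hM0] at hxl; push_cast; linarith
    have hj2 : (m:ℝ)*x ≤ (((j:ℤ)):ℝ) + 1 := by
      rw [le_div_iff₀ hM0] at hxr; push_cast; linarith
    have hsaw := saw_eq ((m:ℝ)*x) (j:ℤ) hj1 hj2
    rw [hd_def]
    simp only
    rw [← hsaw]
    have e1 : x - (j:ℝ)/m = ((m:ℝ)*x - ((j:ℤ):ℝ))/m := by push_cast; field_simp
    have e2 : ((j:ℝ)+1)/m - x = ((((j:ℤ)):ℝ) + 1 - (m:ℝ)*x)/m := by push_cast; field_simp
    rw [e1, e2, min_div_div_right hM0.le]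
  refine ⟨?_, ?_, ?_, ?_⟩
  · -- continuity
    have hdc : Continuous d := by
      have : LipschitzWith 1 d := by
        apply LipschitzWith.of_dist_le_mul
        intro a b
        rw [Real.dist_eq, Real.dist_eq]
        simpa using hdlip a b
      exact this.continuous
    exact (hΩcont.comp hdc.continuousOn (fun x _ => hdmem x)).congr hfd
  · -- modulus of continuity
    intro τ hτ x hx y hy hxy
    rw [hfd x hx, hfd y hy]
    have key : ∀ a b : ℝ, a ∈ Icc (0:ℝ) 1 → b ∈ Icc (0:ℝ) 1 → b ≤ a → a - b ≤ τ →
        Ω a - Ω b ≤ Ω τ := by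
      intro a b ha hb hba habτ
      have hab : a - b ∈ Icc (0:ℝ) 1 := ⟨by linarith, by linarith [hτ.2]⟩
      have h1 : Ω a ≤ Ω b + Ω (a - b) := by
        have := hΩsub b hb (a - b) hab (by rw [show b + (a-b) = a by ring]; exact ha)
        rw [show b + (a-b) = a by ring] at this
        exact this
      have h2 : Ω (a-b) ≤ Ω τ := hΩmono _ hab _ hτ habτ
      linarith
    have hΩτ : 0 ≤ Ω τ := hΩnn τ hτ
    rcases le_total (d y) (d x) with h | h
    · have hk := key (d x) (d y) (hdmem x) (hdmem y) h
        (le_trans (le_trans (le_abs_self _) (hdlip x y)) hxy)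
      have hge : Ω (d y) ≤ Ω (d x) := hΩmono _ (hdmem y) _ (hdmem x) h
      rw [abs_of_nonneg (by linarith)]
      exact hk
    · have hk := key (d y) (d x) (hdmem y) (hdmem x) h
        (by rw [abs_sub_comm] at hxy
            exact le_trans (le_trans (le_abs_self _) (hdlip y x)) hxy)
      have hge : Ω (d x) ≤ Ω (d y) := hΩmono _ (hdmem x) _ (hdmem y) h
      rw [abs_of_nonpos (by linarith)]
      linarith
  · -- nodes
    intro j hj
    rcases hj.lt_or_eq with hjm | heq
    · have hmem : (j:ℝ)/m ∈ Icc ((j:ℝ)/m) (((j:ℝ)+1)/m) :=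
        ⟨le_refl _, div_le_div_of_nonneg_right (by linarith) hM0.le⟩
      rw [hf₀ j hjm _ hmem, sub_self,
        min_eq_left (by rw [sub_nonneg]; exact hmem.2), hΩ0]
    · rw [heq]
      have hm1 : m - 1 < m := Nat.sub_lt hm0 one_pos
      have hc : ((m-1:ℕ):ℝ) = (m:ℝ) - 1 := by
        push_cast [Nat.cast_sub (by omega : 1 ≤ m)]; ring
      have hmem : (m:ℝ)/m ∈ Icc (((m-1:ℕ):ℝ)/m) ((((m-1:ℕ):ℝ)+1)/m) := by
        rw [hc]
        constructor
        · exact div_le_div_of_nonneg_right (by linarith) hM0.le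
        · exact div_le_div_of_nonneg_right (by linarith) hM0.le
      rw [hf₀ (m-1) hm1 _ hmem, hc]
      have e0 : ((m:ℝ) - 1 + 1)/m - (m:ℝ)/m = 0 := by ring
      have e1 : 0 ≤ (m:ℝ)/m - ((m:ℝ)-1)/m := by
        rw [sub_nonneg]
        exact div_le_div_of_nonneg_right (by linarith) hM0.le
      rw [e0, min_eq_right e1, hΩ0]
  · refine ⟨?_, ?_⟩
    · refine ⟨1/(2*(m:ℝ)), ⟨by positivity, h2m1⟩, ?_⟩
      have hmem : (1:ℝ)/(2*m) ∈ Icc (((0:ℕ):ℝ)/m) ((((0:ℕ):ℝ)+1)/m) := by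
        constructor
        · simp only [Nat.cast_zero, zero_div]
          positivity
        · simp only [Nat.cast_zero, zero_add]
          rw [div_le_div_iff₀ (by positivity) hM0]
          linarith
      rw [hf₀ 0 hm0 _ hmem]
      have e : min ((1:ℝ)/(2*m) - ((0:ℕ):ℝ)/m) ((((0:ℕ):ℝ)+1)/m - 1/(2*m)) = 1/(2*m) := by
        push_cast
        rw [show ((0:ℝ)+1)/m - 1/(2*m) = 1/(2*m) by field_simp; ring,
          zero_div, sub_zero, min_self]
      rw [e, abs_of_nonneg (hΩnn _ ⟨by positivity, h2m1⟩)]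
    · rintro y ⟨x, hx, rfl⟩
      rw [hfd x hx, abs_of_nonneg (hΩnn _ (hdmem x))]
      exact hΩmono _ (hdmem x) _ ⟨by positivity, h2m1⟩ (hdhalf x)
end

section
/- Let f : [0,1] → ℝ be continuous, m ≥ 2, and let S be the piecewise linear interpolant of f at nodes j/m. Then the error bound sup over the class {f : ω(f;τ) ≤ Ω(τ)} of ‖f − S‖_∞ equals exactly Ω(1/(2m)), where Ω is any concave, nondecreasing, subadditive, continuous function with Ω(0)=0. -/
open Set

set_option maxHeartbeats 1000000 in
theorem univariate_class_error (Ω : ℝ → ℝ) (m : ℕ) (hm : 2 ≤ m)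
    (hΩconc : ConcaveOn ℝ (Icc 0 1) Ω)
    (hΩ0 : Ω 0 = 0)
    (hΩmono : ∀ σ ∈ Icc (0:ℝ) 1, ∀ τ ∈ Icc (0:ℝ) 1, σ ≤ τ → Ω σ ≤ Ω τ)
    (hΩsub : ∀ σ ∈ Icc (0:ℝ) 1, ∀ τ ∈ Icc (0:ℝ) 1, σ + τ ∈ Icc (0:ℝ) 1 →
      Ω (σ + τ) ≤ Ω σ + Ω τ)
    (hΩcont : ContinuousOn Ω (Icc 0 1)) :
    IsLUB {e : ℝ | ∃ f S : ℝ → ℝ, ∃ x ∈ Icc (0:ℝ) 1,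
      ContinuousOn f (Icc 0 1) ∧
      -- f belongs to the class C(Ω)
      (∀ τ ∈ Icc (0:ℝ) 1, ∀ y ∈ Icc (0:ℝ) 1, ∀ z ∈ Icc (0:ℝ) 1,
        |y - z| ≤ τ → |f y - f z| ≤ Ω τ) ∧
      -- S is the piecewise linear interpolant of f at the nodes j/m
      (∀ j : ℕ, j < m → ∀ y ∈ Icc ((j : ℝ) / m) ((j + 1 : ℝ) / m),
        S y = m * ((j + 1 : ℝ) / m - y) * f ((j : ℝ) / m)
            + m * (y - (j : ℝ) / m) * f ((j + 1 : ℝ) / m)) ∧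
      e = |f x - S x|}
      (Ω (1 / (2 * m))) := by
  have hm0 : (0:ℝ) < m := by
    have : (2:ℝ) ≤ m := by exact_mod_cast hm
    linarith
  have hmne : (m:ℝ) ≠ 0 := ne_of_gt hm0
  have hm2 : (2:ℝ) ≤ m := by exact_mod_cast hm
  have hhalf_pos : (0:ℝ) < 1 / (2 * m) := by positivity
  have hhalf_le : (1:ℝ) / (2 * m) ≤ 1 := by
    rw [div_le_one (by positivity)]
    have : (2:ℝ) ≤ m := by exact_mod_cast hm
    linarith
  have hhalf_mem : (1:ℝ) / (2 * m) ∈ Icc (0:ℝ) 1 := ⟨le_of_lt hhalf_pos, hhalf_le⟩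
  have hΩnonneg : ∀ τ ∈ Icc (0:ℝ) 1, 0 ≤ Ω τ := by
    intro τ hτ
    have := hΩmono 0 ⟨le_refl _, zero_le_one⟩ τ hτ hτ.1
    linarith [this, hΩ0.ge]
  constructor
  · -- upper bound
    rintro e ⟨f, S, x, hx, hfcont, hmod, hS, rfl⟩
    -- find the interval containing x
    set n := ⌊(m:ℝ) * x⌋₊ with hn
    set j := min n (m - 1) with hj
    have hjm : j < m := by
      have : m - 1 < m := Nat.sub_lt (by omega) one_pos
      omega
    have hjx : (j:ℝ) / m ≤ x := by
      rw [div_le_iff₀ hm0]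
      have h1 : (j:ℝ) ≤ n := by exact_mod_cast min_le_left n (m-1)
      have h2 : (n:ℝ) ≤ (m:ℝ) * x := Nat.floor_le (mul_nonneg hm0.le hx.1)
      rw [mul_comm]
      linarith
    have hxj : x ≤ ((j:ℝ) + 1) / m := by
      rw [le_div_iff₀ hm0]
      rcases le_or_gt n (m - 1) with h | h
      · have hje : j = n := by omega
        have := Nat.lt_floor_add_one ((m:ℝ) * x)
        rw [hje]
        push_cast
        nlinarith
      · have hje : j = m - 1 := by omega
        have : ((j:ℝ) + 1) = m := by
          rw [hje]; push_cast [Nat.cast_sub (by omega : 1 ≤ m)]; ring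
        rw [this]
        nlinarith [hx.2]
    have hSx := hS j hjm x ⟨hjx, hxj⟩
    set a : ℝ := (m:ℝ) * (((j:ℝ) + 1) / m - x) with ha
    set b : ℝ := (m:ℝ) * (x - (j:ℝ) / m) with hb
    have hab : a + b = 1 := by rw [ha, hb]; field_simp; ring
    have ha0 : 0 ≤ a := by
      have : ((j:ℝ)+1)/m - x ≥ 0 := by linarith
      positivity
    have hb0 : 0 ≤ b := by
      have : x - (j:ℝ)/m ≥ 0 := by linarith
      positivity
    have hbm : b / m = x - (j:ℝ)/m := by rw [hb]; field_simp
    have ham : a / m = ((j:ℝ)+1)/m - x := by rw [ha]; field_simp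
    clear_value n j a b
    have hnode1 : (j:ℝ)/m ∈ Icc (0:ℝ) 1 := by
      constructor
      · positivity
      · rw [div_le_one hm0]; exact_mod_cast hjm.le
    have hnode2 : ((j:ℝ)+1)/m ∈ Icc (0:ℝ) 1 := by
      constructor
      · positivity
      · rw [div_le_one hm0]
        have : (j:ℝ) + 1 ≤ m := by exact_mod_cast hjm
        exact this
    have hbm_mem : b / m ∈ Icc (0:ℝ) 1 := by
      constructor
      · positivity
      · rw [hbm]
        have h1m : (1:ℝ)/m ≤ 1 := by rw [div_le_one hm0]; linarith
        have heq : ((j:ℝ)+1)/m - (j:ℝ)/m = 1/m := by field_simp; ring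
        linarith [hxj]
    have ham_mem : a / m ∈ Icc (0:ℝ) 1 := by
      constructor
      · positivity
      · rw [ham]
        have h1m : (1:ℝ)/m ≤ 1 := by rw [div_le_one hm0]; linarith
        have : ((j:ℝ)+1)/m - x ≤ 1/m := by
          have : ((j:ℝ)+1)/m - (j:ℝ)/m = 1/m := by field_simp; ring
          linarith [hjx]
        linarith
    have h1 : |f x - f ((j:ℝ)/m)| ≤ Ω (b/m) := by
      apply hmod (b/m) hbm_mem x hx ((j:ℝ)/m) hnode1
      rw [hbm, abs_of_nonneg (by linarith)]
    have h2 : |f x - f (((j:ℝ)+1)/m)| ≤ Ω (a/m) := by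
      apply hmod (a/m) ham_mem x hx (((j:ℝ)+1)/m) hnode2
      rw [ham, abs_of_nonpos (by linarith), neg_sub]
    have hdecomp : f x - S x = a * (f x - f ((j:ℝ)/m)) + b * (f x - f (((j:ℝ)+1)/m)) := by
      rw [hSx, ha, hb]
      field_simp
      ring
    have hconc := hΩconc.2 hbm_mem ham_mem ha0 hb0 hab
    simp only [smul_eq_mul] at hconc
    have habm : a * (b/m) + b * (a/m) ∈ Icc (0:ℝ) 1 := by
      constructor
      · positivity
      · have := hbm_mem.2; have := ham_mem.2
        nlinarith
    have hab4 : 4 * (a * b) ≤ 1 := by nlinarith [sq_nonneg (a - b)]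
    have habeq : a * (b/m) + b * (a/m) = (2 * (a * b)) / m := by ring
    have hle : a * (b/m) + b * (a/m) ≤ 1 / (2 * m) := by
      rw [habeq, div_le_div_iff₀ hm0 (by positivity)]
      linarith [mul_le_mul_of_nonneg_right hab4 hm0.le]
    have hmono := hΩmono _ habm _ hhalf_mem hle
    calc |f x - S x| ≤ a * |f x - f ((j:ℝ)/m)| + b * |f x - f (((j:ℝ)+1)/m)| := by
          rw [hdecomp]
          refine (abs_add_le _ _).trans ?_
          rw [abs_mul a, abs_mul b, abs_of_nonneg ha0, abs_of_nonneg hb0]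
      _ ≤ a * Ω (b/m) + b * Ω (a/m) := by
          have := mul_le_mul_of_nonneg_left h1 ha0
          have := mul_le_mul_of_nonneg_left h2 hb0
          linarith
      _ ≤ Ω (a * (b/m) + b * (a/m)) := hconc
      _ ≤ Ω (1 / (2*m)) := hmono
  · -- least upper bound: the value is attained
    intro c hc
    apply hc
    set N : Set ℝ := (fun j : ℕ => (j:ℝ)/m) '' (Set.Iic m) with hN
    have h0N : (0:ℝ) ∈ N := ⟨0, by simp, by simp⟩
    have hNne : N.Nonempty := ⟨0, h0N⟩
    set g : ℝ → ℝ := fun x => Metric.infDist x N with hg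
    have hg_nonneg : ∀ x, 0 ≤ g x := fun x => Metric.infDist_nonneg
    have hg_mem : ∀ x ∈ Icc (0:ℝ) 1, g x ∈ Icc (0:ℝ) 1 := by
      intro x hx
      refine ⟨hg_nonneg x, ?_⟩
      have := Metric.infDist_le_dist_of_mem (x := x) h0N
      rw [Real.dist_eq, sub_zero, abs_of_nonneg hx.1] at this
      exact this.trans hx.2
    have hg_lip : ∀ y z : ℝ, g y - g z ≤ |y - z| := by
      intro y z
      have := Metric.infDist_le_infDist_add_dist (x := y) (y := z) (s := N)
      rw [Real.dist_eq] at this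
      linarith
    have hg_node : ∀ j : ℕ, j ≤ m → g ((j:ℝ)/m) = 0 := by
      intro j hj
      exact Metric.infDist_zero_of_mem ⟨j, hj, rfl⟩
    -- key subadditivity bound
    have hkey : ∀ u v τ : ℝ, u ∈ Icc (0:ℝ) 1 → v ∈ Icc (0:ℝ) 1 → τ ∈ Icc (0:ℝ) 1 →
        u - v ≤ τ → Ω u - Ω v ≤ Ω τ := by
      intro u v τ hu hv hτ huv
      rcases le_or_gt u v with h | h
      · have h1 := hΩmono u hu v hv h
        have h2 := hΩnonneg τ hτ
        linarith
      · have huvmem : u - v ∈ Icc (0:ℝ) 1 := ⟨by linarith, by linarith [hv.1, hu.2]⟩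
        have hsub := hΩsub (u - v) huvmem v hv (by rw [sub_add_cancel]; exact hu)
        rw [sub_add_cancel] at hsub
        have := hΩmono (u - v) huvmem τ hτ huv
        linarith
    refine ⟨fun x => Ω (g x), fun _ => 0, 1/(2*m), hhalf_mem, ?_, ?_, ?_, ?_⟩
    · -- continuity
      exact hΩcont.comp ((Metric.continuous_infDist_pt N).continuousOn) hg_mem
    · -- modulus condition
      intro τ hτ y hy z hz hyz
      rw [abs_sub_le_iff]
      constructor
      · exact hkey (g y) (g z) τ (hg_mem y hy) (hg_mem z hz) hτ
          ((hg_lip y z).trans hyz)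
      · refine hkey (g z) (g y) τ (hg_mem z hz) (hg_mem y hy) hτ ?_
        have := hg_lip z y
        rw [abs_sub_comm] at this
        exact this.trans hyz
    · -- interpolant is identically 0
      intro j hj y hy
      have e1 : g ((j:ℝ)/m) = 0 := hg_node j hj.le
      have e2 : g (((j:ℝ)+1)/m) = 0 := by
        have := hg_node (j+1) hj
        push_cast at this
        exact this
      simp only [e1, e2, hΩ0, mul_zero, add_zero]
    · -- value at the midpoint
      have hgv : g (1/(2*m)) = 1/(2*m) := by
        apply le_antisymm
        · have := Metric.infDist_le_dist_of_mem (x := 1/(2*(m:ℝ))) h0N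
          rwa [Real.dist_eq, sub_zero, abs_of_pos hhalf_pos] at this
        · have hall : ∀ y ∈ N, 1/(2*(m:ℝ)) ≤ dist (1/(2*(m:ℝ))) y := by
            rintro y ⟨j, hj, rfl⟩
            rw [Real.dist_eq]
            rcases Nat.eq_zero_or_pos j with h | h
            · subst h
              simp only [Nat.cast_zero, zero_div, sub_zero]
              exact le_abs_self _
            · have h1 : (1:ℝ) ≤ j := by exact_mod_cast h
              have hjpos : (1:ℝ)/m ≤ (j:ℝ)/m := by gcongr
              have hone : 1/(2*(m:ℝ)) * 2 = 1/(m:ℝ) := by field_simp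
              rw [abs_sub_comm, abs_of_nonneg (by linarith)]
              linarith
          refine le_of_not_gt fun hlt => ?_
          obtain ⟨y, hyN, hdy⟩ := (Metric.infDist_lt_iff hNne).mp hlt
          exact absurd hdy (not_lt.mpr (hall y hyN))
      show Ω (1/(2*(m:ℝ))) = |Ω (g (1/(2*(m:ℝ)))) - 0|
      rw [hgv, sub_zero, abs_of_nonneg (hΩnonneg _ hhalf_mem)]
end

section
/- Let n ≥ 1, let Ω : [0,1]^n → ℝ be a function of modulus-of-continuity type (Ω(0)=0, nondecreasing in each variable, subadditive, continuous) that is concave in each variable separately. Let m = (m₁,...,mₙ) with each mᵢ ≥ 2, and let f : [0,1]^n → ℝ be continuous with total modulus of continuity ω(f;τ) ≤ Ω(τ) for all τ ∈ [0,1]^n. Let S be the multilinear spline interpolating f at the grid points (j₁/m₁,...,jₙ/mₙ). Then for all x ∈ [0,1]^n, |f(x) − S(x)| ≤ Ω(1/(2m₁),...,1/(2mₙ)). -/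
open Set

/-- The linear interpolation basis (hat) functions on the interval `[j/m, (j+1)/m]`:
`hat m j false x = m ((j+1)/m − x)` and `hat m j true x = 1 − hat m j false x`. -/
noncomputable def hat (m j : ℕ) (l : Bool) (x : ℝ) : ℝ :=
  if l then 1 - m * ((j + 1 : ℝ) / m - x) else m * ((j + 1 : ℝ) / m - x)

private lemma sum_prod_w {n : ℕ} (w : Fin n → Bool → ℝ)
    (hw1 : ∀ i, w i false + w i true = 1) :
    ∑ l : Fin n → Bool, ∏ k, w k (l k) = 1 := by
  classical
  rw [← Fintype.prod_sum]
  rw [Finset.prod_eq_one]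
  intro k _
  rw [Fintype.sum_bool, add_comm]
  exact hw1 k

private lemma spline_step {n : ℕ} (Ω : (Fin n → ℝ) → ℝ)
    (hΩconc : ∀ τ : Fin n → ℝ, (∀ i, τ i ∈ Icc (0:ℝ) 1) → ∀ i : Fin n,
      ConcaveOn ℝ (Icc 0 1) (fun t => Ω (Function.update τ i t)))
    (w v : Fin n → Bool → ℝ)
    (hw0 : ∀ i b, 0 ≤ w i b) (hw1 : ∀ i, w i false + w i true = 1)
    (hv : ∀ i b, v i b ∈ Icc (0:ℝ) 1)
    (c : Fin n → ℝ) (hc : ∀ i, c i = w i false * v i false + w i true * v i true)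
    (s : Finset (Fin n)) (i : Fin n) (hi : i ∉ s) :
    ∑ l : Fin n → Bool, (∏ k, w k (l k)) * Ω (fun k => if k ∈ s then c k else v k (l k))
      ≤ ∑ l : Fin n → Bool, (∏ k, w k (l k)) *
          Ω (fun k => if k ∈ insert i s then c k else v k (l k)) := by
  classical
  have hc01 : ∀ k, c k ∈ Icc (0:ℝ) 1 := by
    intro k
    constructor
    · rw [hc k]
      have := (hv k false).1; have := (hv k true).1
      have := hw0 k false; have := hw0 k true
      positivity
    · rw [hc k]
      calc w k false * v k false + w k true * v k true
          ≤ w k false * 1 + w k true * 1 := by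
            gcongr
            exacts [hw0 k false, (hv k false).2, hw0 k true, (hv k true).2]
        _ = 1 := by rw [mul_one, mul_one, hw1 k]
  set e := Equiv.piSplitAt i (fun _ : Fin n => Bool) with he
  rw [← Equiv.sum_comp e.symm
    (fun l => (∏ k, w k (l k)) * Ω (fun k => if k ∈ s then c k else v k (l k))),
    ← Equiv.sum_comp e.symm
    (fun l => (∏ k, w k (l k)) * Ω (fun k => if k ∈ insert i s then c k else v k (l k)))]
  rw [Fintype.sum_prod_type_right, Fintype.sum_prod_type_right]
  apply Finset.sum_le_sum
  intro r _
  have hsymm_i : ∀ b : Bool, e.symm (b, r) i = b := by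
    intro b
    exact congrArg Prod.fst (e.apply_symm_apply (b, r))
  have hsymm_ne : ∀ (b : Bool) (k : Fin n) (h : k ≠ i), e.symm (b, r) k = r ⟨k, h⟩ := by
    intro b k h
    simp [he, Equiv.piSplitAt, h]
  set ν : Fin n → ℝ := fun k => if k ∈ s then c k else v k (e.symm (false, r) k) with hν_def
  have hν : ∀ k, ν k ∈ Icc (0:ℝ) 1 := by
    intro k
    by_cases hk : k ∈ s <;> simp only [hν_def, hk, if_true, if_false]
    · exact hc01 k
    · exact hv k _
  have fact1 : ∀ b : Bool, (fun k => if k ∈ s then c k else v k (e.symm (b, r) k))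
      = Function.update ν i (v i b) := by
    intro b
    funext k
    rcases eq_or_ne k i with hk | hk
    · subst hk
      rw [if_neg hi, Function.update_self, hsymm_i]
    · rw [Function.update_of_ne hk]
      by_cases hks : k ∈ s
      · simp only [hν_def, hks, if_true]
      · simp only [hν_def, hks, if_false, hsymm_ne b k hk, hsymm_ne false k hk]
  have fact2 : ∀ b : Bool, (fun k => if k ∈ insert i s then c k else v k (e.symm (b, r) k))
      = Function.update ν i (c i) := by
    intro b
    funext k
    rcases eq_or_ne k i with hk | hk
    · subst hk
      rw [if_pos (Finset.mem_insert_self _ _), Function.update_self]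
    · rw [Function.update_of_ne hk]
      have hiff : k ∈ insert i s ↔ k ∈ s := by
        simp [Finset.mem_insert, hk]
      by_cases hks : k ∈ s
      · rw [if_pos (hiff.mpr hks)]
        simp only [hν_def, hks, if_true]
      · rw [if_neg (fun hmem => hks (hiff.mp hmem))]
        simp only [hν_def, hks, if_false, hsymm_ne b k hk, hsymm_ne false k hk]
  set W : ℝ := ∏ k ∈ Finset.univ.erase i, w k (e.symm (false, r) k) with hW_def
  have hWnn : 0 ≤ W := Finset.prod_nonneg fun k _ => hw0 k _
  have fact3 : ∀ b : Bool, (∏ k, w k (e.symm (b, r) k)) = w i b * W := by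
    intro b
    rw [← Finset.mul_prod_erase Finset.univ _ (Finset.mem_univ i), hsymm_i]
    congr 1
    apply Finset.prod_congr rfl
    intro k hk
    have hk' : k ≠ i := Finset.ne_of_mem_erase hk
    rw [hsymm_ne b k hk', hsymm_ne false k hk']
  have hcc := (hΩconc ν hν i).2 (hv i false) (hv i true) (hw0 i false) (hw0 i true) (hw1 i)
  simp only [smul_eq_mul] at hcc
  rw [← hc i] at hcc
  rw [Fintype.sum_bool, Fintype.sum_bool]
  rw [fact1 true, fact1 false, fact2 true, fact2 false, fact3 true, fact3 false]
  have hfac : w i true * W * Ω (Function.update ν i (c i))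
      + w i false * W * Ω (Function.update ν i (c i))
      = W * Ω (Function.update ν i (c i)) := by
    calc w i true * W * Ω (Function.update ν i (c i))
          + w i false * W * Ω (Function.update ν i (c i))
        = (w i false + w i true) * (W * Ω (Function.update ν i (c i))) := by ring
      _ = W * Ω (Function.update ν i (c i)) := by rw [hw1 i, one_mul]
  rw [hfac]
  calc w i true * W * Ω (Function.update ν i (v i true))
        + w i false * W * Ω (Function.update ν i (v i false))
      = W * (w i false * Ω (Function.update ν i (v i false))
          + w i true * Ω (Function.update ν i (v i true))) := by ring
    _ ≤ W * Ω (Function.update ν i (c i)) := mul_le_mul_of_nonneg_left hcc hWnn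

private lemma spline_avg {n : ℕ} (Ω : (Fin n → ℝ) → ℝ)
    (hΩconc : ∀ τ : Fin n → ℝ, (∀ i, τ i ∈ Icc (0:ℝ) 1) → ∀ i : Fin n,
      ConcaveOn ℝ (Icc 0 1) (fun t => Ω (Function.update τ i t)))
    (w v : Fin n → Bool → ℝ)
    (hw0 : ∀ i b, 0 ≤ w i b) (hw1 : ∀ i, w i false + w i true = 1)
    (hv : ∀ i b, v i b ∈ Icc (0:ℝ) 1)
    (c : Fin n → ℝ) (hc : ∀ i, c i = w i false * v i false + w i true * v i true) :
    ∑ l : Fin n → Bool, (∏ k, w k (l k)) * Ω (fun k => v k (l k)) ≤ Ω c := by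
  classical
  have key : ∀ t : Finset (Fin n),
      ∑ l : Fin n → Bool, (∏ k, w k (l k)) * Ω (fun k => if k ∈ tᶜ then c k else v k (l k))
        ≤ Ω c := by
    intro t
    induction t using Finset.induction_on with
    | empty =>
        simp only [Finset.compl_empty, Finset.mem_univ, if_true]
        rw [← Finset.sum_mul, sum_prod_w w hw1, one_mul]
    | @insert a t ha ih =>
        refine le_trans ?_ ih
        have h2 := spline_step Ω hΩconc w v hw0 hw1 hv c hc (tᶜ.erase a) a
          (Finset.notMem_erase a _)
        rw [Finset.insert_erase (Finset.mem_compl.2 ha)] at h2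
        rw [Finset.compl_insert]
        exact h2
  have h := key Finset.univ
  simpa using h

theorem multilinear_spline_error (n : ℕ) (hn : 1 ≤ n)
    (Ω : (Fin n → ℝ) → ℝ) (m : Fin n → ℕ) (hm : ∀ i, 2 ≤ m i)
    (f S : (Fin n → ℝ) → ℝ)
    (hf : ContinuousOn f (univ.pi fun _ => Icc 0 1))
    -- Ω is an MC-type function on [0,1]^n
    (hΩ0 : Ω 0 = 0)
    (hΩmono : ∀ σ τ : Fin n → ℝ, (∀ i, σ i ∈ Icc (0:ℝ) 1) → (∀ i, τ i ∈ Icc (0:ℝ) 1) →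
      σ ≤ τ → Ω σ ≤ Ω τ)
    (hΩsub : ∀ σ τ : Fin n → ℝ, (∀ i, σ i ∈ Icc (0:ℝ) 1) → (∀ i, τ i ∈ Icc (0:ℝ) 1) →
      (∀ i, σ i + τ i ∈ Icc (0:ℝ) 1) → Ω (σ + τ) ≤ Ω σ + Ω τ)
    (hΩcont : ContinuousOn Ω (univ.pi fun _ => Icc 0 1))
    -- Ω is concave in each variable separately
    (hΩconc : ∀ τ : Fin n → ℝ, (∀ i, τ i ∈ Icc (0:ℝ) 1) → ∀ i : Fin n,
      ConcaveOn ℝ (Icc 0 1) (fun t => Ω (Function.update τ i t)))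
    -- the total modulus of continuity of f is bounded by Ω
    (hmod : ∀ τ : Fin n → ℝ, (∀ i, τ i ∈ Icc (0:ℝ) 1) →
      ∀ x y : Fin n → ℝ, (∀ i, x i ∈ Icc (0:ℝ) 1) → (∀ i, y i ∈ Icc (0:ℝ) 1) →
      (∀ i, |x i - y i| ≤ τ i) → |f x - f y| ≤ Ω τ)
    -- S is the multilinear spline interpolating f at the grid points
    (hS : ∀ j : Fin n → ℕ, (∀ i, j i < m i) →
      ∀ x : Fin n → ℝ, (∀ i, x i ∈ Icc ((j i : ℝ) / m i) ((j i + 1 : ℝ) / m i)) →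
      S x = ∑ l : Fin n → Bool,
        f (fun i => ((j i : ℝ) + (if l i then 1 else 0)) / m i) *
          ∏ i, hat (m i) (j i) (l i) (x i)) :
    ∀ x : Fin n → ℝ, (∀ i, x i ∈ Icc (0:ℝ) 1) →
      |f x - S x| ≤ Ω (fun i => 1 / (2 * m i)) := by
  intro x hx
  classical
  have hmpos : ∀ i, (0:ℝ) < m i := by
    intro i
    have h := hm i
    have h2 : (0:ℕ) < m i := by omega
    exact_mod_cast h2
  set j : Fin n → ℕ := fun i => min ⌊(m i : ℝ) * x i⌋₊ (m i - 1) with hj_def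
  have hj : ∀ i, j i < m i := by
    intro i
    have h1 : j i ≤ m i - 1 := min_le_right _ _
    have := hm i
    omega
  have hxlow : ∀ i, (j i : ℝ) / m i ≤ x i := by
    intro i
    rw [div_le_iff₀ (hmpos i)]
    have h1 : (j i : ℝ) ≤ ⌊(m i : ℝ) * x i⌋₊ := by
      exact_mod_cast min_le_left ⌊(m i : ℝ) * x i⌋₊ (m i - 1)
    have h2 : (⌊(m i : ℝ) * x i⌋₊ : ℝ) ≤ (m i : ℝ) * x i :=
      Nat.floor_le (mul_nonneg (le_of_lt (hmpos i)) (hx i).1)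
    nlinarith
  have hxhigh : ∀ i, x i ≤ ((j i : ℝ) + 1) / m i := by
    intro i
    rw [le_div_iff₀ (hmpos i)]
    rcases le_total ⌊(m i : ℝ) * x i⌋₊ (m i - 1) with h | h
    · have hji : j i = ⌊(m i : ℝ) * x i⌋₊ := min_eq_left h
      have h2 : (m i : ℝ) * x i < ⌊(m i : ℝ) * x i⌋₊ + 1 := Nat.lt_floor_add_one _
      rw [hji]
      nlinarith
    · have hji : j i = m i - 1 := min_eq_right h
      have hcast : ((j i : ℝ)) + 1 = m i := by
        rw [hji]
        have := hm i
        push_cast [Nat.cast_sub (by omega : 1 ≤ m i)]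
        ring
      rw [hcast]
      nlinarith [(hx i).2, hmpos i]
  have hxj : ∀ i, x i ∈ Icc ((j i : ℝ) / m i) ((j i + 1 : ℝ) / m i) :=
    fun i => ⟨hxlow i, hxhigh i⟩
  set A : Fin n → ℝ := fun i => x i - (j i : ℝ) / m i with hA_def
  set B : Fin n → ℝ := fun i => ((j i : ℝ) + 1) / m i - x i with hB_def
  have hA0 : ∀ i, 0 ≤ A i := fun i => sub_nonneg.2 (hxlow i)
  have hB0 : ∀ i, 0 ≤ B i := fun i => sub_nonneg.2 (hxhigh i)
  have hAB : ∀ i, A i + B i = 1 / m i := by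
    intro i
    have hm0 : (m i : ℝ) ≠ 0 := ne_of_gt (hmpos i)
    simp only [hA_def, hB_def]
    field_simp
    ring
  have hm1le : ∀ i, 1 / (m i : ℝ) ≤ 1 := by
    intro i
    rw [div_le_one (hmpos i)]
    exact_mod_cast le_trans (by norm_num) (hm i)
  set w : Fin n → Bool → ℝ := fun i b => hat (m i) (j i) b (x i) with hw_def
  have hwf : ∀ i, w i false = (m i : ℝ) * B i := by
    intro i; simp [hw_def, hat, hB_def]
  have hwsum : ∀ i, w i false + w i true = 1 := by
    intro i; simp [hw_def, hat]
  have hwt : ∀ i, w i true = (m i : ℝ) * A i := by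
    intro i
    have h1 := hwsum i
    have h2 := hwf i
    have h3 : (m i : ℝ) * A i + (m i : ℝ) * B i = 1 := by
      rw [← mul_add, hAB i, mul_one_div, div_self (ne_of_gt (hmpos i))]
    linarith
  have hw0 : ∀ i b, 0 ≤ w i b := by
    intro i b
    cases b
    · rw [hwf i]; exact mul_nonneg (le_of_lt (hmpos i)) (hB0 i)
    · rw [hwt i]; exact mul_nonneg (le_of_lt (hmpos i)) (hA0 i)
  set v : Fin n → Bool → ℝ := fun i b => if b then B i else A i with hv_def
  have hv : ∀ i b, v i b ∈ Icc (0:ℝ) 1 := by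
    intro i b
    have hA1 : A i ≤ 1 := by
      have h1 : A i ≤ 1 / m i := by rw [← hAB i]; linarith [hB0 i]
      exact le_trans h1 (hm1le i)
    have hB1 : B i ≤ 1 := by
      have h1 : B i ≤ 1 / m i := by rw [← hAB i]; linarith [hA0 i]
      exact le_trans h1 (hm1le i)
    cases b
    · exact ⟨hA0 i, hA1⟩
    · exact ⟨hB0 i, hB1⟩
  set c : Fin n → ℝ := fun i => w i false * v i false + w i true * v i true with hc_def
  have hc : ∀ i, c i = w i false * v i false + w i true * v i true := fun i => rfl
  -- the grid points
  set P : (Fin n → Bool) → (Fin n → ℝ) :=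
    fun l i => ((j i : ℝ) + (if l i then 1 else 0)) / m i with hP_def
  have hPmem : ∀ l i, P l i ∈ Icc (0:ℝ) 1 := by
    intro l i
    have hjm : (j i : ℝ) + 1 ≤ m i := by exact_mod_cast hj i
    have hj0 : (0:ℝ) ≤ (j i : ℝ) := Nat.cast_nonneg _
    have h0 : (0:ℝ) ≤ (j i : ℝ) + (if l i then 1 else 0) := by split <;> linarith
    have h1 : (j i : ℝ) + (if l i then 1 else 0) ≤ m i := by split <;> linarith
    refine ⟨div_nonneg h0 (le_of_lt (hmpos i)), ?_⟩
    rw [div_le_one (hmpos i)]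
    exact h1
  have hPdist : ∀ l i, |x i - P l i| ≤ v i (l i) := by
    intro l i
    cases hl : l i
    · have hP : P l i = (j i : ℝ) / m i := by simp [hP_def, hl]
      rw [hP]
      show |x i - (j i : ℝ) / m i| ≤ A i
      rw [abs_of_nonneg (sub_nonneg.2 (hxlow i))]
    · have hP : P l i = ((j i : ℝ) + 1) / m i := by simp [hP_def, hl]
      rw [hP]
      show |x i - ((j i : ℝ) + 1) / m i| ≤ B i
      rw [abs_sub_comm, abs_of_nonneg (sub_nonneg.2 (hxhigh i))]
  have hfP : ∀ l, |f x - f (P l)| ≤ Ω (fun i => v i (l i)) :=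
    fun l => hmod (fun i => v i (l i)) (fun i => hv i (l i)) x (P l) hx (hPmem l) (hPdist l)
  have hSx : S x = ∑ l : Fin n → Bool, f (P l) * ∏ i, w i (l i) := hS j hj x hxj
  have hdiff : f x - S x = ∑ l : Fin n → Bool, (f x - f (P l)) * ∏ i, w i (l i) := by
    rw [hSx]
    have hs1 : ∑ l : Fin n → Bool, ∏ k, w k (l k) = 1 := sum_prod_w w hwsum
    calc f x - ∑ l : Fin n → Bool, f (P l) * ∏ i, w i (l i)
        = f x * (∑ l : Fin n → Bool, ∏ k, w k (l k))
            - ∑ l : Fin n → Bool, f (P l) * ∏ i, w i (l i) := by rw [hs1, mul_one]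
      _ = ∑ l : Fin n → Bool, (f x - f (P l)) * ∏ i, w i (l i) := by
          rw [Finset.mul_sum, ← Finset.sum_sub_distrib]
          exact Finset.sum_congr rfl fun l _ => by ring
  have hab' : ∀ i, (m i : ℝ) * A i + (m i : ℝ) * B i = 1 := by
    intro i
    rw [← mul_add, hAB i, mul_one_div, div_self (ne_of_gt (hmpos i))]
  have hcle : ∀ i, c i ≤ 1 / (2 * (m i : ℝ)) := by
    intro i
    rw [hc i, hwf i, hwt i]
    simp only [hv_def, if_true, if_false, Bool.false_eq_true]
    rw [le_div_iff₀ (by have := hmpos i; linarith : (0:ℝ) < 2 * m i)]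
    nlinarith [sq_nonneg ((m i : ℝ) * A i - (m i : ℝ) * B i), hab' i]
  have hcmem : ∀ i, c i ∈ Icc (0:ℝ) 1 := by
    intro i
    constructor
    · rw [hc i]
      have h1 := hw0 i false; have h2 := hw0 i true
      have h3 := (hv i false).1; have h4 := (hv i true).1
      positivity
    · refine le_trans (hcle i) ?_
      rw [div_le_one (by have := hmpos i; linarith : (0:ℝ) < 2 * m i)]
      have : (2:ℝ) ≤ m i := by exact_mod_cast hm i
      linarith
  have htmem : ∀ i, 1 / (2 * (m i : ℝ)) ∈ Icc (0:ℝ) 1 := by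
    intro i
    constructor
    · exact div_nonneg zero_le_one (by positivity)
    · rw [div_le_one (by have := hmpos i; linarith : (0:ℝ) < 2 * m i)]
      have : (2:ℝ) ≤ m i := by exact_mod_cast hm i
      linarith
  rw [hdiff]
  calc |∑ l : Fin n → Bool, (f x - f (P l)) * ∏ i, w i (l i)|
      ≤ ∑ l : Fin n → Bool, |(f x - f (P l)) * ∏ i, w i (l i)| :=
        Finset.abs_sum_le_sum_abs _ _
    _ = ∑ l : Fin n → Bool, (∏ i, w i (l i)) * |f x - f (P l)| := by
        refine Finset.sum_congr rfl fun l _ => ?_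
        rw [abs_mul, abs_of_nonneg (Finset.prod_nonneg fun k _ => hw0 k _), mul_comm]
    _ ≤ ∑ l : Fin n → Bool, (∏ i, w i (l i)) * Ω (fun i => v i (l i)) :=
        Finset.sum_le_sum fun l _ =>
          mul_le_mul_of_nonneg_left (hfP l) (Finset.prod_nonneg fun k _ => hw0 k _)
    _ ≤ Ω c := spline_avg Ω hΩconc w v hw0 hwsum hv c hc
    _ ≤ Ω (fun i => 1 / (2 * (m i : ℝ))) :=
        hΩmono c _ hcmem htmem fun i => hcle i
end

section
/- Under the hypotheses of the multilinear interpolation theorem (Ω of MC-type on [0,1]^n, concave in each variable, mᵢ ≥ 2), the supremum over the class C_D(Ω) = {f continuous : ω(f;τ) ≤ Ω(τ)} of ‖f − S_m(f)‖_∞ equals exactly Ω(1/(2m₁),...,1/(2mₙ)). -/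
open Set

lemma jensen_aux {n : ℕ} (Ω : (Fin n → ℝ) → ℝ)
    (hΩconc : ∀ τ : Fin n → ℝ, (∀ i, τ i ∈ Icc (0:ℝ) 1) → ∀ i : Fin n,
      ConcaveOn ℝ (Icc 0 1) (fun t => Ω (Function.update τ i t)))
    (w a : Fin n → Bool → ℝ)
    (hw0 : ∀ i b, 0 ≤ w i b) (hw1 : ∀ i, w i false + w i true = 1)
    (ha : ∀ i b, a i b ∈ Icc (0:ℝ) 1) :
    ∑ l : Fin n → Bool, (∏ i, w i (l i)) * Ω (fun i => a i (l i)) ≤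
      Ω (fun i => w i false * a i false + w i true * a i true) := by
  set ab : Fin n → ℝ := fun i => w i false * a i false + w i true * a i true with hab
  have hab01 : ∀ i, ab i ∈ Icc (0:ℝ) 1 := by
    intro i
    have h1 := ha i false; have h2 := ha i true
    have h3 := hw0 i false; have h4 := hw0 i true; have h5 := hw1 i
    simp only [Set.mem_Icc] at h1 h2 ⊢
    have hei : ab i = w i false * a i false + w i true * a i true := rfl
    rw [hei]
    constructor
    · nlinarith [h1.1, h2.1]
    · nlinarith [h1.1, h1.2, h2.1, h2.2]
  set W : Finset (Fin n) → Fin n → Bool → ℝ :=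
    fun s i b => if i ∈ s then w i b else if b then 0 else 1 with hW
  set A : Finset (Fin n) → Fin n → Bool → ℝ :=
    fun s i b => if i ∈ s then a i b else ab i with hA
  suffices H : ∀ s : Finset (Fin n),
      ∑ l : Fin n → Bool, (∏ i, W s i (l i)) * Ω (fun i => A s i (l i)) ≤ Ω ab by
    have := H Finset.univ
    simpa [W, A] using this
  intro s
  induction s using Finset.induction_on with
  | empty =>
    have h0 : ∑ l : Fin n → Bool, (∏ i, W ∅ i (l i)) * Ω (fun i => A ∅ i (l i)) = Ω ab := by
      rw [Finset.sum_eq_single (fun _ => false : Fin n → Bool)]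
      · simp [W, A]
      · intro l _ hl
        have : ∃ i, l i = true := by
          by_contra h
          push_neg at h
          exact hl (funext fun i => by simpa using h i)
        obtain ⟨i, hi⟩ := this
        apply mul_eq_zero_of_left
        exact Finset.prod_eq_zero (Finset.mem_univ i) (by simp [W, hi])
      · simp
    rw [h0]
  | @insert k s hk ih =>
    refine le_trans ?_ ih
    set e := Equiv.funSplitAt k Bool with he
    have hsum : ∀ F : (Fin n → Bool) → ℝ, ∑ l : Fin n → Bool, F l
        = ∑ g : {j : Fin n // j ≠ k} → Bool, (F (e.symm (false, g)) + F (e.symm (true, g))) := by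
      intro F
      rw [← Equiv.sum_comp e.symm F, Fintype.sum_prod_type_right]
      refine Finset.sum_congr rfl fun g _ => ?_
      rw [Fintype.sum_bool, add_comm]
    rw [hsum, hsum]
    apply Finset.sum_le_sum
    intro g _
    have hk1 : ∀ b, e.symm (b, g) k = b := by
      intro b
      exact congrArg Prod.fst (e.apply_symm_apply (b, g))
    have hj1 : ∀ b (i : Fin n) (hi : i ≠ k), e.symm (b, g) i = g ⟨i, hi⟩ := by
      intro b i hi
      exact congrArg (fun p => p.2 ⟨i, hi⟩) (e.apply_symm_apply (b, g))
    have hR0 : (0:ℝ) ≤ ∏ i ∈ Finset.univ.erase k, W s i (e.symm (false, g) i) := by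
      apply Finset.prod_nonneg
      intro i _
      simp only [W]
      split_ifs
      · exact hw0 _ _
      · norm_num
      · norm_num
    obtain ⟨v, hv⟩ : ∃ v : Fin n → ℝ, v = fun i => A s i (e.symm (false, g) i) := ⟨_, rfl⟩
    have hv01 : ∀ i, v i ∈ Icc (0:ℝ) 1 := by
      intro i
      rw [hv]
      simp only [A]
      split_ifs
      · exact ha _ _
      · exact hab01 i
    have hprodIns : ∀ b, (∏ i, W (insert k s) i ((e.symm (b, g)) i))
        = w k b * ∏ i ∈ Finset.univ.erase k, W s i (e.symm (false, g) i) := by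
      intro b
      rw [← Finset.mul_prod_erase Finset.univ _ (Finset.mem_univ k)]
      congr 1
      · rw [hk1 b]; simp [W]
      · refine Finset.prod_congr rfl fun i hi => ?_
        have hik : i ≠ k := (Finset.mem_erase.mp hi).1
        rw [hj1 b i hik, hj1 false i hik]
        simp only [W, Finset.mem_insert]
        by_cases h : i ∈ s <;> simp [h, hik]
    have hprodS : ∀ b, (∏ i, W s i ((e.symm (b, g)) i))
        = (if b then 0 else 1) * ∏ i ∈ Finset.univ.erase k, W s i (e.symm (false, g) i) := by
      intro b
      rw [← Finset.mul_prod_erase Finset.univ _ (Finset.mem_univ k)]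
      congr 1
      · rw [hk1 b]; simp [W, hk]
      · refine Finset.prod_congr rfl fun i hi => ?_
        have hik : i ≠ k := (Finset.mem_erase.mp hi).1
        rw [hj1 b i hik, hj1 false i hik]
    have hargIns : ∀ b, (fun i => A (insert k s) i ((e.symm (b, g)) i))
        = Function.update v k (a k b) := by
      intro b
      subst hv
      funext i
      by_cases h : i = k
      · subst h
        rw [hk1 b, Function.update_self]
        simp [A]
      · rw [hj1 b i h, Function.update_of_ne h]
        simp only [A, Finset.mem_insert]
        rw [hj1 false i h]
        by_cases h2 : i ∈ s <;> simp [h, h2]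
    have hargS : ∀ b, (fun i => A s i ((e.symm (b, g)) i))
        = Function.update v k (ab k) := by
      intro b
      subst hv
      funext i
      by_cases h : i = k
      · subst h
        rw [hk1 b, Function.update_self]
        simp [A, hk]
      · rw [hj1 b i h, Function.update_of_ne h]
        rw [hj1 false i h]
    have hvk : Function.update v k (ab k) = v := by
      have h1 : v k = ab k := by
        rw [hv]
        simp only
        rw [hk1 false]
        simp [A, hk]
      rw [← h1]
      exact Function.update_eq_self k v
    rw [hprodIns, hprodIns, hprodS, hprodS, hargIns, hargIns, hargS true, ← hv]
    have hconc := (hΩconc v hv01 k).2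
      (ha k false) (ha k true) (hw0 k false) (hw0 k true) (hw1 k)
    simp only [smul_eq_mul] at hconc
    rw [show w k false * a k false + w k true * a k true = ab k from rfl, hvk] at hconc
    simp only [if_true, if_false, Bool.false_eq_true, ite_true, ite_false, one_mul, zero_mul]
    nlinarith [mul_le_mul_of_nonneg_left hconc hR0]

theorem multilinear_class_error (n : ℕ) (hn : 1 ≤ n)
    (Ω : (Fin n → ℝ) → ℝ) (m : Fin n → ℕ) (hm : ∀ i, 2 ≤ m i)
    -- Ω is an MC-type function on [0,1]^n
    (hΩ0 : Ω 0 = 0)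
    (hΩmono : ∀ σ τ : Fin n → ℝ, (∀ i, σ i ∈ Icc (0:ℝ) 1) → (∀ i, τ i ∈ Icc (0:ℝ) 1) →
      σ ≤ τ → Ω σ ≤ Ω τ)
    (hΩsub : ∀ σ τ : Fin n → ℝ, (∀ i, σ i ∈ Icc (0:ℝ) 1) → (∀ i, τ i ∈ Icc (0:ℝ) 1) →
      (∀ i, σ i + τ i ∈ Icc (0:ℝ) 1) → Ω (σ + τ) ≤ Ω σ + Ω τ)
    (hΩcont : ContinuousOn Ω (univ.pi fun _ => Icc 0 1))
    -- Ω is concave in each variable separately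
    (hΩconc : ∀ τ : Fin n → ℝ, (∀ i, τ i ∈ Icc (0:ℝ) 1) → ∀ i : Fin n,
      ConcaveOn ℝ (Icc 0 1) (fun t => Ω (Function.update τ i t))) :
    IsLUB {e : ℝ | ∃ f S : (Fin n → ℝ) → ℝ, ∃ x : Fin n → ℝ,
      (∀ i, x i ∈ Icc (0:ℝ) 1) ∧
      ContinuousOn f (univ.pi fun _ => Icc 0 1) ∧
      -- f belongs to the class C_D(Ω)
      (∀ τ : Fin n → ℝ, (∀ i, τ i ∈ Icc (0:ℝ) 1) →
        ∀ y z : Fin n → ℝ, (∀ i, y i ∈ Icc (0:ℝ) 1) → (∀ i, z i ∈ Icc (0:ℝ) 1) →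
        (∀ i, |y i - z i| ≤ τ i) → |f y - f z| ≤ Ω τ) ∧
      -- S is the multilinear spline interpolating f at the grid points
      (∀ j : Fin n → ℕ, (∀ i, j i < m i) →
        ∀ y : Fin n → ℝ, (∀ i, y i ∈ Icc ((j i : ℝ) / m i) ((j i + 1 : ℝ) / m i)) →
        S y = ∑ l : Fin n → Bool,
          f (fun i => ((j i : ℝ) + (if l i then 1 else 0)) / m i) *
            ∏ i, hat (m i) (j i) (l i) (y i)) ∧
      e = |f x - S x|}
      (Ω (fun i => 1 / (2 * m i))) := by
  classical
  have hm0 : ∀ i, (0:ℝ) < (m i : ℝ) := by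
    intro i
    have : 0 < m i := by have := hm i; omega
    exact_mod_cast this
  have hm1 : ∀ i, (1:ℝ) ≤ (m i : ℝ) := by
    intro i
    have : 1 ≤ m i := by have := hm i; omega
    exact_mod_cast this
  have hhalf : ∀ i, (0:ℝ) < 1 / (2 * (m i : ℝ)) := fun i => by
    have := hm0 i; positivity
  have hhalf1 : ∀ i, 1 / (2 * (m i:ℝ)) ≤ 1 := by
    intro i
    rw [div_le_one (by have := hm0 i; positivity)]
    nlinarith [hm1 i]
  have hinv1 : ∀ i, 1 / (m i:ℝ) ≤ 1 := by
    intro i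
    rw [div_le_one (hm0 i)]
    exact hm1 i
  have hsplit : ∀ i, 1/(m i:ℝ) - 1/(2*m i) = 1/(2*m i) := by
    intro i
    have hmne := (hm0 i).ne'
    field_simp
    ring
  constructor
  · -- upper bound
    rintro e ⟨f, S, x, hx, hfc, hclass, hS, rfl⟩
    set j : Fin n → ℕ := fun i => min (⌊(m i : ℝ) * x i⌋.toNat) (m i - 1) with hjdef
    have hfl0 : ∀ i, 0 ≤ ⌊(m i : ℝ) * x i⌋ :=
      fun i => Int.floor_nonneg.mpr (mul_nonneg (hm0 i).le (hx i).1)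
    have hjlt : ∀ i, j i < m i := by
      intro i
      have h1 : j i ≤ m i - 1 := min_le_right _ _
      have := hm i
      omega
    have hjl : ∀ i, (j i : ℝ) ≤ m i * x i := by
      intro i
      have h1 : (j i : ℕ) ≤ ⌊(m i:ℝ) * x i⌋.toNat := min_le_left _ _
      calc (j i : ℝ) ≤ ((⌊(m i:ℝ) * x i⌋.toNat : ℕ) : ℝ) := by exact_mod_cast h1
        _ = ((⌊(m i:ℝ) * x i⌋ : ℤ) : ℝ) := by
            exact_mod_cast Int.toNat_of_nonneg (hfl0 i)
        _ ≤ m i * x i := Int.floor_le _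
    have hju : ∀ i, (m i:ℝ) * x i ≤ (j i : ℝ) + 1 := by
      intro i
      have hnat : j i + 1 = min (⌊(m i:ℝ) * x i⌋.toNat + 1) (m i) := by
        have h2 := hm i
        simp only [hjdef]
        omega
      have h2 : (m i:ℝ) * x i < (⌊(m i:ℝ)*x i⌋.toNat : ℝ) + 1 := by
        have h3 := Int.lt_floor_add_one ((m i:ℝ) * x i)
        rw [← Int.toNat_of_nonneg (hfl0 i), Int.cast_natCast] at h3
        exact h3
      have h3 : (m i:ℝ) * x i ≤ (m i : ℝ) := by nlinarith [(hx i).2, hm0 i]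
      have h4 : ((j i:ℝ) + 1) = ((j i + 1 : ℕ) : ℝ) := by push_cast; ring
      rw [h4, hnat, Nat.cast_min]
      refine le_min ?_ h3
      push_cast
      exact h2.le
    have hxlb : ∀ i, (j i:ℝ)/m i ≤ x i := by
      intro i
      rw [div_le_iff₀ (hm0 i), mul_comm]
      exact hjl i
    have hxub : ∀ i, x i ≤ ((j i:ℝ)+1)/m i := by
      intro i
      rw [le_div_iff₀ (hm0 i), mul_comm]
      exact hju i
    set sg : Fin n → ℝ := fun i => (m i:ℝ) * x i - j i with hsg
    have hs0 : ∀ i, 0 ≤ sg i := fun i => by simp only [hsg]; linarith [hjl i]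
    have hs1 : ∀ i, sg i ≤ 1 := fun i => by simp only [hsg]; linarith [hju i]
    have hatT : ∀ i, hat (m i) (j i) true (x i) = sg i := by
      intro i
      simp only [hat, if_true, hsg]
      have hmne := (hm0 i).ne'
      field_simp
      ring
    have hatF : ∀ i, hat (m i) (j i) false (x i) = 1 - sg i := by
      intro i
      simp only [hat, Bool.false_eq_true, if_false, hsg]
      have hmne := (hm0 i).ne'
      field_simp
      ring
    set wgt : Fin n → Bool → ℝ := fun i b => if b then sg i else 1 - sg i with hwgt
    set av : Fin n → Bool → ℝ :=
      fun i b => if b then ((j i:ℝ)+1)/m i - x i else x i - (j i:ℝ)/m i with hav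
    have hgap : ∀ i, ((j i:ℝ)+1)/m i - (j i:ℝ)/m i = 1/(m i:ℝ) := by
      intro i
      have hmne := (hm0 i).ne'
      field_simp
      ring
    have hw0' : ∀ i b, 0 ≤ wgt i b := by
      intro i b
      cases b <;> simp [wgt] <;> [linarith [hs1 i]; exact hs0 i]
    have hw1' : ∀ i, wgt i false + wgt i true = 1 := by
      intro i
      simp [wgt]
    have ha_av : ∀ i b, av i b ∈ Icc (0:ℝ) 1 := by
      intro i b
      cases b <;> simp only [av, Bool.false_eq_true, if_false, if_true] <;>
        constructor
      · linarith [hxlb i]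
      · linarith [hxub i, hgap i, hinv1 i]
      · linarith [hxub i]
      · linarith [hxlb i, hgap i, hinv1 i]
    have hxblock : ∀ i, x i ∈ Icc ((j i:ℝ)/m i) (((j i:ℝ)+1)/m i) := fun i => ⟨hxlb i, hxub i⟩
    have hSx := hS j hjlt x hxblock
    have hprod : ∀ l : Fin n → Bool,
        ∏ i, hat (m i) (j i) (l i) (x i) = ∏ i, wgt i (l i) := by
      intro l
      refine Finset.prod_congr rfl fun i _ => ?_
      cases hb : l i
      · rw [hatF i]; simp [wgt]
      · rw [hatT i]; simp [wgt]
    have hsum1 : ∑ l : Fin n → Bool, ∏ i, wgt i (l i) = 1 := by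
      rw [← Fintype.piFinset_univ, ← Finset.prod_univ_sum]
      apply Finset.prod_eq_one
      intro i _
      rw [Fintype.sum_bool]
      simp [wgt]
    have hp01 : ∀ (l : Fin n → Bool) i,
        ((j i : ℝ) + (if l i then 1 else 0)) / m i ∈ Icc (0:ℝ) 1 := by
      intro l i
      constructor
      · apply div_nonneg _ (hm0 i).le
        have : (0:ℝ) ≤ (j i : ℝ) := Nat.cast_nonneg _
        split_ifs <;> linarith
      · rw [div_le_one (hm0 i)]
        have h1 : (j i:ℝ) + 1 ≤ m i := by exact_mod_cast hjlt i
        split_ifs <;> linarith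
    have hdist : ∀ (l : Fin n → Bool) i,
        |x i - ((j i : ℝ) + (if l i then 1 else 0)) / m i| = av i (l i) := by
      intro l i
      cases hb : l i
      · simp only [hb, Bool.false_eq_true, if_false, add_zero, av]
        exact abs_of_nonneg (by linarith [hxlb i])
      · simp only [hb, if_true, av]
        rw [abs_of_nonpos (by linarith [hxub i])]
        ring
    have hfp : ∀ l : Fin n → Bool,
        |f x - f (fun i => ((j i : ℝ) + (if l i then 1 else 0)) / m i)| ≤
          Ω (fun i => av i (l i)) := by
      intro l
      exact hclass (fun i => av i (l i)) (fun i => ha_av i (l i)) x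
        (fun i => ((j i : ℝ) + (if l i then 1 else 0)) / m i) hx (hp01 l)
        (fun i => le_of_eq (hdist l i))
    have hdiff : f x - S x = ∑ l : Fin n → Bool,
        (∏ i, wgt i (l i)) * (f x - f (fun i => ((j i : ℝ) + (if l i then 1 else 0)) / m i)) := by
      have h1 : ∑ l : Fin n → Bool, (∏ i, wgt i (l i)) *
            (f x - f (fun i => ((j i : ℝ) + (if l i then 1 else 0)) / m i))
          = (∑ l : Fin n → Bool, ∏ i, wgt i (l i)) * f x
            - ∑ l : Fin n → Bool,
                f (fun i => ((j i : ℝ) + (if l i then 1 else 0)) / m i) * ∏ i, wgt i (l i) := by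
        rw [Finset.sum_mul, ← Finset.sum_sub_distrib]
        exact Finset.sum_congr rfl fun l _ => by ring
      rw [h1, hsum1, one_mul, hSx]
      congr 1
      exact Finset.sum_congr rfl fun l _ => by rw [hprod l]
    have hpn : ∀ l : Fin n → Bool, (0:ℝ) ≤ ∏ i, wgt i (l i) :=
      fun l => Finset.prod_nonneg fun i _ => hw0' i (l i)
    have hkey : |f x - S x| ≤ ∑ l : Fin n → Bool,
        (∏ i, wgt i (l i)) * Ω (fun i => av i (l i)) := by
      rw [hdiff]
      refine le_trans (Finset.abs_sum_le_sum_abs _ _) ?_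
      refine Finset.sum_le_sum fun l _ => ?_
      rw [abs_mul, abs_of_nonneg (hpn l)]
      exact mul_le_mul_of_nonneg_left (hfp l) (hpn l)
    have hjen := jensen_aux Ω hΩconc wgt av hw0' hw1' ha_av
    have hmix : ∀ i, 0 ≤ wgt i false * av i false + wgt i true * av i true
        ∧ wgt i false * av i false + wgt i true * av i true ≤ 1/(2*(m i:ℝ)) := by
      intro i
      have hmne := (hm0 i).ne'
      have e3 : x i - (j i:ℝ)/m i = sg i / m i := by
        simp only [hsg]
        field_simp
      have e4 : ((j i:ℝ)+1)/m i - x i = (1 - sg i)/m i := by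
        simp only [hsg]
        field_simp
        ring
      simp only [wgt, av, if_true, Bool.false_eq_true, if_false]
      rw [e3, e4]
      constructor
      · apply add_nonneg
        · exact mul_nonneg (by linarith [hs1 i])
            (div_nonneg (hs0 i) (hm0 i).le)
        · exact mul_nonneg (hs0 i)
            (div_nonneg (by linarith [hs1 i]) (hm0 i).le)
      · have hcomb : (1 - sg i) * (sg i / m i) + sg i * ((1 - sg i)/ m i)
            = (2*(sg i*(1-sg i)))/(m i:ℝ) := by ring
        rw [hcomb, div_le_div_iff₀ (hm0 i) (by have := hm0 i; positivity)]
        nlinarith [sq_nonneg (2*sg i - 1), hm0 i]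
    calc |f x - S x| ≤ ∑ l : Fin n → Bool, (∏ i, wgt i (l i)) * Ω (fun i => av i (l i)) := hkey
      _ ≤ Ω (fun i => wgt i false * av i false + wgt i true * av i true) := hjen
      _ ≤ Ω (fun i => 1/(2*(m i:ℝ))) := by
          apply hΩmono
          · exact fun i => ⟨(hmix i).1, le_trans (hmix i).2 (hhalf1 i)⟩
          · exact fun i => ⟨(hhalf i).le, hhalf1 i⟩
          · exact Pi.le_def.mpr fun i => (hmix i).2

  · -- least upper bound
    intro bd hbd
    apply hbd
    refine ⟨fun y => Ω (fun i => max 0 (min (y i) (1/(m i:ℝ) - y i))), fun _ => 0,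
      fun i => 1/(2*(m i:ℝ)), fun i => ⟨(hhalf i).le, hhalf1 i⟩, ?_, ?_, ?_, ?_⟩
    · -- continuity
      have hgc : Continuous (fun y : Fin n → ℝ => fun i => max 0 (min (y i) (1/(m i:ℝ) - y i))) := by
        apply continuous_pi
        intro i
        exact continuous_const.max ((continuous_apply i).min
          (continuous_const.sub (continuous_apply i)))
      refine ContinuousOn.comp hΩcont hgc.continuousOn ?_
      intro y hy
      rw [Set.mem_univ_pi] at hy ⊢
      intro i
      exact ⟨le_max_left _ _, max_le zero_le_one (le_trans (min_le_left _ _) (hy i).2)⟩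
    · -- class membership
      intro τ hτ y z hy hz hyz
      show |Ω (fun i => max 0 (min (y i) (1/(m i:ℝ) - y i)))
        - Ω (fun i => max 0 (min (z i) (1/(m i:ℝ) - z i)))| ≤ Ω τ
      have hbound : ∀ (u : Fin n → ℝ), ∀ i,
          max 0 (min (u i) (1/(m i:ℝ) - u i)) ≤ 1/(2*(m i:ℝ)) := by
        intro u i
        rcases le_total (u i) (1/(2*(m i:ℝ))) with h | h
        · exact max_le (hhalf i).le (le_trans (min_le_left _ _) h)
        · refine max_le (hhalf i).le (le_trans (min_le_right _ _) ?_)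
          linarith [hsplit i]
      set Ay : Fin n → ℝ := fun i => max 0 (min (y i) (1/(m i:ℝ) - y i)) with hAy
      set Az : Fin n → ℝ := fun i => max 0 (min (z i) (1/(m i:ℝ) - z i)) with hAz
      set d : Fin n → ℝ := fun i => |Ay i - Az i| with hd
      have hAy0 : ∀ i, 0 ≤ Ay i := fun i => le_max_left _ _
      have hAz0 : ∀ i, 0 ≤ Az i := fun i => le_max_left _ _
      have hAy2 : ∀ i, Ay i ≤ 1/(2*(m i:ℝ)) := fun i => hbound y i
      have hAz2 : ∀ i, Az i ≤ 1/(2*(m i:ℝ)) := fun i => hbound z i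
      have glip : ∀ i, d i ≤ |y i - z i| := by
        intro i
        have h1 : |min (y i) (1/(m i:ℝ) - y i) - min (z i) (1/(m i:ℝ) - z i)| ≤ |y i - z i| := by
          refine le_trans (abs_min_sub_min_le_max _ _ _ _) ?_
          have h2 : (1/(m i:ℝ) - y i) - (1/(m i:ℝ) - z i) = -(y i - z i) := by ring
          rw [h2, abs_neg]
          exact max_le le_rfl le_rfl
        have h3 := abs_max_sub_max_le_max (0:ℝ) (min (y i) (1/(m i:ℝ) - y i))
          0 (min (z i) (1/(m i:ℝ) - z i))
        simp only [sub_self, abs_zero] at h3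
        rw [max_eq_right (abs_nonneg (min (y i) (1/(m i:ℝ) - y i)
          - min (z i) (1/(m i:ℝ) - z i)))] at h3
        exact le_trans h3 h1
      have hd0 : ∀ i, 0 ≤ d i := fun i => abs_nonneg _
      have hd2 : ∀ i, d i ≤ 1/(2*(m i:ℝ)) := by
        intro i
        have h1 := hAy2 i; have h2 := hAz2 i
        have h3 := hAy0 i; have h4 := hAz0 i
        rw [show d i = |Ay i - Az i| from rfl, abs_sub_le_iff]
        constructor <;> linarith
      have hAycc : ∀ i, Ay i ∈ Icc (0:ℝ) 1 :=
        fun i => ⟨hAy0 i, le_trans (hAy2 i) (hhalf1 i)⟩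
      have hAzcc : ∀ i, Az i ∈ Icc (0:ℝ) 1 :=
        fun i => ⟨hAz0 i, le_trans (hAz2 i) (hhalf1 i)⟩
      have hdcc : ∀ i, d i ∈ Icc (0:ℝ) 1 :=
        fun i => ⟨hd0 i, le_trans (hd2 i) (hhalf1 i)⟩
      have hsum1cc : ∀ i, Az i + d i ∈ Icc (0:ℝ) 1 := by
        intro i
        refine ⟨add_nonneg (hAz0 i) (hd0 i), ?_⟩
        have := hsplit i; have := hinv1 i; have := hAz2 i; have := hd2 i
        linarith
      have hsum2cc : ∀ i, Ay i + d i ∈ Icc (0:ℝ) 1 := by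
        intro i
        refine ⟨add_nonneg (hAy0 i) (hd0 i), ?_⟩
        have := hsplit i; have := hinv1 i; have := hAy2 i; have := hd2 i
        linarith
      have hdτ : Ω d ≤ Ω τ :=
        hΩmono d τ hdcc hτ (Pi.le_def.mpr fun i => le_trans (glip i) (hyz i))
      have h5 : Ω Ay ≤ Ω Az + Ω τ := by
        have hmono1 : Ω Ay ≤ Ω (Az + d) := by
          refine hΩmono Ay (Az + d) hAycc (fun i => by rw [Pi.add_apply]; exact hsum1cc i) ?_
          refine Pi.le_def.mpr fun i => ?_
          rw [Pi.add_apply]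
          have := le_abs_self (Ay i - Az i)
          rw [show d i = |Ay i - Az i| from rfl]
          linarith
        have hsub1 : Ω (Az + d) ≤ Ω Az + Ω d :=
          hΩsub Az d hAzcc hdcc (fun i => hsum1cc i)
        linarith
      have h6 : Ω Az ≤ Ω Ay + Ω τ := by
        have hmono2 : Ω Az ≤ Ω (Ay + d) := by
          refine hΩmono Az (Ay + d) hAzcc (fun i => by rw [Pi.add_apply]; exact hsum2cc i) ?_
          refine Pi.le_def.mpr fun i => ?_
          rw [Pi.add_apply]
          have := neg_abs_le (Ay i - Az i)
          rw [show d i = |Ay i - Az i| from rfl]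
          linarith
        have hsub2 : Ω (Ay + d) ≤ Ω Ay + Ω d :=
          hΩsub Ay d hAycc hdcc (fun i => hsum2cc i)
        linarith
      rw [abs_sub_le_iff]
      constructor <;> linarith
    · -- interpolation by the zero spline
      intro jj hjj y hy
      show (0:ℝ) = _
      symm
      apply Finset.sum_eq_zero
      intro l _
      apply mul_eq_zero_of_left
      show Ω (fun i => max 0 (min (((jj i:ℝ) + if l i then 1 else 0) / m i)
        (1/(m i:ℝ) - ((jj i:ℝ) + if l i then 1 else 0) / m i))) = 0
      have harg : (fun i => max 0 (min (((jj i:ℝ) + if l i then 1 else 0) / m i)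
          (1/(m i:ℝ) - ((jj i:ℝ) + if l i then 1 else 0) / m i))) = (0 : Fin n → ℝ) := by
        funext i
        show max 0 _ = 0
        apply max_eq_left
        have hK : ((jj i:ℝ) + if l i then 1 else 0) = 0
            ∨ 1 ≤ ((jj i:ℝ) + if l i then 1 else 0) := by
          split_ifs with hb
          · right
            have : (0:ℝ) ≤ (jj i:ℝ) := Nat.cast_nonneg _
            linarith
          · rcases Nat.eq_zero_or_pos (jj i) with h | h
            · left; simp [h]
            · right
              have : (1:ℝ) ≤ (jj i:ℝ) := by exact_mod_cast h
              linarith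
        rcases hK with h | h
        · rw [h, zero_div]
          exact min_le_left _ _
        · refine le_trans (min_le_right _ _) ?_
          have h6 : 1/(m i:ℝ) - ((jj i:ℝ) + if l i then 1 else 0)/m i
              = (1 - ((jj i:ℝ) + if l i then 1 else 0))/(m i:ℝ) := by ring
          rw [h6]
          apply div_nonpos_of_nonpos_of_nonneg
          · linarith
          · exact (hm0 i).le
      rw [harg, hΩ0]
    · -- the value at the center
      show Ω (fun i => 1/(2*(m i:ℝ)))
        = |Ω (fun i => max 0 (min ((1:ℝ)/(2*(m i:ℝ))) (1/(m i:ℝ) - 1/(2*(m i:ℝ))))) - 0|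
      rw [sub_zero]
      have harg : (fun i => max 0 (min ((1:ℝ)/(2*(m i:ℝ))) (1/(m i:ℝ) - 1/(2*(m i:ℝ)))))
          = fun i => 1/(2*(m i:ℝ)) := by
        funext i
        rw [hsplit i, min_self, max_eq_right (hhalf i).le]
      rw [harg]
      rw [abs_of_nonneg]
      have h0 : Ω 0 ≤ Ω (fun i => 1/(2*(m i:ℝ))) := by
        apply hΩmono
        · intro i
          exact ⟨le_rfl, zero_le_one⟩
        · exact fun i => ⟨(hhalf i).le, hhalf1 i⟩
        · exact Pi.le_def.mpr fun i => (hhalf i).le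
      rw [hΩ0] at h0
      exact h0
end

section
/- Let n ≥ 1, p ∈ [1,3], Ω : [0, n^{1/p}] → ℝ concave, nondecreasing, subadditive, continuous with Ω(0)=0. Let m = (m₁,...,mₙ) with each mᵢ ≥ 2 and let f : [0,1]^n → ℝ be continuous with ω_p(f;γ) ≤ Ω(γ) for all γ, where ω_p(f;γ) = sup{|f(x)−f(y)| : ‖x−y‖_p ≤ γ}. Let S be the multilinear interpolating spline on the uniform grid. Then for all x ∈ [0,1]^n, |f(x) − S(x)| ≤ Ω((1/2)(Σᵢ mᵢ^{−p})^{1/p}). -/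
open Set Real

private lemma bool_sum (f : Bool → ℝ) : ∑ b, f b = f true + f false := by
  simp [Fintype.univ_bool]

private lemma two_rpow_two : (2:ℝ) ^ (2:ℝ) = 4 := by
  rw [show (2:ℝ) ^ (2:ℝ) = 2 ^ ((2:ℕ):ℝ) by norm_num, Real.rpow_natCast]; norm_num

private lemma holder2_s9 (r x y z w : ℝ) (hr0 : 0 ≤ r) (hr1 : r ≤ 1)
    (hx : 0 ≤ x) (hy : 0 ≤ y) (hz : 0 ≤ z) (hw : 0 ≤ w) :
    x ^ r * y ^ (1 - r) + z ^ r * w ^ (1 - r) ≤ (x + z) ^ r * (y + w) ^ (1 - r) := by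
  rcases eq_or_lt_of_le hr0 with h0 | h0
  · simp [← h0]
  rcases eq_or_lt_of_le hr1 with h1 | h1
  · simp [h1]
  by_cases hX : x + z = 0
  · have hx0 : x = 0 := by linarith
    have hz0 : z = 0 := by linarith
    simp [hx0, hz0, Real.zero_rpow (ne_of_gt h0)]
  by_cases hY : y + w = 0
  · have hy0 : y = 0 := by linarith
    have hw0 : w = 0 := by linarith
    simp [hy0, hw0, Real.zero_rpow (by intro h; linarith : (1:ℝ) - r ≠ 0)]
  have hXpos : 0 < x + z := lt_of_le_of_ne (by linarith) (Ne.symm hX)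
  have hYpos : 0 < y + w := lt_of_le_of_ne (by linarith) (Ne.symm hY)
  have hXr : (0:ℝ) < (x+z) ^ r := Real.rpow_pos_of_pos hXpos r
  have hYr : (0:ℝ) < (y+w) ^ (1-r) := Real.rpow_pos_of_pos hYpos (1-r)
  have key : ∀ c d : ℝ, 0 ≤ c → 0 ≤ d →
      c ^ r * d ^ (1 - r) ≤
        (r * (c / (x+z)) + (1-r) * (d / (y+w))) * ((x+z) ^ r * (y+w) ^ (1-r)) := by
    intro c d hc hd
    have hg := Real.geom_mean_le_arith_mean2_weighted hr0 (by linarith : (0:ℝ) ≤ 1 - r)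
      (div_nonneg hc hXpos.le) (div_nonneg hd hYpos.le) (by ring)
    have e1 : (c / (x+z)) ^ r * ((x+z)) ^ r = c ^ r := by
      rw [Real.div_rpow hc hXpos.le, div_mul_cancel₀ _ hXr.ne']
    have e2 : (d / (y+w)) ^ (1-r) * ((y+w)) ^ (1-r) = d ^ (1-r) := by
      rw [Real.div_rpow hd hYpos.le, div_mul_cancel₀ _ hYr.ne']
    calc c ^ r * d ^ (1-r)
        = ((c / (x+z)) ^ r * (d / (y+w)) ^ (1-r)) * ((x+z) ^ r * (y+w) ^ (1-r)) := by
          rw [← e1, ← e2]; ring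
      _ ≤ (r * (c / (x+z)) + (1-r) * (d / (y+w))) * ((x+z) ^ r * (y+w) ^ (1-r)) := by
          apply mul_le_mul_of_nonneg_right hg (by positivity)
  calc x ^ r * y ^ (1-r) + z ^ r * w ^ (1-r)
      ≤ (r * (x / (x+z)) + (1-r) * (y / (y+w))) * ((x+z) ^ r * (y+w) ^ (1-r))
        + (r * (z / (x+z)) + (1-r) * (w / (y+w))) * ((x+z) ^ r * (y+w) ^ (1-r)) :=
        add_le_add (key x y hx hy) (key z w hz hw)
    _ = ((r * (x / (x+z)) + (1-r) * (y / (y+w))) + (r * (z / (x+z)) + (1-r) * (w / (y+w))))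
        * ((x+z) ^ r * (y+w) ^ (1-r)) := by ring
    _ = (x+z) ^ r * (y+w) ^ (1-r) := by
        have : (r * (x / (x+z)) + (1-r) * (y / (y+w))) + (r * (z / (x+z)) + (1-r) * (w / (y+w)))
            = 1 := by field_simp; ring
        rw [this, one_mul]

private lemma key_s {p a b : ℝ} (hp1 : 1 ≤ p) (hp3 : p ≤ 3) (ha : 0 ≤ a) (hb : 0 ≤ b)
    (hab : a + b = 1) : a * b ^ p + b * a ^ p ≤ (2:ℝ) ^ (-p) := by
  have hp0 : (0:ℝ) < p := by linarith
  have hm2 : (2:ℝ) ^ (-2:ℝ) = 1/4 := by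
    rw [Real.rpow_neg (by norm_num), two_rpow_two]; norm_num
  have hsplit : a * b ^ p + b * a ^ p = a * b * (a ^ (p-1) + b ^ (p-1)) := by
    have e1 : ∀ c : ℝ, 0 ≤ c → c ^ p = c * c ^ (p-1) := by
      intro c hc
      calc c ^ p = c ^ (1 + (p-1)) := by norm_num
        _ = c ^ (1:ℝ) * c ^ (p-1) := Real.rpow_add' hc (by norm_num; linarith)
        _ = c * c ^ (p-1) := by rw [Real.rpow_one]
    rw [e1 a ha, e1 b hb]; ring
  rw [hsplit]
  have hab4 : a * b ≤ 1/4 := by nlinarith [sq_nonneg (a-b)]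
  have habnn : (0:ℝ) ≤ a * b := mul_nonneg ha hb
  have hann : (0:ℝ) ≤ a ^ (p-1) := Real.rpow_nonneg ha _
  have hbnn : (0:ℝ) ≤ b ^ (p-1) := Real.rpow_nonneg hb _
  rcases le_total p 2 with h2 | h2
  · have hH : a ^ (p-1) + b ^ (p-1) ≤ (2:ℝ) ^ (2-p) := by
      have h := holder2_s9 (p-1) a 1 b 1 (by linarith) (by linarith) ha zero_le_one hb zero_le_one
      simp only [Real.one_rpow, mul_one] at h
      calc a ^ (p-1) + b ^ (p-1) ≤ (a+b) ^ (p-1) * ((1:ℝ)+1) ^ (1-(p-1)) := h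
        _ = (2:ℝ) ^ (2-p) := by
            rw [hab, Real.one_rpow, one_mul, show (1:ℝ)+1 = 2 by norm_num,
              show (1:ℝ)-(p-1) = 2-p by ring]
    have h2e : (2:ℝ) ^ (2-p) = 4 * 2 ^ (-p) := by
      rw [show (2:ℝ)-p = 2 + (-p) by ring, Real.rpow_add two_pos, two_rpow_two]
    rw [h2e] at hH
    have h2nn : (0:ℝ) ≤ 2 ^ (-p) := Real.rpow_nonneg (by norm_num) _
    calc a * b * (a ^ (p-1) + b ^ (p-1)) ≤ (1/4) * (4 * 2 ^ (-p)) :=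
        mul_le_mul hab4 hH (by linarith) (by norm_num)
      _ = 2 ^ (-p) := by ring
  · have ea : ∀ c : ℝ, 0 ≤ c → (c*c) ^ (p-2) * c ^ (1-(p-2)) = c ^ (p-1) := by
      intro c hc
      calc (c*c) ^ (p-2) * c ^ (1-(p-2))
          = c ^ (p-2) * (c ^ (p-2) * c ^ (1-(p-2))) := by rw [Real.mul_rpow hc hc]; ring
        _ = c ^ (p-2) * c ^ ((p-2) + (1-(p-2))) := by
            rw [Real.rpow_add' hc (by norm_num)]
        _ = c ^ (p-2) * c ^ (1:ℝ) := by congr 1; ring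
        _ = c ^ ((p-2) + 1) := by
            rw [Real.rpow_add' hc (by intro h; linarith)]
        _ = c ^ (p-1) := by congr 1; ring
    have hH : a ^ (p-1) + b ^ (p-1) ≤ (a*a + b*b) ^ (p-2) := by
      have h := holder2_s9 (p-2) (a*a) a (b*b) b (by linarith) (by linarith)
        (mul_nonneg ha ha) ha (mul_nonneg hb hb) hb
      rw [ea a ha, ea b hb, hab, Real.one_rpow, mul_one] at h
      exact h
    set v : ℝ := a*a + b*b with hv
    have hvhalf : 1/2 ≤ v := by nlinarith [sq_nonneg (a-b)]
    have hvnn : (0:ℝ) ≤ v := by nlinarith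
    have h2v : (2*v) ^ (p-2) ≤ 2*v := by
      calc (2*v) ^ (p-2) ≤ (2*v) ^ (1:ℝ) :=
          Real.rpow_le_rpow_of_exponent_le (by linarith) (by linarith)
        _ = 2*v := Real.rpow_one _
    have h2pos : (0:ℝ) < (2:ℝ) ^ (p-2) := Real.rpow_pos_of_pos two_pos _
    have hvb : v ^ (p-2) * 2 ^ (p-2) ≤ 2*v := by
      have e : v ^ (p-2) * 2 ^ (p-2) = (2*v) ^ (p-2) := by
        rw [Real.mul_rpow (by norm_num : (0:ℝ) ≤ 2) hvnn]; ring
      rw [e]; exact h2v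
    have hub : a * b * (2*v) ≤ 1/4 := by nlinarith [sq_nonneg (1 - 4*(a*b))]
    have h1 : a * b * (a ^ (p-1) + b ^ (p-1)) ≤ a * b * v ^ (p-2) :=
      mul_le_mul_of_nonneg_left hH habnn
    have h2eq : (2:ℝ) ^ (-p) * 2 ^ (p-2) = 1/4 := by
      rw [← Real.rpow_add two_pos, show -p + (p-2) = (-2:ℝ) by ring, hm2]
    have h3 : a * b * v ^ (p-2) * 2 ^ (p-2) ≤ 2 ^ (-p) * 2 ^ (p-2) := by
      rw [h2eq]
      calc a * b * v ^ (p-2) * 2 ^ (p-2) = a * b * (v ^ (p-2) * 2 ^ (p-2)) := by ring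
        _ ≤ a * b * (2*v) := mul_le_mul_of_nonneg_left hvb habnn
        _ ≤ 1/4 := hub
    have h4 : a * b * (a ^ (p-1) + b ^ (p-1)) * 2 ^ (p-2) ≤ 2 ^ (-p) * 2 ^ (p-2) :=
      le_trans (mul_le_mul_of_nonneg_right h1 h2pos.le) h3
    exact le_of_mul_le_mul_right h4 h2pos

theorem multilinear_spline_error_lp (n : ℕ) (hn : 1 ≤ n) (p : ℝ) (hp1 : 1 ≤ p) (hp3 : p ≤ 3)
    (Ω : ℝ → ℝ) (m : Fin n → ℕ) (hm : ∀ i, 2 ≤ m i)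
    (f S : (Fin n → ℝ) → ℝ)
    (hf : ContinuousOn f (univ.pi fun _ => Icc 0 1))
    -- Ω is a concave MC-type function on [0, n^(1/p)]
    (hΩconc : ConcaveOn ℝ (Icc 0 ((n : ℝ) ^ (1 / p))) Ω)
    (hΩ0 : Ω 0 = 0)
    (hΩmono : ∀ σ ∈ Icc (0:ℝ) ((n : ℝ) ^ (1 / p)), ∀ τ ∈ Icc (0:ℝ) ((n : ℝ) ^ (1 / p)),
      σ ≤ τ → Ω σ ≤ Ω τ)
    (hΩsub : ∀ σ ∈ Icc (0:ℝ) ((n : ℝ) ^ (1 / p)), ∀ τ ∈ Icc (0:ℝ) ((n : ℝ) ^ (1 / p)),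
      σ + τ ∈ Icc (0:ℝ) ((n : ℝ) ^ (1 / p)) → Ω (σ + τ) ≤ Ω σ + Ω τ)
    (hΩcont : ContinuousOn Ω (Icc 0 ((n : ℝ) ^ (1 / p))))
    -- the ℓ_p modulus of continuity of f is bounded by Ω
    (hmod : ∀ γ ∈ Icc (0:ℝ) ((n : ℝ) ^ (1 / p)),
      ∀ x y : Fin n → ℝ, (∀ i, x i ∈ Icc (0:ℝ) 1) → (∀ i, y i ∈ Icc (0:ℝ) 1) →
      (∑ i, |x i - y i| ^ p) ^ (1 / p) ≤ γ → |f x - f y| ≤ Ω γ)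
    -- S is the multilinear spline interpolating f at the grid points
    (hS : ∀ j : Fin n → ℕ, (∀ i, j i < m i) →
      ∀ x : Fin n → ℝ, (∀ i, x i ∈ Icc ((j i : ℝ) / m i) ((j i + 1 : ℝ) / m i)) →
      S x = ∑ l : Fin n → Bool,
        f (fun i => ((j i : ℝ) + (if l i then 1 else 0)) / m i) *
          ∏ i, hat (m i) (j i) (l i) (x i)) :
    ∀ x : Fin n → ℝ, (∀ i, x i ∈ Icc (0:ℝ) 1) →
      |f x - S x| ≤ Ω ((1 / 2) * (∑ i, ((m i : ℝ)) ^ (-p)) ^ (1 / p)) := by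
  intro x hx
  have hp0 : (0:ℝ) < p := by linarith
  have hmR : ∀ i, (0:ℝ) < m i := fun i => by
    have := hm i; exact_mod_cast (by omega : 0 < m i)
  -- choose the grid cell containing x
  obtain ⟨j, hjlt, hjx⟩ : ∃ j : Fin n → ℕ, (∀ i, j i < m i) ∧
      ∀ i, (j i : ℝ) / m i ≤ x i ∧ x i ≤ ((j i : ℝ) + 1) / m i := by
    refine ⟨fun i => min ⌊x i * m i⌋₊ (m i - 1), fun i => ?_, fun i => ⟨?_, ?_⟩⟩
    · exact lt_of_le_of_lt (min_le_right _ _) (Nat.sub_lt (by have := hm i; omega) one_pos)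
    · rw [div_le_iff₀ (hmR i)]
      calc ((min ⌊x i * m i⌋₊ (m i - 1) : ℕ) : ℝ) ≤ (⌊x i * m i⌋₊ : ℝ) := by
            exact_mod_cast min_le_left _ _
        _ ≤ x i * m i := Nat.floor_le (mul_nonneg (hx i).1 (hmR i).le)
    · rw [le_div_iff₀ (hmR i)]
      show x i * (m i : ℝ) ≤ ((min ⌊x i * (m i : ℝ)⌋₊ (m i - 1) : ℕ) : ℝ) + 1
      rcases le_or_gt (m i - 1) ⌊x i * m i⌋₊ with h | h
      · rw [min_eq_right h]
        have hcast : ((m i - 1 : ℕ) : ℝ) + 1 = m i := by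
          have h1 : (1:ℕ) ≤ m i := by have := hm i; omega
          push_cast [h1]; ring
        rw [hcast]
        calc x i * m i ≤ 1 * m i := mul_le_mul_of_nonneg_right (hx i).2 (hmR i).le
          _ = m i := one_mul _
      · rw [min_eq_left h.le]
        have := Nat.lt_floor_add_one (x i * m i)
        push_cast at this ⊢
        linarith
  -- basic abbreviations
  set c : Fin n → Bool → ℝ := fun i b => hat (m i) (j i) b (x i) with hceq
  set y : (Fin n → Bool) → Fin n → ℝ :=
    fun l i => ((j i : ℝ) + (if l i then 1 else 0)) / m i with hyeq
  set Δ : Fin n → Bool → ℝ :=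
    fun i b => |x i - ((j i : ℝ) + (if b then 1 else 0)) / m i| with hdeq
  have hcT : ∀ i, c i true = 1 - (m i : ℝ) * (((j i : ℝ) + 1) / m i - x i) := by
    intro i; simp [hceq, hat]
  have hcF : ∀ i, c i false = (m i : ℝ) * (((j i : ℝ) + 1) / m i - x i) := by
    intro i; simp [hceq, hat]
  have hdT : ∀ i, Δ i true = |x i - ((j i : ℝ) + 1) / m i| := by
    intro i; simp [hdeq]
  have hdF : ∀ i, Δ i false = |x i - (j i : ℝ) / m i| := by
    intro i; simp [hdeq]
  have hcsum : ∀ i, c i true + c i false = 1 := by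
    intro i; rw [hcT, hcF]; ring
  have hjmx : ∀ i, (j i : ℝ) ≤ x i * m i := fun i => by
    have := (hjx i).1; rw [div_le_iff₀ (hmR i)] at this; exact this
  have hxjm : ∀ i, x i * m i ≤ (j i : ℝ) + 1 := fun i => by
    have := (hjx i).2; rw [le_div_iff₀ (hmR i)] at this; exact this
  have hcnn : ∀ i b, 0 ≤ c i b := by
    intro i b
    have h1 := hjmx i
    have h2 := hxjm i
    have hm0 := hmR i
    have e : (m i : ℝ) * (((j i : ℝ) + 1) / m i - x i) = (j i : ℝ) + 1 - x i * m i := by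
      field_simp
    cases b
    · rw [hcF i, e]; linarith
    · rw [hcT i, e]; linarith
  have hynode : ∀ i (b : Bool), ((j i : ℝ) + (if b then 1 else 0)) / m i ∈ Icc (0:ℝ) 1 := by
    intro i b
    have hj1 : (j i : ℝ) + 1 ≤ m i := by exact_mod_cast hjlt i
    have hj0 : (0:ℝ) ≤ (j i : ℝ) := Nat.cast_nonneg _
    constructor
    · apply div_nonneg _ (hmR i).le
      cases b
      · simp only [Bool.false_eq_true, if_false, add_zero]; linarith
      · simp only [if_true]; linarith
    · rw [div_le_one (hmR i)]
      cases b
      · simp only [Bool.false_eq_true, if_false, add_zero]; linarith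
      · simp only [if_true]; linarith

  -- distances to the two endpoints of the cell, per coordinate
  have hdt : ∀ i, Δ i true = c i false / m i := by
    intro i
    have hm0 := hmR i
    have e1 : Δ i true = ((j i : ℝ) + 1) / m i - x i := by
      rw [hdT i, abs_sub_comm, abs_of_nonneg (by rw [sub_nonneg]; exact (hjx i).2)]
    rw [e1, hcF i, mul_div_cancel_left₀ _ hm0.ne']
  have hdf : ∀ i, Δ i false = c i true / m i := by
    intro i
    have hm0 := hmR i
    have e1 : Δ i false = x i - (j i : ℝ) / m i := by
      rw [hdF i, abs_of_nonneg (by rw [sub_nonneg]; exact (hjx i).1)]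
    rw [e1, hcT i]
    field_simp
    ring
  -- the per-coordinate key bound
  have hkey : ∀ i, c i true * Δ i true ^ p + c i false * Δ i false ^ p
      ≤ (2:ℝ) ^ (-p) * (m i : ℝ) ^ (-p) := by
    intro i
    have hm0 := hmR i
    have ha := hcnn i true
    have hb := hcnn i false
    have hks := key_s hp1 hp3 ha hb (hcsum i)
    have hmp : (0:ℝ) < (m i : ℝ) ^ p := Real.rpow_pos_of_pos hm0 p
    rw [hdt i, hdf i, Real.div_rpow hb hm0.le, Real.div_rpow ha hm0.le]
    have e3 : c i true * ((c i false) ^ p / (m i : ℝ) ^ p)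
        + c i false * ((c i true) ^ p / (m i : ℝ) ^ p)
        = (c i true * (c i false) ^ p + c i false * (c i true) ^ p) / (m i : ℝ) ^ p := by
      ring
    rw [e3, Real.rpow_neg hm0.le, ← div_eq_mul_inv]
    exact (div_le_div_iff_of_pos_right hmp).mpr hks
  -- multilinear weights
  have hWnn : ∀ l : Fin n → Bool, 0 ≤ ∏ i, c i (l i) :=
    fun l => Finset.prod_nonneg fun i _ => hcnn i (l i)
  have hWsum : (∑ l : Fin n → Bool, ∏ i, c i (l i)) = 1 := by
    rw [← Fintype.prod_sum fun i b => c i b]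
    refine Finset.prod_eq_one fun i _ => ?_
    rw [bool_sum (c i)]
    exact hcsum i
  -- exchange of summations
  have hswap : (∑ l : Fin n → Bool, (∏ i, c i (l i)) * (∑ i, Δ i (l i) ^ p))
      = ∑ i, (c i true * Δ i true ^ p + c i false * Δ i false ^ p) := by
    have step1 : ∀ l : Fin n → Bool, (∏ i, c i (l i)) * (∑ i, Δ i (l i) ^ p)
        = ∑ i, ∏ k, (c k (l k) * (if k = i then Δ k (l k) ^ p else 1)) := by
      intro l
      rw [Finset.mul_sum]
      refine Finset.sum_congr rfl fun i _ => ?_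
      rw [Finset.prod_mul_distrib]
      congr 1
      rw [Fintype.prod_ite_eq' i (fun k => Δ k (l k) ^ p)]
    rw [Finset.sum_congr rfl fun l _ => step1 l, Finset.sum_comm]
    refine Finset.sum_congr rfl fun i _ => ?_
    rw [← Fintype.prod_sum fun k b => c k b * (if k = i then Δ k b ^ p else 1)]
    have hterm : ∀ k, (∑ b, (c k b * (if k = i then Δ k b ^ p else 1)))
        = (if k = i then c k true * Δ k true ^ p + c k false * Δ k false ^ p else 1) := by
      intro k
      rw [bool_sum]
      by_cases hk : k = i
      · subst hk; simp
      · simp [hk, hcsum k]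
    rw [Finset.prod_congr rfl fun k _ => hterm k, Fintype.prod_ite_eq' i _]
  -- concavity of u ↦ Ω (u^(1/p)) on [0, n]
  have hinvp0 : (0:ℝ) ≤ 1/p := by positivity
  have hinvp1 : 1/p ≤ 1 := by rw [div_le_one hp0]; exact hp1
  have hrpowconc := Real.concaveOn_rpow hinvp0 hinvp1
  have hΨconc : ConcaveOn ℝ (Icc (0:ℝ) (n:ℝ)) (fun u => Ω (u ^ (1/p))) := by
    refine ⟨convex_Icc _ _, ?_⟩
    intro u hu v hv a b ha hb hab
    simp only [smul_eq_mul]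
    have hun : u ^ (1/p) ≤ (n:ℝ) ^ (1/p) := Real.rpow_le_rpow hu.1 hu.2 hinvp0
    have hvn : v ^ (1/p) ≤ (n:ℝ) ^ (1/p) := Real.rpow_le_rpow hv.1 hv.2 hinvp0
    have hcomb : a*u + b*v ∈ Icc (0:ℝ) (n:ℝ) := by
      constructor
      · exact add_nonneg (mul_nonneg ha hu.1) (mul_nonneg hb hv.1)
      · nlinarith [hu.2, hv.2]
    have hconcpt : a * u ^ (1/p) + b * v ^ (1/p) ≤ (a*u + b*v) ^ (1/p) := by
      have := hrpowconc.2 (mem_Ici.mpr hu.1) (mem_Ici.mpr hv.1) ha hb hab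
      simpa [smul_eq_mul] using this
    have hrc : (a*u + b*v) ^ (1/p) ∈ Icc (0:ℝ) ((n:ℝ) ^ (1/p)) :=
      ⟨Real.rpow_nonneg hcomb.1 _, Real.rpow_le_rpow hcomb.1 hcomb.2 hinvp0⟩
    have hmid : a * u ^ (1/p) + b * v ^ (1/p) ∈ Icc (0:ℝ) ((n:ℝ) ^ (1/p)) := by
      constructor
      · exact add_nonneg (mul_nonneg ha (Real.rpow_nonneg hu.1 _))
          (mul_nonneg hb (Real.rpow_nonneg hv.1 _))
      · exact le_trans hconcpt hrc.2
    have hΩ2 := hΩconc.2 (show u ^ (1/p) ∈ Icc (0:ℝ) ((n:ℝ) ^ (1/p)) from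
        ⟨Real.rpow_nonneg hu.1 _, hun⟩)
      (show v ^ (1/p) ∈ Icc (0:ℝ) ((n:ℝ) ^ (1/p)) from ⟨Real.rpow_nonneg hv.1 _, hvn⟩) ha hb hab
    simp only [smul_eq_mul] at hΩ2
    exact le_trans hΩ2 (hΩmono _ hmid _ hrc hconcpt)
  -- membership facts
  have hdnn : ∀ i b, 0 ≤ Δ i b := fun i b => by simp only [hdeq]; exact abs_nonneg _
  have hdle1 : ∀ i b, Δ i b ≤ 1 := by
    intro i b
    have hn1 := hynode i b
    simp only [hdeq]
    exact abs_sub_le_iff.mpr ⟨by linarith [(hx i).2, hn1.1], by linarith [(hx i).1, hn1.2]⟩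
  have hA_nn : ∀ l : Fin n → Bool, 0 ≤ ∑ i, Δ i (l i) ^ p :=
    fun l => Finset.sum_nonneg fun i _ => Real.rpow_nonneg (hdnn i (l i)) p
  have hA_mem : ∀ l : Fin n → Bool, (∑ i, Δ i (l i) ^ p) ∈ Icc (0:ℝ) (n:ℝ) := by
    intro l
    refine ⟨hA_nn l, ?_⟩
    calc (∑ i, Δ i (l i) ^ p) ≤ ∑ _i : Fin n, (1:ℝ) :=
        Finset.sum_le_sum fun i _ => Real.rpow_le_one (hdnn i (l i)) (hdle1 i (l i)) hp0.le
      _ = n := by simp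
  -- Jensen
  have hJ : (∑ l : Fin n → Bool, (∏ i, c i (l i)) * Ω ((∑ i, Δ i (l i) ^ p) ^ (1/p)))
      ≤ Ω ((∑ l : Fin n → Bool, (∏ i, c i (l i)) * (∑ i, Δ i (l i) ^ p)) ^ (1/p)) := by
    have := hΨconc.le_map_sum (t := Finset.univ) (w := fun l : Fin n → Bool => ∏ i, c i (l i))
      (p := fun l : Fin n → Bool => ∑ i, Δ i (l i) ^ p)
      (fun l _ => hWnn l) hWsum (fun l _ => hA_mem l)
    simpa [smul_eq_mul] using this
  -- modulus bound for each node
  have hfy : ∀ l : Fin n → Bool, |f x - f (y l)| ≤ Ω ((∑ i, Δ i (l i) ^ p) ^ (1/p)) := by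
    intro l
    have hAn := hA_mem l
    refine hmod _ ⟨Real.rpow_nonneg hAn.1 _, Real.rpow_le_rpow hAn.1 hAn.2 hinvp0⟩ x (y l) hx
      (fun i => by simpa only [hyeq] using hynode i (l i)) ?_
    refine le_of_eq ?_
    congr 1
  -- the spline value at x
  have hSx : S x = ∑ l : Fin n → Bool, f (y l) * ∏ i, c i (l i) := by
    simp only [hyeq, hceq]
    exact hS j hjlt x fun i => ⟨(hjx i).1, (hjx i).2⟩
  have hdiff : f x - S x = ∑ l : Fin n → Bool, (f x - f (y l)) * ∏ i, c i (l i) := by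
    rw [hSx]
    rw [show (∑ l : Fin n → Bool, (f x - f (y l)) * ∏ i, c i (l i))
        = (∑ l : Fin n → Bool, f x * ∏ i, c i (l i))
          - ∑ l : Fin n → Bool, f (y l) * ∏ i, c i (l i) by
      rw [← Finset.sum_sub_distrib]
      exact Finset.sum_congr rfl fun l _ => by ring]
    rw [← Finset.mul_sum, hWsum, mul_one]
  -- total bound
  have h2invnn : (0:ℝ) ≤ (2:ℝ) ^ (-p) := Real.rpow_nonneg (by norm_num) _
  have hmnn : ∀ i, (0:ℝ) ≤ (m i : ℝ) ^ (-p) := fun i => Real.rpow_nonneg (hmR i).le _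
  have hmsumnn : (0:ℝ) ≤ ∑ i, (m i : ℝ) ^ (-p) := Finset.sum_nonneg fun i _ => hmnn i
  have hBle : (∑ l : Fin n → Bool, (∏ i, c i (l i)) * (∑ i, Δ i (l i) ^ p))
      ≤ (2:ℝ) ^ (-p) * ∑ i, (m i : ℝ) ^ (-p) := by
    rw [hswap, Finset.mul_sum]
    exact Finset.sum_le_sum fun i _ => hkey i
  have hSnn : 0 ≤ ∑ l : Fin n → Bool, (∏ i, c i (l i)) * (∑ i, Δ i (l i) ^ p) :=
    Finset.sum_nonneg fun l _ => mul_nonneg (hWnn l) (hA_nn l)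
  have hBn : ((2:ℝ) ^ (-p) * ∑ i, (m i : ℝ) ^ (-p)) ≤ (n:ℝ) := by
    calc ((2:ℝ) ^ (-p) * ∑ i, (m i : ℝ) ^ (-p)) ≤ 1 * ∑ _i : Fin n, (1:ℝ) := by
          apply mul_le_mul (Real.rpow_le_one_of_one_le_of_nonpos (by norm_num) (by linarith))
            (Finset.sum_le_sum fun i _ => Real.rpow_le_one_of_one_le_of_nonpos
              (by exact_mod_cast Nat.one_le_of_lt (hm i)) (by linarith))
            hmsumnn zero_le_one
      _ = n := by simp
  have hBnn : (0:ℝ) ≤ (2:ℝ) ^ (-p) * ∑ i, (m i : ℝ) ^ (-p) := mul_nonneg h2invnn hmsumnn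
  have hmono_step :
      Ω ((∑ l : Fin n → Bool, (∏ i, c i (l i)) * (∑ i, Δ i (l i) ^ p)) ^ (1/p))
      ≤ Ω (((2:ℝ) ^ (-p) * ∑ i, (m i : ℝ) ^ (-p)) ^ (1/p)) := by
    refine hΩmono _ ⟨Real.rpow_nonneg hSnn _, Real.rpow_le_rpow hSnn (le_trans hBle hBn) hinvp0⟩
      _ ⟨Real.rpow_nonneg hBnn _, Real.rpow_le_rpow hBnn hBn hinvp0⟩
      (Real.rpow_le_rpow hSnn hBle hinvp0)
  have hfinal_eq : ((2:ℝ) ^ (-p) * ∑ i, (m i : ℝ) ^ (-p)) ^ (1/p)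
      = (1/2) * (∑ i, (m i : ℝ) ^ (-p)) ^ (1/p) := by
    rw [Real.mul_rpow h2invnn hmsumnn]
    congr 1
    rw [← Real.rpow_mul (by norm_num : (0:ℝ) ≤ 2),
      show (-p) * (1/p) = (-1:ℝ) by field_simp, Real.rpow_neg_one]
    norm_num
  calc |f x - S x| = |(∑ l : Fin n → Bool, (f x - f (y l)) * ∏ i, c i (l i))| := by rw [hdiff]
    _ ≤ ∑ l : Fin n → Bool, |(f x - f (y l)) * ∏ i, c i (l i)| :=
        Finset.abs_sum_le_sum_abs _ _
    _ = ∑ l : Fin n → Bool, (∏ i, c i (l i)) * |f x - f (y l)| := by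
        refine Finset.sum_congr rfl fun l _ => ?_
        rw [abs_mul, abs_of_nonneg (hWnn l), mul_comm]
    _ ≤ ∑ l : Fin n → Bool, (∏ i, c i (l i)) * Ω ((∑ i, Δ i (l i) ^ p) ^ (1/p)) :=
        Finset.sum_le_sum fun l _ => mul_le_mul_of_nonneg_left (hfy l) (hWnn l)
    _ ≤ Ω ((∑ l : Fin n → Bool, (∏ i, c i (l i)) * (∑ i, Δ i (l i) ^ p)) ^ (1/p)) := hJ
    _ ≤ Ω (((2:ℝ) ^ (-p) * ∑ i, (m i : ℝ) ^ (-p)) ^ (1/p)) := hmono_step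
    _ = Ω ((1/2) * (∑ i, (m i : ℝ) ^ (-p)) ^ (1/p)) := by rw [hfinal_eq]
end

section
/- Under the hypotheses above (p ∈ [1,3], Ω univariate concave MC-type, mᵢ ≥ 2), the supremum over the class C_{D,p}(Ω) = {f continuous on [0,1]^n : ω_p(f;γ) ≤ Ω(γ)} of ‖f − S_m(f)‖_∞ equals exactly Ω((1/2)(Σᵢ₌₁ⁿ mᵢ^{−p})^{1/p}). -/
open Set Real

/-- Two-term Hölder inequality. -/
lemma holder2_s10 {θ X1 Y1 X2 Y2 : ℝ} (hθ0 : 0 < θ) (hθ1 : θ < 1)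
    (hX1 : 0 ≤ X1) (hY1 : 0 ≤ Y1) (hX2 : 0 ≤ X2) (hY2 : 0 ≤ Y2) :
    X1 ^ θ * Y1 ^ (1 - θ) + X2 ^ θ * Y2 ^ (1 - θ) ≤ (X1 + X2) ^ θ * (Y1 + Y2) ^ (1 - θ) := by
  rcases eq_or_lt_of_le (add_nonneg hX1 hX2) with hS | hS
  · have h1 : X1 = 0 := by linarith [hX1, hX2]
    have h2 : X2 = 0 := by linarith [hX1, hX2]
    simp [h1, h2, Real.zero_rpow (ne_of_gt hθ0)]
  rcases eq_or_lt_of_le (add_nonneg hY1 hY2) with hT | hT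
  · have h1 : Y1 = 0 := by linarith [hY1, hY2]
    have h2 : Y2 = 0 := by linarith [hY1, hY2]
    simp [h1, h2, Real.zero_rpow (by linarith : (1:ℝ) - θ ≠ 0)]
  set S := X1 + X2 with hSdef
  set T := Y1 + Y2 with hTdef
  have key : ∀ X Y : ℝ, 0 ≤ X → 0 ≤ Y →
      X ^ θ * Y ^ (1 - θ) ≤ (θ * (X / S) + (1 - θ) * (Y / T)) * (S ^ θ * T ^ (1 - θ)) := by
    intro X Y hX hY
    have := Real.geom_mean_le_arith_mean2_weighted (w₁ := θ) (w₂ := 1 - θ)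
      (p₁ := X / S) (p₂ := Y / T) (le_of_lt hθ0) (by linarith)
      (div_nonneg hX hS.le) (div_nonneg hY hT.le) (by ring)
    have hXe : X ^ θ = (X / S) ^ θ * S ^ θ := by
      rw [← Real.mul_rpow (div_nonneg hX hS.le) hS.le, div_mul_cancel₀]
      exact ne_of_gt hS
    have hYe : Y ^ (1 - θ) = (Y / T) ^ (1 - θ) * T ^ (1 - θ) := by
      rw [← Real.mul_rpow (div_nonneg hY hT.le) hT.le, div_mul_cancel₀]
      exact ne_of_gt hT
    calc X ^ θ * Y ^ (1 - θ) = ((X / S) ^ θ * (Y / T) ^ (1 - θ)) * (S ^ θ * T ^ (1 - θ)) := by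
          rw [hXe, hYe]; ring
      _ ≤ (θ * (X / S) + (1 - θ) * (Y / T)) * (S ^ θ * T ^ (1 - θ)) := by
          apply mul_le_mul_of_nonneg_right this
          positivity
  have h1 := key X1 Y1 hX1 hY1
  have h2 := key X2 Y2 hX2 hY2
  have hsum : (θ * (X1 / S) + (1 - θ) * (Y1 / T)) + (θ * (X2 / S) + (1 - θ) * (Y2 / T)) = 1 := by
    field_simp
    ring
  calc X1 ^ θ * Y1 ^ (1 - θ) + X2 ^ θ * Y2 ^ (1 - θ)
      ≤ ((θ * (X1 / S) + (1 - θ) * (Y1 / T)) + (θ * (X2 / S) + (1 - θ) * (Y2 / T)))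
        * (S ^ θ * T ^ (1 - θ)) := by rw [add_mul]; exact add_le_add h1 h2
    _ = S ^ θ * T ^ (1 - θ) := by rw [hsum, one_mul]

/-- Interpolation step: if the core inequality holds at exponents `q` and `r`,
it holds at any convex combination. -/
lemma core_interp {a b q r θ : ℝ} (ha : 0 < a) (hb : 0 < b) (hθ0 : 0 < θ) (hθ1 : θ < 1)
    (hq : b * a ^ q + a * b ^ q ≤ (a + b) * ((a + b) / 2) ^ q)
    (hr : b * a ^ r + a * b ^ r ≤ (a + b) * ((a + b) / 2) ^ r) :
    b * a ^ (θ * q + (1 - θ) * r) + a * b ^ (θ * q + (1 - θ) * r)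
      ≤ (a + b) * ((a + b) / 2) ^ (θ * q + (1 - θ) * r) := by
  have hs : (0:ℝ) < a + b := by linarith
  have hs2 : (0:ℝ) < (a + b) / 2 := by linarith
  have expand : ∀ c d : ℝ, 0 < c → 0 < d →
      d * c ^ (θ * q + (1 - θ) * r) = (d * c ^ q) ^ θ * (d * c ^ r) ^ (1 - θ) := by
    intro c d hc hd
    rw [Real.mul_rpow hd.le (Real.rpow_nonneg hc.le _),
        Real.mul_rpow hd.le (Real.rpow_nonneg hc.le _),
        ← Real.rpow_mul hc.le, ← Real.rpow_mul hc.le,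
        show d ^ θ * c ^ (q * θ) * (d ^ (1 - θ) * c ^ (r * (1 - θ)))
            = d ^ θ * d ^ (1 - θ) * (c ^ (q * θ) * c ^ (r * (1 - θ))) from by ring,
        ← Real.rpow_add hd, ← Real.rpow_add hc,
        show θ + (1 - θ) = 1 from by ring, Real.rpow_one,
        show q * θ + r * (1 - θ) = θ * q + (1 - θ) * r from by ring]
  calc b * a ^ (θ * q + (1 - θ) * r) + a * b ^ (θ * q + (1 - θ) * r)
      = (b * a ^ q) ^ θ * (b * a ^ r) ^ (1 - θ) + (a * b ^ q) ^ θ * (a * b ^ r) ^ (1 - θ) := by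
        rw [expand a b ha hb, expand b a hb ha]
    _ ≤ (b * a ^ q + a * b ^ q) ^ θ * (b * a ^ r + a * b ^ r) ^ (1 - θ) :=
        holder2_s10 hθ0 hθ1 (by positivity) (by positivity) (by positivity) (by positivity)
    _ ≤ ((a + b) * ((a + b) / 2) ^ q) ^ θ * ((a + b) * ((a + b) / 2) ^ r) ^ (1 - θ) := by
        apply mul_le_mul
        · exact Real.rpow_le_rpow (by positivity) hq hθ0.le
        · exact Real.rpow_le_rpow (by positivity) hr (by linarith)
        · positivity
        · positivity
    _ = (a + b) * ((a + b) / 2) ^ (θ * q + (1 - θ) * r) := (expand _ _ hs2 hs).symm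

lemma core_base1 {a b : ℝ} (ha : 0 ≤ a) (hb : 0 ≤ b) :
    b * a ^ (1:ℝ) + a * b ^ (1:ℝ) ≤ (a + b) * ((a + b) / 2) ^ (1:ℝ) := by
  rw [Real.rpow_one, Real.rpow_one, Real.rpow_one]
  nlinarith [sq_nonneg (a - b)]

lemma core_base2 {a b : ℝ} (ha : 0 ≤ a) (hb : 0 ≤ b) :
    b * a ^ (2:ℝ) + a * b ^ (2:ℝ) ≤ (a + b) * ((a + b) / 2) ^ (2:ℝ) := by
  rw [show (2:ℝ) = ((2:ℕ):ℝ) from by norm_num, Real.rpow_natCast, Real.rpow_natCast,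
    Real.rpow_natCast]
  nlinarith [mul_nonneg (add_nonneg ha hb) (sq_nonneg (a - b))]

lemma core_base3 {a b : ℝ} (ha : 0 ≤ a) (hb : 0 ≤ b) :
    b * a ^ (3:ℝ) + a * b ^ (3:ℝ) ≤ (a + b) * ((a + b) / 2) ^ (3:ℝ) := by
  rw [show (3:ℝ) = ((3:ℕ):ℝ) from by norm_num, Real.rpow_natCast, Real.rpow_natCast,
    Real.rpow_natCast]
  nlinarith [sq_nonneg ((a - b) ^ 2), sq_nonneg (a - b), mul_nonneg ha hb]

/-- The scalar core inequality for `p ∈ [1,3]`. -/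
lemma core_ineq {p a b : ℝ} (hp1 : 1 ≤ p) (hp3 : p ≤ 3) (ha : 0 ≤ a) (hb : 0 ≤ b) :
    b * a ^ p + a * b ^ p ≤ (a + b) * ((a + b) / 2) ^ p := by
  have hp0 : p ≠ 0 := by linarith
  rcases eq_or_lt_of_le ha with rfl | ha'
  · rw [Real.zero_rpow hp0]
    have : (0:ℝ) ≤ (0 + b) * ((0 + b) / 2) ^ p := by positivity
    simpa using this
  rcases eq_or_lt_of_le hb with rfl | hb'
  · rw [Real.zero_rpow hp0]
    have : (0:ℝ) ≤ (a + 0) * ((a + 0) / 2) ^ p := by positivity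
    simpa using this
  rcases le_or_gt p 2 with hp2 | hp2
  · rcases eq_or_lt_of_le hp1 with h1 | h1
    · rw [← h1]; exact core_base1 ha hb
    rcases eq_or_lt_of_le hp2 with h2 | h2
    · rw [h2]; exact core_base2 ha hb
    have := core_interp (q := 1) (r := 2) (θ := 2 - p) ha' hb'
      (by linarith) (by linarith) (core_base1 ha hb) (core_base2 ha hb)
    rwa [show (2 - p) * 1 + (1 - (2 - p)) * 2 = p from by ring] at this
  · rcases eq_or_lt_of_le hp3 with h3 | h3
    · rw [h3]; exact core_base3 ha hb
    have := core_interp (q := 2) (r := 3) (θ := 3 - p) ha' hb'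
      (by linarith) (by linarith) (core_base2 ha hb) (core_base3 ha hb)
    rwa [show (3 - p) * 2 + (1 - (3 - p)) * 3 = p from by ring] at this

lemma coord_bound {p h t : ℝ} (hp1 : 1 ≤ p) (hp3 : p ≤ 3) (hh : 0 < h)
    (ht0 : 0 ≤ t) (hth : t ≤ h) :
    ((h - t) / h) * t ^ p + (t / h) * (h - t) ^ p ≤ (h / 2) ^ p := by
  have key := core_ineq hp1 hp3 ht0 (by linarith : (0:ℝ) ≤ h - t)
  rw [show t + (h - t) = h from by ring] at key
  have : ((h - t) / h) * t ^ p + (t / h) * (h - t) ^ p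
      = ((h - t) * t ^ p + t * (h - t) ^ p) / h := by ring
  rw [this, div_le_iff₀ hh]
  linarith [key]

lemma sum_prod_bool {n : ℕ} (w : Fin n → Bool → ℝ) :
    ∑ l : Fin n → Bool, ∏ i, w i (l i) = ∏ i, (w i false + w i true) := by
  rw [← Fintype.prod_sum]
  exact Finset.prod_congr rfl fun i _ => by rw [Fintype.sum_bool]; ring

lemma sum_prod_single {n : ℕ} (w : Fin n → Bool → ℝ) (hw : ∀ k, w k false + w k true = 1)
    (i : Fin n) (g : Bool → ℝ) :
    ∑ l : Fin n → Bool, (∏ k, w k (l k)) * g (l i)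
      = w i false * g false + w i true * g true := by
  have h1 : ∀ l : Fin n → Bool, (∏ k, w k (l k)) * g (l i)
      = ∏ k, (w k (l k) * (if k = i then g (l k) else 1)) := by
    intro l
    rw [Finset.prod_mul_distrib, Finset.prod_ite_eq' Finset.univ i (fun k => g (l k))]
    simp
  calc ∑ l : Fin n → Bool, (∏ k, w k (l k)) * g (l i)
      = ∑ l : Fin n → Bool, ∏ k, (w k (l k) * (if k = i then g (l k) else 1)) :=
        Finset.sum_congr rfl fun l _ => h1 l
    _ = ∏ k, (w k false * (if k = i then g false else 1)
          + w k true * (if k = i then g true else 1)) :=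
        sum_prod_bool (fun k b => w k b * (if k = i then g b else 1))
    _ = ∏ k, (if k = i then w i false * g false + w i true * g true else 1) := by
        refine Finset.prod_congr rfl fun k _ => ?_
        by_cases hk : k = i
        · subst hk; simp
        · simp [hk, hw k]
    _ = w i false * g false + w i true * g true := by
        rw [Finset.prod_ite_eq' Finset.univ i (fun _ => w i false * g false + w i true * g true)]
        simp

set_option maxHeartbeats 1000000 in
lemma upper_bound (n : ℕ) (p : ℝ) (hp1 : 1 ≤ p) (hp3 : p ≤ 3)
    (Ω : ℝ → ℝ) (m : Fin n → ℕ) (hm : ∀ i, 2 ≤ m i)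
    (hΩconc : ConcaveOn ℝ (Icc 0 ((n : ℝ) ^ (1 / p))) Ω)
    (hΩmono : ∀ σ ∈ Icc (0:ℝ) ((n : ℝ) ^ (1 / p)), ∀ τ ∈ Icc (0:ℝ) ((n : ℝ) ^ (1 / p)),
      σ ≤ τ → Ω σ ≤ Ω τ)
    (f S : (Fin n → ℝ) → ℝ) (x : Fin n → ℝ) (hx : ∀ i, x i ∈ Icc (0:ℝ) 1)
    (hclass : ∀ γ ∈ Icc (0:ℝ) ((n : ℝ) ^ (1 / p)),
        ∀ y z : Fin n → ℝ, (∀ i, y i ∈ Icc (0:ℝ) 1) → (∀ i, z i ∈ Icc (0:ℝ) 1) →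
        (∑ i, |y i - z i| ^ p) ^ (1 / p) ≤ γ → |f y - f z| ≤ Ω γ)
    (hS : ∀ j : Fin n → ℕ, (∀ i, j i < m i) →
        ∀ y : Fin n → ℝ, (∀ i, y i ∈ Icc ((j i : ℝ) / m i) ((j i + 1 : ℝ) / m i)) →
        S y = ∑ l : Fin n → Bool,
          f (fun i => ((j i : ℝ) + (if l i then 1 else 0)) / m i) *
            ∏ i, hat (m i) (j i) (l i) (y i)) :
    |f x - S x| ≤ Ω ((1 / 2) * (∑ i, ((m i : ℝ)) ^ (-p)) ^ (1 / p)) := by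
  have hp0 : (0:ℝ) < p := by linarith
  set N := (n : ℝ) ^ (1 / p) with hNdef
  have hN0 : 0 ≤ N := by positivity
  set B := (1 / 2 : ℝ) * (∑ i, ((m i : ℝ)) ^ (-p)) ^ (1 / p) with hBdef
  have hmR : ∀ i, (0:ℝ) < m i := fun i => by
    have := hm i; exact_mod_cast Nat.lt_of_lt_of_le (by norm_num) this
  -- the block containing x
  set j : Fin n → ℕ := fun i => min ⌊x i * m i⌋₊ (m i - 1) with hjdef
  have hj : ∀ i, j i < m i := fun i =>
    lt_of_le_of_lt (min_le_right _ _) (Nat.sub_lt (by have := hm i; omega) one_pos)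
  have hxblock : ∀ i, x i ∈ Icc ((j i : ℝ) / m i) ((j i + 1 : ℝ) / m i) := by
    intro i
    have hm0 := hmR i
    have hx0 := (hx i).1
    have hx1 := (hx i).2
    constructor
    · rw [div_le_iff₀ hm0]
      calc ((j i : ℝ)) ≤ (⌊x i * m i⌋₊ : ℝ) := by exact_mod_cast min_le_left _ _
        _ ≤ x i * m i := Nat.floor_le (by positivity)
    · rw [le_div_iff₀ hm0]
      by_cases hfl : ⌊x i * m i⌋₊ ≤ m i - 1
      · have hje : j i = ⌊x i * m i⌋₊ := min_eq_left hfl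
        have h2 := Nat.lt_floor_add_one (x i * m i)
        rw [hje]
        push_cast
        linarith
      · have hje : j i = m i - 1 := min_eq_right (by omega)
        have hcast : ((j i : ℝ) + 1) = m i := by
          rw [hje, Nat.cast_sub (by have := hm i; omega)]
          push_cast; ring
        rw [hcast]
        nlinarith
  -- the weights
  set w : Fin n → Bool → ℝ := fun i b => hat (m i) (j i) b (x i) with hwdef
  have hwf : ∀ i, w i false = (m i : ℝ) * (((j i : ℝ) + 1) / m i - x i) := by
    intro i; simp [hwdef, hat]
  have hwt : ∀ i, w i true = 1 - (m i : ℝ) * (((j i : ℝ) + 1) / m i - x i) := by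
    intro i; simp [hwdef, hat]
  have hw0 : ∀ i b, 0 ≤ w i b := by
    intro i b
    have h1 := (hxblock i).1
    have h2 := (hxblock i).2
    have hm0 := hmR i
    have hd1 : (j i : ℝ) / m i = (((j i : ℝ) + 1) / m i) - 1 / m i := by field_simp; ring
    cases b
    · rw [hwf i]
      have : x i ≤ ((j i : ℝ) + 1) / m i := h2
      nlinarith
    · rw [hwt i]
      have : (((j i : ℝ) + 1) / m i) - 1 / m i ≤ x i := by rw [← hd1]; exact h1
      have hle : ((j i : ℝ) + 1) / m i - x i ≤ 1 / m i := by linarith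
      have := mul_le_mul_of_nonneg_left hle hm0.le
      rw [mul_one_div, div_self hm0.ne'] at this
      linarith
  have hwsum : ∀ i, w i false + w i true = 1 := by
    intro i; rw [hwf i, hwt i]; ring
  -- the vertices
  set v : (Fin n → Bool) → Fin n → ℝ :=
    fun l i => ((j i : ℝ) + (if l i then 1 else 0)) / m i with hvdef
  have hv01 : ∀ l i, v l i ∈ Icc (0:ℝ) 1 := by
    intro l i
    have hm0 := hmR i
    have hjm : (j i : ℝ) + 1 ≤ m i := by exact_mod_cast hj i
    constructor
    · apply div_nonneg _ hm0.le
      have : (0:ℝ) ≤ (j i : ℝ) := Nat.cast_nonneg _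
      split <;> linarith
    · rw [div_le_one hm0]
      have hjn : (0:ℝ) ≤ (j i : ℝ) := Nat.cast_nonneg _
      split <;> linarith
  set lam : (Fin n → Bool) → ℝ := fun l => ∏ i, w i (l i) with hlamdef
  have hlam0 : ∀ l, 0 ≤ lam l := fun l => Finset.prod_nonneg fun i _ => hw0 i (l i)
  have hlamsum : ∑ l : Fin n → Bool, lam l = 1 := by
    rw [hlamdef]
    simp only
    rw [sum_prod_bool w]
    simp [hwsum]
  -- the interpolation formula at x
  have hSx : S x = ∑ l : Fin n → Bool, f (v l) * lam l := hS j hj x hxblock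
  -- distances to vertices
  set u : (Fin n → Bool) → ℝ := fun l => ∑ i, |x i - v l i| ^ p with hudef
  have hu0 : ∀ l, 0 ≤ u l := fun l =>
    Finset.sum_nonneg fun i _ => Real.rpow_nonneg (abs_nonneg _) _
  set d : (Fin n → Bool) → ℝ := fun l => (u l) ^ (1 / p) with hddef
  have hd0 : ∀ l, 0 ≤ d l := fun l => Real.rpow_nonneg (hu0 l) _
  have hdN : ∀ l, d l ≤ N := by
    intro l
    have hsum : u l ≤ n := by
      rw [hudef]
      simp only
      calc ∑ i, |x i - v l i| ^ p ≤ ∑ _i : Fin n, (1:ℝ) := by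
            apply Finset.sum_le_sum
            intro i _
            apply Real.rpow_le_one (abs_nonneg _) _ hp0.le
            rw [abs_le]
            constructor <;> nlinarith [(hx i).1, (hx i).2, (hv01 l i).1, (hv01 l i).2]
        _ = n := by simp
    calc d l ≤ (n:ℝ) ^ (1 / p) := Real.rpow_le_rpow (hu0 l) hsum (by positivity)
      _ = N := rfl
  have hdmem : ∀ l, d l ∈ Icc 0 N := fun l => ⟨hd0 l, hdN l⟩
  -- error representation
  have hrep : f x - S x = ∑ l : Fin n → Bool, lam l * (f x - f (v l)) := by
    rw [hSx]
    have e : ∑ l : Fin n → Bool, lam l * (f x - f (v l))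
        = (∑ l : Fin n → Bool, lam l) * f x - ∑ l : Fin n → Bool, f (v l) * lam l := by
      rw [Finset.sum_mul, ← Finset.sum_sub_distrib]
      exact Finset.sum_congr rfl fun l _ => by ring
    rw [e, hlamsum, one_mul]
  have habs : |f x - S x| ≤ ∑ l : Fin n → Bool, lam l * Ω (d l) := by
    rw [hrep]
    calc |∑ l : Fin n → Bool, lam l * (f x - f (v l))|
        ≤ ∑ l : Fin n → Bool, |lam l * (f x - f (v l))| := Finset.abs_sum_le_sum_abs _ _
      _ ≤ ∑ l : Fin n → Bool, lam l * Ω (d l) := by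
          apply Finset.sum_le_sum
          intro l _
          rw [abs_mul, abs_of_nonneg (hlam0 l)]
          exact mul_le_mul_of_nonneg_left
            (hclass (d l) (hdmem l) x (v l) hx (hv01 l) le_rfl) (hlam0 l)
  -- Jensen for Ω
  have hjensen : ∑ l : Fin n → Bool, lam l * Ω (d l) ≤ Ω (∑ l : Fin n → Bool, lam l * d l) := by
    have := hΩconc.le_map_sum (t := Finset.univ) (w := lam) (p := d)
      (fun l _ => hlam0 l) hlamsum (fun l _ => hdmem l)
    simpa [smul_eq_mul] using this
  -- Jensen for the p-th root
  have hconc : ConcaveOn ℝ (Ici 0) (fun t : ℝ => t ^ (1 / p)) :=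
    Real.concaveOn_rpow (by positivity) (by rw [div_le_one hp0]; exact hp1)
  have hjensen2 : ∑ l : Fin n → Bool, lam l * d l
      ≤ (∑ l : Fin n → Bool, lam l * u l) ^ (1 / p) := by
    have := hconc.le_map_sum (t := Finset.univ) (w := lam) (p := u)
      (fun l _ => hlam0 l) hlamsum (fun l _ => Set.mem_Ici.mpr (hu0 l))
    simpa only [smul_eq_mul] using this
  -- factorize the expectation
  have hfact : ∑ l : Fin n → Bool, lam l * u l
      = ∑ i, (w i false * |x i - ((j i : ℝ) + (if (false : Bool) then 1 else 0)) / m i| ^ p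
            + w i true * |x i - ((j i : ℝ) + (if (true : Bool) then 1 else 0)) / m i| ^ p) := by
    calc ∑ l : Fin n → Bool, lam l * u l
        = ∑ l : Fin n → Bool, ∑ i, lam l * |x i - v l i| ^ p := by
          refine Finset.sum_congr rfl fun l _ => ?_
          rw [hudef]
          exact Finset.mul_sum _ _ _
      _ = ∑ i, ∑ l : Fin n → Bool, lam l * |x i - v l i| ^ p := Finset.sum_comm
      _ = _ := by
          refine Finset.sum_congr rfl fun i _ => ?_
          exact sum_prod_single w hwsum i
            (fun b => |x i - ((j i : ℝ) + (if b then 1 else 0)) / m i| ^ p)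
  -- coordinatewise bound
  have hcoordbd : ∀ i : Fin n,
      w i false * |x i - ((j i : ℝ) + (if (false : Bool) then 1 else 0)) / m i| ^ p
        + w i true * |x i - ((j i : ℝ) + (if (true : Bool) then 1 else 0)) / m i| ^ p
        ≤ (1 / (2 * (m i : ℝ))) ^ p := by
    intro i
    have hm0 := hmR i
    set h : ℝ := 1 / (m i : ℝ) with hhdef
    have hh0 : 0 < h := by positivity
    set t : ℝ := x i - (j i : ℝ) / m i with htdef
    have hsplit : ((j i : ℝ) + 1) / m i = (j i : ℝ) / m i + h := by
      rw [hhdef]; field_simp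
    have ht0 : 0 ≤ t := by
      have := (hxblock i).1
      rw [htdef]; linarith
    have hth : t ≤ h := by
      have := (hxblock i).2
      rw [htdef]; rw [hsplit] at this; linarith
    have a1 : |x i - ((j i : ℝ) + (if (false : Bool) then 1 else 0)) / m i| = t := by
      rw [show ((j i : ℝ) + (if (false : Bool) then 1 else 0)) / m i = (j i : ℝ) / m i from
          by norm_num,
        show x i - (j i : ℝ) / m i = t from htdef.symm]
      exact abs_of_nonneg ht0
    have a2 : |x i - ((j i : ℝ) + (if (true : Bool) then 1 else 0)) / m i| = h - t := by
      rw [show ((j i : ℝ) + (if (true : Bool) then 1 else 0)) / m i = ((j i : ℝ) + 1) / m i from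
          by norm_num,
        hsplit, show x i - ((j i : ℝ) / m i + h) = t - h from by rw [htdef]; ring,
        abs_of_nonpos (by linarith)]
      ring
    have wv1 : w i false = (h - t) / h := by
      rw [hwf i, hsplit, show (j i : ℝ) / m i + h - x i = h - t from by rw [htdef]; ring]
      rw [hhdef]
      field_simp
    have wv2 : w i true = t / h := by
      rw [hwt i, hsplit, show (j i : ℝ) / m i + h - x i = h - t from by rw [htdef]; ring]
      rw [hhdef]
      field_simp
      ring
    rw [a1, a2, wv1, wv2, show (1 / (2 * (m i : ℝ))) = h / 2 from by rw [hhdef]; ring]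
    exact coord_bound hp1 hp3 hh0 ht0 hth
  -- the key estimate
  have hlu0 : 0 ≤ ∑ l : Fin n → Bool, lam l * u l :=
    Finset.sum_nonneg fun l _ => mul_nonneg (hlam0 l) (hu0 l)
  have hkey : (∑ l : Fin n → Bool, lam l * u l) ^ (1 / p) ≤ B := by
    have hsum2 : ∑ l : Fin n → Bool, lam l * u l ≤ ∑ i, (1 / (2 * (m i : ℝ))) ^ p := by
      rw [hfact]
      exact Finset.sum_le_sum fun i _ => hcoordbd i
    calc (∑ l : Fin n → Bool, lam l * u l) ^ (1 / p)
        ≤ (∑ i, (1 / (2 * (m i : ℝ))) ^ p) ^ (1 / p) :=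
          Real.rpow_le_rpow hlu0 hsum2 (by positivity)
      _ = B := by
          rw [hBdef]
          have e1 : ∀ i : Fin n, (1 / (2 * (m i : ℝ))) ^ p = (1 / 2 : ℝ) ^ p * (m i : ℝ) ^ (-p) := by
            intro i
            rw [Real.rpow_neg (Nat.cast_nonneg _), ← Real.inv_rpow (Nat.cast_nonneg _),
              ← Real.mul_rpow (by norm_num) (by positivity)]
            congr 1
            field_simp
          rw [Finset.sum_congr rfl fun i _ => e1 i]
          rw [← Finset.mul_sum]
          rw [Real.mul_rpow (by positivity) (Finset.sum_nonneg fun i _ => by positivity)]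
          rw [← Real.rpow_mul (by norm_num : (0:ℝ) ≤ 1/2)]
          rw [mul_one_div_cancel hp0.ne', Real.rpow_one]
  have hld0 : 0 ≤ ∑ l : Fin n → Bool, lam l * d l :=
    Finset.sum_nonneg fun l _ => mul_nonneg (hlam0 l) (hd0 l)
  have hldB : ∑ l : Fin n → Bool, lam l * d l ≤ B := hjensen2.trans hkey
  have hB0 : 0 ≤ B := by rw [hBdef]; positivity
  have hBN : B ≤ N := by
    have hT : ∑ i, ((m i : ℝ)) ^ (-p) ≤ n := by
      calc ∑ i, ((m i : ℝ)) ^ (-p) ≤ ∑ _i : Fin n, (1:ℝ) := by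
            apply Finset.sum_le_sum
            intro i _
            apply Real.rpow_le_one_of_one_le_of_nonpos _ (by linarith)
            exact_mod_cast Nat.one_le_of_lt (hm i)
        _ = n := by simp
    have hT0 : 0 ≤ ∑ i, ((m i : ℝ)) ^ (-p) := Finset.sum_nonneg fun i _ => by positivity
    have h1 : (∑ i, ((m i : ℝ)) ^ (-p)) ^ (1 / p) ≤ N :=
      Real.rpow_le_rpow hT0 hT (by positivity)
    have h2 : 0 ≤ (∑ i, ((m i : ℝ)) ^ (-p)) ^ (1 / p) := Real.rpow_nonneg hT0 _
    rw [hBdef]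
    nlinarith
  calc |f x - S x| ≤ ∑ l : Fin n → Bool, lam l * Ω (d l) := habs
    _ ≤ Ω (∑ l : Fin n → Bool, lam l * d l) := hjensen
    _ ≤ Ω B := hΩmono _ ⟨hld0, hldB.trans hBN⟩ B ⟨hB0, hBN⟩ hldB

lemma Bval {n : ℕ} (p : ℝ) (hp0 : 0 < p) (m : Fin n → ℕ) (hm : ∀ i, 0 < m i) :
    (∑ i, (1 / (2 * (m i : ℝ))) ^ p) ^ (1 / p)
      = (1 / 2) * (∑ i, ((m i : ℝ)) ^ (-p)) ^ (1 / p) := by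
  have e1 : ∀ i : Fin n, (1 / (2 * (m i : ℝ))) ^ p = (1 / 2 : ℝ) ^ p * (m i : ℝ) ^ (-p) := by
    intro i
    have := hm i
    rw [Real.rpow_neg (Nat.cast_nonneg _), ← Real.inv_rpow (Nat.cast_nonneg _),
      ← Real.mul_rpow (by norm_num) (by positivity)]
    congr 1
    field_simp
  rw [Finset.sum_congr rfl fun i _ => e1 i]
  rw [← Finset.mul_sum]
  rw [Real.mul_rpow (by positivity) (Finset.sum_nonneg fun i _ => by positivity)]
  rw [← Real.rpow_mul (by norm_num : (0:ℝ) ≤ 1/2)]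
  rw [mul_one_div_cancel hp0.ne', Real.rpow_one]

/-- The coordinate profile of the extremal function. -/
noncomputable def phi (mi : ℕ) (y : ℝ) : ℝ := max 0 (min y (1 / mi - y))

lemma phi_nonneg (mi : ℕ) (y : ℝ) : 0 ≤ phi mi y := le_max_left _ _

lemma phi_le_half (mi : ℕ) (y : ℝ) : phi mi y ≤ 1 / (2 * mi) := by
  have hkey : (1 : ℝ) / mi - 1 / (2 * mi) = 1 / (2 * mi) := by
    rcases Nat.eq_zero_or_pos mi with h | h
    · simp [h]
    · have : (0:ℝ) < mi := by exact_mod_cast h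
      field_simp
      ring
  apply max_le (by positivity)
  rcases le_total y (1 / (2 * (mi:ℝ))) with hy | hy
  · exact le_trans (min_le_left _ _) hy
  · refine le_trans (min_le_right _ _) ?_
    linarith
  
lemma phi_lipschitz (mi : ℕ) (a b : ℝ) : |phi mi a - phi mi b| ≤ |a - b| := by
  refine le_trans (abs_max_sub_max_le_max _ _ _ _) ?_
  apply max_le (by simp [abs_nonneg])
  refine le_trans (abs_min_sub_min_le_max _ _ _ _) ?_
  apply max_le le_rfl
  rw [show (1:ℝ)/mi - a - ((1:ℝ)/mi - b) = b - a from by ring, abs_sub_comm]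

lemma phi_eq_zero {mi : ℕ} {y : ℝ} (h : y ≤ 0 ∨ 1 / (mi:ℝ) ≤ y) : phi mi y = 0 := by
  apply max_eq_left
  rcases h with h | h
  · exact le_trans (min_le_left _ _) h
  · refine le_trans (min_le_right _ _) (by linarith)

lemma phi_center {mi : ℕ} (hmi : 0 < mi) : phi mi (1 / (2 * mi)) = 1 / (2 * mi) := by
  have hm : (0:ℝ) < mi := by exact_mod_cast hmi
  have hkey : (1 : ℝ) / mi - 1 / (2 * mi) = 1 / (2 * mi) := by field_simp; ring
  rw [phi, hkey, min_self]
  exact max_eq_right (by positivity)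

lemma phi_continuous (mi : ℕ) : Continuous (phi mi) :=
  continuous_const.max (continuous_id.min (continuous_const.sub continuous_id))

set_option maxHeartbeats 1000000 in
theorem multilinear_class_error_lp (n : ℕ) (hn : 1 ≤ n) (p : ℝ) (hp1 : 1 ≤ p) (hp3 : p ≤ 3)
    (Ω : ℝ → ℝ) (m : Fin n → ℕ) (hm : ∀ i, 2 ≤ m i)
    -- Ω is a concave MC-type function on [0, n^(1/p)]
    (hΩconc : ConcaveOn ℝ (Icc 0 ((n : ℝ) ^ (1 / p))) Ω)
    (hΩ0 : Ω 0 = 0)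
    (hΩmono : ∀ σ ∈ Icc (0:ℝ) ((n : ℝ) ^ (1 / p)), ∀ τ ∈ Icc (0:ℝ) ((n : ℝ) ^ (1 / p)),
      σ ≤ τ → Ω σ ≤ Ω τ)
    (hΩsub : ∀ σ ∈ Icc (0:ℝ) ((n : ℝ) ^ (1 / p)), ∀ τ ∈ Icc (0:ℝ) ((n : ℝ) ^ (1 / p)),
      σ + τ ∈ Icc (0:ℝ) ((n : ℝ) ^ (1 / p)) → Ω (σ + τ) ≤ Ω σ + Ω τ)
    (hΩcont : ContinuousOn Ω (Icc 0 ((n : ℝ) ^ (1 / p)))) :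
    IsLUB {e : ℝ | ∃ f S : (Fin n → ℝ) → ℝ, ∃ x : Fin n → ℝ,
      (∀ i, x i ∈ Icc (0:ℝ) 1) ∧
      ContinuousOn f (univ.pi fun _ => Icc 0 1) ∧
      -- f belongs to the class C_{D,p}(Ω)
      (∀ γ ∈ Icc (0:ℝ) ((n : ℝ) ^ (1 / p)),
        ∀ y z : Fin n → ℝ, (∀ i, y i ∈ Icc (0:ℝ) 1) → (∀ i, z i ∈ Icc (0:ℝ) 1) →
        (∑ i, |y i - z i| ^ p) ^ (1 / p) ≤ γ → |f y - f z| ≤ Ω γ) ∧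
      -- S is the multilinear spline interpolating f at the grid points
      (∀ j : Fin n → ℕ, (∀ i, j i < m i) →
        ∀ y : Fin n → ℝ, (∀ i, y i ∈ Icc ((j i : ℝ) / m i) ((j i + 1 : ℝ) / m i)) →
        S y = ∑ l : Fin n → Bool,
          f (fun i => ((j i : ℝ) + (if l i then 1 else 0)) / m i) *
            ∏ i, hat (m i) (j i) (l i) (y i)) ∧
      e = |f x - S x|}
      (Ω ((1 / 2) * (∑ i, ((m i : ℝ)) ^ (-p)) ^ (1 / p))) := by
  have hp0 : (0:ℝ) < p := by linarith
  set N := (n : ℝ) ^ (1 / p) with hNdef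
  have hN0 : 0 ≤ N := by positivity
  set B := (1 / 2 : ℝ) * (∑ i, ((m i : ℝ)) ^ (-p)) ^ (1 / p) with hBdef
  have hmR : ∀ i, (0:ℝ) < m i := fun i => by
    have := hm i; exact_mod_cast Nat.lt_of_lt_of_le (by norm_num) this
  have hB0 : 0 ≤ B := by rw [hBdef]; positivity
  have hBN : B ≤ N := by
    have hT : ∑ i, ((m i : ℝ)) ^ (-p) ≤ n := by
      calc ∑ i, ((m i : ℝ)) ^ (-p) ≤ ∑ _i : Fin n, (1:ℝ) := by
            apply Finset.sum_le_sum
            intro i _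
            apply Real.rpow_le_one_of_one_le_of_nonpos _ (by linarith)
            exact_mod_cast Nat.one_le_of_lt (hm i)
        _ = n := by simp
    have hT0 : 0 ≤ ∑ i, ((m i : ℝ)) ^ (-p) := Finset.sum_nonneg fun i _ => by positivity
    have h1 : (∑ i, ((m i : ℝ)) ^ (-p)) ^ (1 / p) ≤ N :=
      Real.rpow_le_rpow hT0 hT (by positivity)
    have h2 : 0 ≤ (∑ i, ((m i : ℝ)) ^ (-p)) ^ (1 / p) := Real.rpow_nonneg hT0 _
    rw [hBdef]
    nlinarith
  have hΩB0 : 0 ≤ Ω B := by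
    have := hΩmono 0 ⟨le_rfl, hN0⟩ B ⟨hB0, hBN⟩ hB0
    rwa [hΩ0] at this
  constructor
  · rintro e ⟨f, S, x, hx, hcont, hclass, hS, rfl⟩
    exact upper_bound n p hp1 hp3 Ω m hm hΩconc hΩmono f S x hx hclass hS
  · intro b hb
    apply hb
    -- the extremal function
    set D : (Fin n → ℝ) → ℝ := fun y => (∑ i, (phi (m i) (y i)) ^ p) ^ (1 / p) with hDdef
    set F : (Fin n → ℝ) → ℝ := fun y => Ω (D y) with hFdef
    have hD0 : ∀ y, 0 ≤ D y := fun y =>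
      Real.rpow_nonneg (Finset.sum_nonneg fun i _ => Real.rpow_nonneg (phi_nonneg _ _) _) _
    have hDB : ∀ y, D y ≤ B := by
      intro y
      calc D y ≤ (∑ i, (1 / (2 * (m i : ℝ))) ^ p) ^ (1 / p) := by
            apply Real.rpow_le_rpow
              (Finset.sum_nonneg fun i _ => Real.rpow_nonneg (phi_nonneg _ _) _)
              _ (by positivity)
            exact Finset.sum_le_sum fun i _ =>
              Real.rpow_le_rpow (phi_nonneg _ _) (phi_le_half _ _) hp0.le
        _ = B := Bval p hp0 m (fun i => by have := hm i; omega)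
    have hDN : ∀ y, D y ≤ N := fun y => (hDB y).trans hBN
    have hDlip : ∀ y z : Fin n → ℝ, D y ≤ D z + (∑ i, |y i - z i| ^ p) ^ (1 / p) := by
      intro y z
      calc D y ≤ (∑ i, (phi (m i) (z i) + |y i - z i|) ^ p) ^ (1 / p) := by
            apply Real.rpow_le_rpow
              (Finset.sum_nonneg fun i _ => Real.rpow_nonneg (phi_nonneg _ _) _)
              _ (by positivity)
            apply Finset.sum_le_sum
            intro i _
            apply Real.rpow_le_rpow (phi_nonneg _ _) _ hp0.le
            have := phi_lipschitz (m i) (y i) (z i)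
            have h2 := le_abs_self (phi (m i) (y i) - phi (m i) (z i))
            linarith [abs_le.mp this]
        _ ≤ (∑ i, (phi (m i) (z i)) ^ p) ^ (1 / p) + (∑ i, |y i - z i| ^ p) ^ (1 / p) :=
            Real.Lp_add_le_of_nonneg (s := Finset.univ) hp1
              (fun i _ => phi_nonneg _ _) (fun i _ => abs_nonneg _)
    have hΩD0 : ∀ y, 0 ≤ Ω (D y) := by
      intro y
      have := hΩmono 0 ⟨le_rfl, hN0⟩ (D y) ⟨hD0 y, hDN y⟩ (hD0 y)
      rwa [hΩ0] at this
    -- grid values vanish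
    have hgrid : ∀ (j : Fin n → ℕ) (l : Fin n → Bool),
        F (fun i => ((j i : ℝ) + (if l i then 1 else 0)) / m i) = 0 := by
      intro j l
      have hz : ∀ i, phi (m i) (((j i : ℝ) + (if l i then 1 else 0)) / m i) = 0 := by
        intro i
        have hm0 := hmR i
        by_cases hli : l i
        · apply phi_eq_zero
          right
          rw [div_le_div_iff₀ hm0 hm0, hli]
          simp
          nlinarith [(Nat.cast_nonneg (j i) : (0:ℝ) ≤ (j i : ℝ)), hm0]
        · by_cases hji : j i = 0
          · apply phi_eq_zero
            left
            simp [hji, hli]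
          · apply phi_eq_zero
            right
            rw [div_le_div_iff₀ hm0 hm0]
            have : (1:ℝ) ≤ (j i : ℝ) := by exact_mod_cast Nat.one_le_iff_ne_zero.mpr hji
            simp [hli]
            nlinarith
      rw [hFdef]
      simp only
      rw [hDdef]
      simp only
      rw [Finset.sum_congr rfl fun i _ => by
        rw [hz i, Real.zero_rpow hp0.ne']]
      rw [Finset.sum_const, smul_zero, Real.zero_rpow (by positivity : (1:ℝ)/p ≠ 0), hΩ0]
    -- the center point
    refine ⟨F, fun _ => 0, fun i => 1 / (2 * (m i : ℝ)), ?_, ?_, ?_, ?_, ?_⟩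
    · intro i
      have hm0 := hmR i
      constructor
      · positivity
      · rw [div_le_one (by positivity)]
        have h2 : (2:ℝ) ≤ m i := by exact_mod_cast hm i
        linarith
    · -- continuity
      have hDcont : Continuous D := by
        apply Continuous.rpow_const
        · exact continuous_finset_sum _ fun i _ =>
            ((phi_continuous (m i)).comp (continuous_apply i)).rpow_const
              (fun x => Or.inr hp0.le)
        · exact fun x => Or.inr (by positivity)
      exact hΩcont.comp hDcont.continuousOn (fun y _ => ⟨hD0 y, hDN y⟩)
    · -- class membership
      intro γ hγ y z hy hz hle
      have hΩγ0 : 0 ≤ Ω γ := by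
        have := hΩmono 0 ⟨le_rfl, hN0⟩ γ hγ hγ.1
        rwa [hΩ0] at this
      have key : ∀ y z : Fin n → ℝ, (∑ i, |y i - z i| ^ p) ^ (1 / p) ≤ γ → D z ≤ D y →
          Ω (D y) - Ω (D z) ≤ Ω γ := by
        intro y z hle hzy
        have h1 : D y - D z ≤ γ := by have := hDlip y z; linarith
        have h2 : D y - D z ∈ Icc (0:ℝ) N := ⟨by linarith, by linarith [hDN y, hD0 z]⟩
        have h3 := hΩsub (D y - D z) h2 (D z) ⟨hD0 z, hDN z⟩
          (by rw [sub_add_cancel]; exact ⟨hD0 y, hDN y⟩)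
        rw [sub_add_cancel] at h3
        have h4 := hΩmono (D y - D z) h2 γ hγ h1
        linarith
      have hsym : (∑ i, |z i - y i| ^ p) ^ (1 / p) = (∑ i, |y i - z i| ^ p) ^ (1 / p) := by
        congr 1
        exact Finset.sum_congr rfl fun i _ => by rw [abs_sub_comm]
      rcases le_total (D z) (D y) with hc | hc
      · have mono := hΩmono (D z) ⟨hD0 z, hDN z⟩ (D y) ⟨hD0 y, hDN y⟩ hc
        rw [hFdef]
        simp only
        rw [abs_of_nonneg (by linarith)]
        exact key y z hle hc
      · have mono := hΩmono (D y) ⟨hD0 y, hDN y⟩ (D z) ⟨hD0 z, hDN z⟩ hc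
        rw [hFdef]
        simp only
        rw [abs_of_nonpos (by linarith), neg_sub]
        exact key z y (by rw [hsym]; exact hle) hc
    · -- interpolation of the zero spline
      intro j hj y hy
      symm
      apply Finset.sum_eq_zero
      intro l _
      rw [hgrid j l, zero_mul]
    · -- the value at the center
      have hcenter : D (fun i => 1 / (2 * (m i : ℝ))) = B := by
        rw [hDdef]
        simp only
        rw [Finset.sum_congr rfl fun i _ => by
          rw [phi_center (by have := hm i; omega : 0 < m i)]]
        exact Bval p hp0 m (fun i => by have := hm i; omega)
      rw [hFdef]
      simp only
      rw [hcenter, sub_zero, abs_of_nonneg hΩB0]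
end

section
/- Let f : [0,1]² → ℝ be continuously differentiable in x₁ (i.e., ∂f/∂x₁ continuous), let Ω : [0,1]² → ℝ be an MC-type function concave in the second variable, and suppose ω(∂f/∂x₁; τ) ≤ Ω(τ). Let S be the bilinear spline interpolating f on the uniform m₁×m₂ grid with m₁,m₂ ≥ 2. Then for all x in the interior of each grid block, |∂f/∂x₁(x) − ∂S/∂x₁(x)| ≤ m₁ ∫₀^{1/m₁} Ω(γ, 1/(2m₂)) dγ. -/
open Set intervalIntegral

lemma hat_hasDerivAt (m j : ℕ) (l : Bool) (x : ℝ) :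
    HasDerivAt (hat m j l) (if l then (m:ℝ) else -(m:ℝ)) x := by
  unfold hat
  cases l
  · simpa using ((hasDerivAt_id x).const_sub ((j + 1 : ℝ) / m)).const_mul (m:ℝ)
  · simpa using (((hasDerivAt_id x).const_sub ((j + 1 : ℝ) / m)).const_mul (m:ℝ)).const_sub 1

set_option maxHeartbeats 1600000 in
theorem bivariate_derivative_error (f g S Sd : ℝ → ℝ → ℝ) (Ω : ℝ → ℝ → ℝ)
    (m₁ m₂ : ℕ) (hm₁ : 2 ≤ m₁) (hm₂ : 2 ≤ m₂)
    -- g = ∂f/∂x₁ exists and is continuous on [0,1]²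
    (hderiv : ∀ x₁ ∈ Icc (0:ℝ) 1, ∀ x₂ ∈ Icc (0:ℝ) 1,
      HasDerivWithinAt (fun t => f t x₂) (g x₁ x₂) (Icc 0 1) x₁)
    (hgcont : ContinuousOn (fun q : ℝ × ℝ => g q.1 q.2) (Icc 0 1 ×ˢ Icc 0 1))
    -- Ω is an MC-type function on [0,1]², concave in the second variable
    (hΩ0 : Ω 0 0 = 0)
    (hΩmono : ∀ σ₁ ∈ Icc (0:ℝ) 1, ∀ σ₂ ∈ Icc (0:ℝ) 1, ∀ τ₁ ∈ Icc (0:ℝ) 1, ∀ τ₂ ∈ Icc (0:ℝ) 1,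
      σ₁ ≤ τ₁ → σ₂ ≤ τ₂ → Ω σ₁ σ₂ ≤ Ω τ₁ τ₂)
    (hΩsub : ∀ σ₁ σ₂ τ₁ τ₂ : ℝ, σ₁ ∈ Icc (0:ℝ) 1 → σ₂ ∈ Icc (0:ℝ) 1 →
      τ₁ ∈ Icc (0:ℝ) 1 → τ₂ ∈ Icc (0:ℝ) 1 → σ₁ + τ₁ ∈ Icc (0:ℝ) 1 → σ₂ + τ₂ ∈ Icc (0:ℝ) 1 →
      Ω (σ₁ + τ₁) (σ₂ + τ₂) ≤ Ω σ₁ σ₂ + Ω τ₁ τ₂)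
    (hΩcont : ContinuousOn (fun q : ℝ × ℝ => Ω q.1 q.2) (Icc 0 1 ×ˢ Icc 0 1))
    (hΩconc : ∀ τ₁ ∈ Icc (0:ℝ) 1, ConcaveOn ℝ (Icc 0 1) (fun t => Ω τ₁ t))
    -- the total modulus of continuity of ∂f/∂x₁ is bounded by Ω
    (hmod : ∀ τ₁ ∈ Icc (0:ℝ) 1, ∀ τ₂ ∈ Icc (0:ℝ) 1,
      ∀ x₁ ∈ Icc (0:ℝ) 1, ∀ x₂ ∈ Icc (0:ℝ) 1, ∀ y₁ ∈ Icc (0:ℝ) 1, ∀ y₂ ∈ Icc (0:ℝ) 1,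
      |x₁ - y₁| ≤ τ₁ → |x₂ - y₂| ≤ τ₂ → |g x₁ x₂ - g y₁ y₂| ≤ Ω τ₁ τ₂)
    -- S is the bilinear spline interpolating f on the uniform m₁ × m₂ grid
    (hS : ∀ j₁ < m₁, ∀ j₂ < m₂,
      ∀ x₁ ∈ Icc ((j₁ : ℝ) / m₁) ((j₁ + 1 : ℝ) / m₁),
      ∀ x₂ ∈ Icc ((j₂ : ℝ) / m₂) ((j₂ + 1 : ℝ) / m₂),
      S x₁ x₂ = ∑ l : Bool × Bool,
        f (((j₁ : ℝ) + (if l.1 then 1 else 0)) / m₁)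
          (((j₂ : ℝ) + (if l.2 then 1 else 0)) / m₂) *
        (hat m₁ j₁ l.1 x₁ * hat m₂ j₂ l.2 x₂))
    -- Sd = ∂S/∂x₁ on the interior of each block
    (hSd : ∀ j₁ < m₁, ∀ j₂ < m₂,
      ∀ x₁ ∈ Ioo ((j₁ : ℝ) / m₁) ((j₁ + 1 : ℝ) / m₁),
      ∀ x₂ ∈ Ioo ((j₂ : ℝ) / m₂) ((j₂ + 1 : ℝ) / m₂),
      HasDerivAt (fun t => S t x₂) (Sd x₁ x₂) x₁) :
    ∀ j₁ < m₁, ∀ j₂ < m₂,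
      ∀ x₁ ∈ Ioo ((j₁ : ℝ) / m₁) ((j₁ + 1 : ℝ) / m₁),
      ∀ x₂ ∈ Ioo ((j₂ : ℝ) / m₂) ((j₂ + 1 : ℝ) / m₂),
      |g x₁ x₂ - Sd x₁ x₂| ≤ m₁ * ∫ γ in (0:ℝ)..(1 / m₁), Ω γ (1 / (2 * m₂)) := by
  intro j₁ hj₁ j₂ hj₂ x₁ hx₁ x₂ hx₂
  have hm₁0 : (0:ℝ) < m₁ := by
    have : 0 < m₁ := by omega
    exact_mod_cast this
  have hm₂0 : (0:ℝ) < m₂ := by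
    have : 0 < m₂ := by omega
    exact_mod_cast this
  have hm₁2 : (2:ℝ) ≤ m₁ := by exact_mod_cast hm₁
  have hm₂2 : (2:ℝ) ≤ m₂ := by exact_mod_cast hm₂
  set a : ℝ := (j₁ : ℝ) / m₁ with ha_def
  set b : ℝ := ((j₁ : ℝ) + 1) / m₁ with hb_def
  set a₂ : ℝ := (j₂ : ℝ) / m₂ with ha₂_def
  set b₂ : ℝ := ((j₂ : ℝ) + 1) / m₂ with hb₂_def
  have hba : b - a = 1 / m₁ := by rw [ha_def, hb_def]; field_simp; ring
  have hb₂a₂ : b₂ - a₂ = 1 / m₂ := by rw [ha₂_def, hb₂_def]; field_simp; ring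
  have hab : a < b := by
    have : (0:ℝ) < 1 / m₁ := by positivity
    linarith
  have ha0 : (0:ℝ) ≤ a := by positivity
  have hb1 : b ≤ 1 := by
    rw [hb_def, div_le_one hm₁0]
    exact_mod_cast hj₁
  have ha₂0 : (0:ℝ) ≤ a₂ := by positivity
  have hb₂1 : b₂ ≤ 1 := by
    rw [hb₂_def, div_le_one hm₂0]
    exact_mod_cast hj₂
  have hsub : Icc a b ⊆ Icc (0:ℝ) 1 := Icc_subset_Icc ha0 hb1
  have hx₁I : x₁ ∈ Icc (0:ℝ) 1 := hsub (Ioo_subset_Icc_self hx₁)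
  have hx₂I : x₂ ∈ Icc (0:ℝ) 1 := ⟨le_trans ha₂0 (le_of_lt hx₂.1), le_trans (le_of_lt hx₂.2) hb₂1⟩
  have ha₂I : a₂ ∈ Icc (0:ℝ) 1 := ⟨ha₂0, by linarith [hx₂I.2, hx₂.1]⟩
  have hb₂I : b₂ ∈ Icc (0:ℝ) 1 := ⟨by linarith [hx₂I.1, hx₂.2], hb₂1⟩
  -- hat values at x₂
  set h₀ : ℝ := hat m₂ j₂ false x₂ with hh₀_def
  set h₁ : ℝ := hat m₂ j₂ true x₂ with hh₁_def
  have hh₀ : h₀ = m₂ * (b₂ - x₂) := by simp [hh₀_def, hat, hb₂_def]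
  have hh₁ : h₁ = 1 - m₂ * (b₂ - x₂) := by simp [hh₁_def, hat, hb₂_def]
  have hh₁' : h₁ = m₂ * (x₂ - a₂) := by
    rw [hh₁, hb₂_def, ha₂_def]; field_simp; ring
  have hsum01 : h₀ + h₁ = 1 := by rw [hh₀, hh₁]; ring
  have hh₀0 : 0 ≤ h₀ := by rw [hh₀]; nlinarith [hx₂.2]
  have hh₁0 : 0 ≤ h₁ := by rw [hh₁']; nlinarith [hx₂.1]
  -- the value of the derivative of the spline
  set D : ℝ := (m₁ : ℝ) * (h₀ * (f b a₂ - f a a₂) + h₁ * (f b b₂ - f a b₂)) with hD_def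
  have hSd_eq : Sd x₁ x₂ = D := by
    have hsumderiv : HasDerivAt (fun t => ∑ l : Bool × Bool,
        f (((j₁ : ℝ) + (if l.1 then 1 else 0)) / m₁)
          (((j₂ : ℝ) + (if l.2 then 1 else 0)) / m₂) *
        (hat m₁ j₁ l.1 t * hat m₂ j₂ l.2 x₂))
        (∑ l : Bool × Bool,
        f (((j₁ : ℝ) + (if l.1 then 1 else 0)) / m₁)
          (((j₂ : ℝ) + (if l.2 then 1 else 0)) / m₂) *
        ((if l.1 then (m₁:ℝ) else -(m₁:ℝ)) * hat m₂ j₂ l.2 x₂)) x₁ := by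
      apply HasDerivAt.fun_sum
      intro l _
      exact ((hat_hasDerivAt m₁ j₁ l.1 x₁).mul_const (hat m₂ j₂ l.2 x₂)).const_mul _
    have hDeq : (∑ l : Bool × Bool,
        f (((j₁ : ℝ) + (if l.1 then 1 else 0)) / m₁)
          (((j₂ : ℝ) + (if l.2 then 1 else 0)) / m₂) *
        ((if l.1 then (m₁:ℝ) else -(m₁:ℝ)) * hat m₂ j₂ l.2 x₂)) = D := by
      rw [hD_def, hb_def, ha_def, hb₂_def, ha₂_def]
      simp only [Fintype.sum_prod_type, Fintype.sum_bool, if_true, if_false, ← hh₀_def, ← hh₁_def]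
      push_cast
      ring
    rw [← hDeq]
    have hev : (fun t => S t x₂) =ᶠ[nhds x₁] (fun t => ∑ l : Bool × Bool,
        f (((j₁ : ℝ) + (if l.1 then 1 else 0)) / m₁)
          (((j₂ : ℝ) + (if l.2 then 1 else 0)) / m₂) *
        (hat m₁ j₁ l.1 t * hat m₂ j₂ l.2 x₂)) := by
      filter_upwards [Ioo_mem_nhds hx₁.1 hx₁.2] with t ht
      exact hS j₁ hj₁ j₂ hj₂ t (Ioo_subset_Icc_self ht) x₂ (Ioo_subset_Icc_self hx₂)
    exact (hSd j₁ hj₁ j₂ hj₂ x₁ hx₁ x₂ hx₂).unique (hsumderiv.congr_of_eventuallyEq hev)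
  -- continuity of slices of g
  have hgy : ∀ y ∈ Icc (0:ℝ) 1, ContinuousOn (fun t => g t y) (Icc (0:ℝ) 1) := by
    intro y hy
    have : ContinuousOn ((fun q : ℝ × ℝ => g q.1 q.2) ∘ (fun t => (t, y))) (Icc (0:ℝ) 1) :=
      hgcont.comp (Continuous.continuousOn (continuous_id.prodMk continuous_const)) (fun t ht => ⟨ht, hy⟩)
    exact this
  have hgyint : ∀ y ∈ Icc (0:ℝ) 1, IntervalIntegrable (fun t => g t y) MeasureTheory.volume a b := by
    intro y hy
    apply ContinuousOn.intervalIntegrable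
    rw [uIcc_of_le hab.le]
    exact (hgy y hy).mono hsub
  -- FTC on [a,b]
  have hFTC : ∀ y ∈ Icc (0:ℝ) 1, (∫ t in a..b, g t y) = f b y - f a y := by
    intro y hy
    apply integral_eq_sub_of_hasDeriv_right_of_le (f := fun t => f t y) (f' := fun t => g t y) hab.le
    · intro t ht
      exact ((hderiv t (hsub ht) y hy).continuousWithinAt).mono hsub
    · intro t ht
      have htI : Icc (0:ℝ) 1 ∈ nhds t :=
        Icc_mem_nhds (lt_of_le_of_lt ha0 ht.1) (lt_of_lt_of_le ht.2 hb1)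
      exact ((hderiv t (hsub (Ioo_subset_Icc_self ht)) y hy).hasDerivAt htI).hasDerivWithinAt
    · exact hgyint y hy
  -- the error as an integral
  set φ : ℝ → ℝ := fun t => g x₁ x₂ - (h₀ * g t a₂ + h₁ * g t b₂) with hφ_def
  have hφcont : ContinuousOn φ (Icc (0:ℝ) 1) := by
    apply ContinuousOn.sub continuousOn_const
    exact ((hgy a₂ ha₂I).const_smul h₀).add ((hgy b₂ hb₂I).const_smul h₁)
  have hφint : IntervalIntegrable φ MeasureTheory.volume a b := by
    apply ContinuousOn.intervalIntegrable
    rw [uIcc_of_le hab.le]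
    exact hφcont.mono hsub
  have hkey : g x₁ x₂ - Sd x₁ x₂ = m₁ * ∫ t in a..b, φ t := by
    have h1 : (∫ t in a..b, φ t)
        = (∫ _t in a..b, g x₁ x₂) - (h₀ * (∫ t in a..b, g t a₂) + h₁ * (∫ t in a..b, g t b₂)) := by
      rw [hφ_def]
      rw [intervalIntegral.integral_sub intervalIntegrable_const
        (((hgyint a₂ ha₂I).const_mul h₀).add ((hgyint b₂ hb₂I).const_mul h₁))]
      rw [intervalIntegral.integral_add ((hgyint a₂ ha₂I).const_mul h₀)
        ((hgyint b₂ hb₂I).const_mul h₁)]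
      rw [intervalIntegral.integral_const_mul, intervalIntegral.integral_const_mul]
    rw [hSd_eq, hD_def, h1, hFTC a₂ ha₂I, hFTC b₂ hb₂I, intervalIntegral.integral_const,
      smul_eq_mul, hba]
    field_simp
  -- the constant c = 1/(2 m₂)
  set c : ℝ := 1 / (2 * (m₂:ℝ)) with hc_def
  have hcI : c ∈ Icc (0:ℝ) 1 := by
    constructor
    · positivity
    · rw [hc_def, div_le_one (by positivity)]; nlinarith
  have hΩc : ContinuousOn (fun u => Ω u c) (Icc (0:ℝ) 1) := by
    have : ContinuousOn ((fun q : ℝ × ℝ => Ω q.1 q.2) ∘ (fun u => (u, c))) (Icc (0:ℝ) 1) :=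
      hΩcont.comp (Continuous.continuousOn (continuous_id.prodMk continuous_const))
        (fun u hu => ⟨hu, hcI⟩)
    exact this
  have hL1 : (1:ℝ)/m₁ ≤ 1 := by rw [div_le_one hm₁0]; linarith
  have hΩcint : ∀ p q : ℝ, p ∈ Icc (0:ℝ) 1 → q ∈ Icc (0:ℝ) 1 →
      IntervalIntegrable (fun u => Ω u c) MeasureTheory.volume p q := fun p q hp hq =>
    (hΩc.mono (uIcc_subset_Icc hp hq)).intervalIntegrable
  -- pointwise bound |φ t| ≤ Ω |x₁ - t| c
  have hs₀I : x₂ - a₂ ∈ Icc (0:ℝ) 1 := ⟨by linarith [hx₂.1], by linarith [hx₂I.2]⟩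
  have hs₁I : b₂ - x₂ ∈ Icc (0:ℝ) 1 := ⟨by linarith [hx₂.2], by linarith [hx₂I.1, hb₂1]⟩
  have hpoint : ∀ t ∈ Icc a b, |φ t| ≤ Ω |x₁ - t| c := by
    intro t ht
    have htI := hsub ht
    have hτI : |x₁ - t| ∈ Icc (0:ℝ) 1 :=
      ⟨abs_nonneg _, abs_le.mpr ⟨by linarith [hx₁I.1, htI.2], by linarith [hx₁I.2, htI.1]⟩⟩
    have hB0 : |g x₁ x₂ - g t a₂| ≤ Ω |x₁ - t| (x₂ - a₂) :=
      hmod _ hτI _ hs₀I x₁ hx₁I x₂ hx₂I t htI a₂ ha₂I le_rfl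
        (le_of_eq (abs_of_nonneg (by linarith [hx₂.1])))
    have hB1 : |g x₁ x₂ - g t b₂| ≤ Ω |x₁ - t| (b₂ - x₂) :=
      hmod _ hτI _ hs₁I x₁ hx₁I x₂ hx₂I t htI b₂ hb₂I le_rfl
        (le_of_eq (by rw [abs_sub_comm]; exact abs_of_nonneg (by linarith [hx₂.2])))
    have hφt : φ t = h₀ * (g x₁ x₂ - g t a₂) + h₁ * (g x₁ x₂ - g t b₂) := by
      simp only [hφ_def]
      linear_combination (g x₁ x₂) * hsum01.symm
    calc |φ t| ≤ h₀ * |g x₁ x₂ - g t a₂| + h₁ * |g x₁ x₂ - g t b₂| := by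
          rw [hφt]
          refine (abs_add_le _ _).trans ?_
          rw [abs_mul, abs_mul, abs_of_nonneg hh₀0, abs_of_nonneg hh₁0]
      _ ≤ h₀ * Ω |x₁ - t| (x₂ - a₂) + h₁ * Ω |x₁ - t| (b₂ - x₂) := by
          gcongr
      _ ≤ Ω |x₁ - t| (h₀ * (x₂ - a₂) + h₁ * (b₂ - x₂)) := by
          have := (hΩconc _ hτI).2 hs₀I hs₁I hh₀0 hh₁0 hsum01
          simpa [smul_eq_mul] using this
      _ ≤ Ω |x₁ - t| c := by
          have hms : (m₂:ℝ) * ((x₂ - a₂) + (b₂ - x₂)) = 1 := by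
            have h' : (x₂ - a₂) + (b₂ - x₂) = b₂ - a₂ := by ring
            rw [h', hb₂a₂]; field_simp
          have hc2 : c * (2 * m₂) = 1 := by rw [hc_def]; field_simp
          have hAM : h₀ * (x₂ - a₂) + h₁ * (b₂ - x₂) ≤ c := by
            rw [hh₀, hh₁']
            nlinarith [sq_nonneg ((m₂:ℝ) * (x₂ - a₂) - (m₂:ℝ) * (b₂ - x₂)), hm₂0, hms, hc2]
          have h0le : 0 ≤ h₀ * (x₂ - a₂) + h₁ * (b₂ - x₂) :=
            add_nonneg (mul_nonneg hh₀0 hs₀I.1) (mul_nonneg hh₁0 hs₁I.1)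
          exact hΩmono _ hτI _ ⟨h0le, le_trans hAM hcI.2⟩ _ hτI c hcI le_rfl hAM
  -- integrability of t ↦ Ω |x₁ - t| c
  have hΩabsint : ∀ p q : ℝ, p ∈ Icc a b → q ∈ Icc a b →
      IntervalIntegrable (fun t => Ω |x₁ - t| c) MeasureTheory.volume p q := by
    intro p q hp hq
    apply ContinuousOn.intervalIntegrable
    have : ContinuousOn ((fun u => Ω u c) ∘ (fun t => |x₁ - t|)) (uIcc p q) := by
      apply hΩc.comp ((continuous_const.sub continuous_id).abs.continuousOn)
      intro t ht
      have htI := hsub (uIcc_subset_Icc hp hq ht)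
      show |x₁ - t| ∈ Icc (0:ℝ) 1
      exact ⟨abs_nonneg _, abs_le.mpr ⟨by linarith [hx₁I.1, htI.2], by linarith [hx₁I.2, htI.1]⟩⟩
    exact this
  have habs : |∫ t in a..b, φ t| ≤ ∫ t in a..b, Ω |x₁ - t| c := by
    refine (intervalIntegral.abs_integral_le_integral_abs hab.le).trans ?_
    exact intervalIntegral.integral_mono_on hab.le hφint.abs
      (hΩabsint a b (left_mem_Icc.mpr hab.le) (right_mem_Icc.mpr hab.le)) hpoint
  -- splitting the integral at x₁
  have hx₁a : x₁ - a ∈ Icc (0:ℝ) 1 := ⟨by linarith [hx₁.1], by linarith [hx₁I.2, ha0]⟩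
  have hbx₁ : (0:ℝ) ≤ b - x₁ := by linarith [hx₂.2, hx₁.2]
  have hsplit : (∫ t in a..b, Ω |x₁ - t| c)
      = (∫ u in (0:ℝ)..(x₁ - a), Ω u c) + ∫ u in (0:ℝ)..(b - x₁), Ω u c := by
    rw [← intervalIntegral.integral_add_adjacent_intervals
      (hΩabsint a x₁ (left_mem_Icc.mpr hab.le) (Ioo_subset_Icc_self hx₁))
      (hΩabsint x₁ b (Ioo_subset_Icc_self hx₁) (right_mem_Icc.mpr hab.le))]
    have e1 : (∫ t in a..x₁, Ω |x₁ - t| c) = ∫ t in a..x₁, Ω (x₁ - t) c := by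
      apply intervalIntegral.integral_congr
      intro t ht
      rw [uIcc_of_le hx₁.1.le] at ht
      show Ω |x₁ - t| c = Ω (x₁ - t) c
      rw [abs_of_nonneg (by linarith [ht.2] : (0:ℝ) ≤ x₁ - t)]
    have e2 : (∫ t in x₁..b, Ω |x₁ - t| c) = ∫ t in x₁..b, Ω (t - x₁) c := by
      apply intervalIntegral.integral_congr
      intro t ht
      rw [uIcc_of_le hx₁.2.le] at ht
      show Ω |x₁ - t| c = Ω (t - x₁) c
      rw [abs_sub_comm, abs_of_nonneg (by linarith [ht.1] : (0:ℝ) ≤ t - x₁)]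
    have e1' := intervalIntegral.integral_comp_sub_left (a := a) (b := x₁) (fun u => Ω u c) x₁
    rw [sub_self] at e1'
    have e2' := intervalIntegral.integral_comp_sub_right (a := x₁) (b := b) (fun u => Ω u c) x₁
    rw [sub_self] at e2'
    rw [e1, e2, e1', e2']
  -- shifting the second piece
  have hLI : (1:ℝ)/m₁ ∈ Icc (0:ℝ) 1 := ⟨by positivity, hL1⟩
  have hshiftint : IntervalIntegrable (fun u => Ω (u + (x₁ - a)) c) MeasureTheory.volume 0 (b - x₁) := by
    apply ContinuousOn.intervalIntegrable
    have : ContinuousOn ((fun u => Ω u c) ∘ (fun u => u + (x₁ - a))) (uIcc 0 (b - x₁)) := by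
      apply hΩc.comp ((continuous_id.add continuous_const).continuousOn)
      intro u hu
      rw [uIcc_of_le hbx₁] at hu
      show u + (x₁ - a) ∈ Icc (0:ℝ) 1
      constructor
      · linarith [hu.1, hx₁a.1]
      · linarith [hu.2, hba, hL1]
    exact this
  have hshift : (∫ u in (0:ℝ)..(b - x₁), Ω u c) ≤ ∫ u in (x₁ - a)..(1/m₁), Ω u c := by
    have e3 := intervalIntegral.integral_comp_add_right (a := 0) (b := b - x₁) (fun u => Ω u c) (x₁ - a)
    rw [zero_add] at e3
    have hbb : (b - x₁) + (x₁ - a) = 1 / (m₁:ℝ) := by linarith [hba]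
    rw [hbb] at e3
    rw [← e3]
    apply intervalIntegral.integral_mono_on hbx₁
      (hΩcint 0 (b - x₁) ⟨le_rfl, zero_le_one⟩ ⟨hbx₁, by linarith [hba, hL1, hx₁a.1]⟩)
      hshiftint
    intro u hu
    have huI : u ∈ Icc (0:ℝ) 1 := ⟨hu.1, by linarith [hu.2, hba, hL1, hx₁a.1]⟩
    have huI' : u + (x₁ - a) ∈ Icc (0:ℝ) 1 := ⟨by linarith [hu.1, hx₁a.1], by linarith [hu.2, hba, hL1]⟩
    exact hΩmono u huI c hcI _ huI' c hcI (by linarith [hx₁a.1]) le_rfl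
  have hfinal2 : (∫ u in (0:ℝ)..(x₁ - a), Ω u c) + (∫ u in (x₁ - a)..(1/(m₁:ℝ)), Ω u c)
      = ∫ u in (0:ℝ)..(1/(m₁:ℝ)), Ω u c :=
    intervalIntegral.integral_add_adjacent_intervals
      (hΩcint 0 (x₁ - a) ⟨le_rfl, zero_le_one⟩ hx₁a) (hΩcint (x₁ - a) (1/m₁) hx₁a hLI)
  calc |g x₁ x₂ - Sd x₁ x₂| = m₁ * |∫ t in a..b, φ t| := by
        rw [hkey, abs_mul, abs_of_pos hm₁0]
    _ ≤ m₁ * ∫ t in a..b, Ω |x₁ - t| c := mul_le_mul_of_nonneg_left habs hm₁0.le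
    _ = m₁ * ((∫ u in (0:ℝ)..(x₁ - a), Ω u c) + ∫ u in (0:ℝ)..(b - x₁), Ω u c) := by rw [hsplit]
    _ ≤ m₁ * ((∫ u in (0:ℝ)..(x₁ - a), Ω u c) + ∫ u in (x₁ - a)..(1/(m₁:ℝ)), Ω u c) := by
        have := hshift
        apply mul_le_mul_of_nonneg_left _ hm₁0.le
        linarith
    _ = m₁ * ∫ γ in (0:ℝ)..(1/(m₁:ℝ)), Ω γ c := by rw [hfinal2]
end
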